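/- arXiv:1502.00359 — 6 statements merged into one kernel-verified Lean document; each statement's English description precedes it below -/
import Mathlib

section
/- Let k ≥ 1 be an integer and let G be a finite simple graph of order n with n ≥ binomial(2k−1, k−1). Then λ_k(G) ≥ −1 and λ_{n−k+1}(G) ≤ 0. -/
open Matrix BigOperators

open Finset Module

local notation "⟪" x ", " y "⟫" => @inner ℝ _ _ x y

/-- The eigenvalues (with multiplicity) of a real symmetric matrix, listed in
nondecreasing order (the empty list if the matrix is not Hermitian). -/
noncomputable def eigAsc {n : ℕ} (A : Matrix (Fin n) (Fin n) ℝ) : List ℝ := by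
  classical
  exact if hA : A.IsHermitian then
    (Finset.univ.val.map hA.eigenvalues).sort (· ≤ ·)
  else []

/-- `eigval A k` is the `k`-th largest eigenvalue of `A` (1-indexed). -/
noncomputable def eigval {n : ℕ} (A : Matrix (Fin n) (Fin n) ℝ) (k : ℕ) : ℝ :=
  (eigAsc A).getD (n - k) 0

/-- The singular values (absolute values of eigenvalues, with multiplicity) of a
real symmetric matrix, listed in nondecreasing order. -/
noncomputable def singAsc {n : ℕ} (A : Matrix (Fin n) (Fin n) ℝ) : List ℝ := by
  classical
  exact if hA : A.IsHermitian then
    (Finset.univ.val.map (fun i => |hA.eigenvalues i|)).sort (· ≤ ·)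
  else []

/-- `singval A k` is the `k`-th largest singular value of `A` (1-indexed). -/
noncomputable def singval {n : ℕ} (A : Matrix (Fin n) (Fin n) ℝ) (k : ℕ) : ℝ :=
  (singAsc A).getD (n - k) 0

/-- `graphEig G k` is the `k`-th largest adjacency eigenvalue of `G` (1-indexed). -/
noncomputable def graphEig {n : ℕ} (G : SimpleGraph (Fin n)) (k : ℕ) : ℝ := by
  classical
  exact eigval (G.adjMatrix ℝ) k

/-- `graphSing G k` is the `k`-th largest singular value of `G` (1-indexed). -/
noncomputable def graphSing {n : ℕ} (G : SimpleGraph (Fin n)) (k : ℕ) : ℝ := by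
  classical
  exact singval (G.adjMatrix ℝ) k



open Finset

lemma mySingleton {V : Type} [DecidableEq V] (G : SimpleGraph V) (X : Finset V)
    (hX : 0 < X.card) :
    ∃ S : Finset V, S ⊆ X ∧ S.card = 1 ∧
      (∀ u ∈ S, ∀ v ∈ S, u ≠ v → ¬ G.Adj u v) ∧ (∀ u ∈ S, ∀ v ∈ S, u ≠ v → G.Adj u v) := by
  obtain ⟨v, hv⟩ := Finset.card_pos.mp hX
  refine ⟨{v}, by simpa using hv, by simp, ?_, ?_⟩ <;>
  · intro u hu w hw hne
    simp only [Finset.mem_singleton] at hu hw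
    exact absurd (hu.trans hw.symm) hne

lemma myRamsey : ∀ (N a b : ℕ) {V : Type} [DecidableEq V] (G : SimpleGraph V)
    [DecidableRel G.Adj] (X : Finset V), a + b ≤ N → Nat.choose (a + b) a ≤ X.card →
    (∃ S : Finset V, S ⊆ X ∧ S.card = a + 1 ∧ ∀ u ∈ S, ∀ v ∈ S, u ≠ v → ¬ G.Adj u v) ∨
    (∃ S : Finset V, S ⊆ X ∧ S.card = b + 1 ∧ ∀ u ∈ S, ∀ v ∈ S, u ≠ v → G.Adj u v) := by
  intro N
  induction N with
  | zero =>
    intro a b V _ G _ X hab hX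
    have ha : a = 0 := by omega
    have hb : b = 0 := by omega
    subst ha; subst hb
    have hX1 : 0 < X.card := lt_of_lt_of_le (Nat.choose_pos (by omega)) hX
    obtain ⟨S, h1, h2, h3, _⟩ := mySingleton G X hX1
    exact Or.inl ⟨S, h1, h2, h3⟩
  | succ N ih =>
    intro a b V _ G _ X hab hX
    have hX1 : 0 < X.card := lt_of_lt_of_le (Nat.choose_pos (by omega)) hX
    rcases Nat.eq_zero_or_pos a with ha | ha
    · subst ha
      obtain ⟨S, h1, h2, h3, _⟩ := mySingleton G X hX1
      exact Or.inl ⟨S, h1, h2, h3⟩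
    rcases Nat.eq_zero_or_pos b with hb | hb
    · subst hb
      obtain ⟨S, h1, h2, _, h4⟩ := mySingleton G X hX1
      exact Or.inr ⟨S, h1, h2, h4⟩
    obtain ⟨a', rfl⟩ : ∃ a', a = a' + 1 := ⟨a - 1, by omega⟩
    obtain ⟨b', rfl⟩ : ∃ b', b = b' + 1 := ⟨b - 1, by omega⟩
    obtain ⟨v, hv⟩ := Finset.card_pos.mp hX1
    set P := (X.erase v).filter (fun u => G.Adj v u) with hP
    set Q := (X.erase v).filter (fun u => ¬ G.Adj v u) with hQ
    have hPsub : P ⊆ X := (Finset.filter_subset _ _).trans (Finset.erase_subset _ _)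
    have hQsub : Q ⊆ X := (Finset.filter_subset _ _).trans (Finset.erase_subset _ _)
    have hPQ : P.card + Q.card = X.card - 1 := by
      rw [hP, hQ, Finset.card_filter_add_card_filter_not, Finset.card_erase_of_mem hv]
    have hpascal : Nat.choose (a' + 1 + (b' + 1)) (a' + 1)
        = Nat.choose (a' + (b' + 1)) a' + Nat.choose (a' + (b' + 1)) (a' + 1) := by
      have h : a' + 1 + (b' + 1) = (a' + (b' + 1)) + 1 := by omega
      rw [h, Nat.choose_succ_succ' (a' + (b' + 1)) a']
    rcases le_or_gt (Nat.choose (a' + (b' + 1)) a') Q.card with hQbig | hQsmall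
    · -- recurse in Q with (a', b'+1)
      rcases ih a' (b' + 1) G Q (by omega) hQbig with ⟨S, hS, hcard, hind⟩ | hcl
      · have hvS : v ∉ S := fun hmem =>
          (Finset.mem_erase.mp (Finset.filter_subset _ _ (hS hmem))).1 rfl
        refine Or.inl ⟨insert v S, ?_, ?_, ?_⟩
        · exact Finset.insert_subset hv (hS.trans hQsub)
        · rw [Finset.card_insert_of_notMem hvS, hcard]
        · intro u hu w hw hne
          have hu' := Finset.mem_insert.mp hu
          have hw' := Finset.mem_insert.mp hw
          rcases hu' with hu1 | hu1 <;> rcases hw' with hw1 | hw1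
          · exact absurd (hu1.trans hw1.symm) hne
          · subst hu1; exact (Finset.mem_filter.mp (hS hw1)).2
          · subst hw1; exact fun h => (Finset.mem_filter.mp (hS hu1)).2 h.symm
          · exact hind u hu1 w hw1 hne
      · obtain ⟨S, hS, hcard, hclq⟩ := hcl
        exact Or.inr ⟨S, hS.trans hQsub, hcard, hclq⟩
    · have hPbig : Nat.choose (a' + 1 + b') (a' + 1) ≤ P.card := by
        have h2 : Nat.choose (a' + 1 + b') (a' + 1) = Nat.choose (a' + (b' + 1)) (a' + 1) := by
          congr 1; omega
        omega
      rcases ih (a' + 1) b' G P (by omega) hPbig with hind | ⟨S, hS, hcard, hclq⟩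
      · obtain ⟨S, hS, hcard, hind⟩ := hind
        exact Or.inl ⟨S, hS.trans hPsub, hcard, hind⟩
      · have hvS : v ∉ S := fun hmem =>
          (Finset.mem_erase.mp (Finset.filter_subset _ _ (hS hmem))).1 rfl
        refine Or.inr ⟨insert v S, ?_, ?_, ?_⟩
        · exact Finset.insert_subset hv (hS.trans hPsub)
        · rw [Finset.card_insert_of_notMem hvS, hcard]
        · intro u hu w hw hne
          have hu' := Finset.mem_insert.mp hu
          have hw' := Finset.mem_insert.mp hw
          rcases hu' with hu1 | hu1 <;> rcases hw' with hw1 | hw1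
          · exact absurd (hu1.trans hw1.symm) hne
          · subst hu1; exact (Finset.mem_filter.mp (hS hw1)).2
          · subst hw1; exact ((Finset.mem_filter.mp (hS hu1)).2).symm
          · exact hclq u hu1 w hw1 hne


open Matrix Finset Module

variable {n : ℕ} {A : Matrix (Fin n) (Fin n) ℝ}


lemma myClashLow (hA : A.IsHermitian) (T : Finset (Fin n))
    (W : Submodule ℝ (EuclideanSpace ℝ (Fin n))) (c c' : ℝ) (hcc : c < c')
    (hT : ∀ j ∈ T, hA.eigenvalues j ≤ c)
    (hW : ∀ x ∈ W, c' * ‖x‖ ^ 2 ≤ ⟪x, (WithLp.toLp 2 (A *ᵥ x) : EuclideanSpace ℝ (Fin n))⟫)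
    (hdim : n < T.card + finrank ℝ W) : False := by
  classical
  set B := hA.eigenvectorBasis with hB
  set g := hA.eigenvalues with hg
  -- the span of eigenvectors indexed by T
  set U : Submodule ℝ (EuclideanSpace ℝ (Fin n)) :=
    Submodule.span ℝ (Set.range (fun j : T => (B j : EuclideanSpace ℝ (Fin n)))) with hU
  have hBorth : Orthonormal ℝ (fun j : T => (B j : EuclideanSpace ℝ (Fin n))) :=
    B.orthonormal.comp _ Subtype.val_injective
  have hli : LinearIndependent ℝ (fun j : T => (B j : EuclideanSpace ℝ (Fin n))) :=
    hBorth.linearIndependent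
  have hUrank : finrank ℝ U = T.card := by
    rw [hU, finrank_span_eq_card hli, Fintype.card_coe]
  -- dimension count
  have hsum := Submodule.finrank_sup_add_finrank_inf_eq U W
  have hle : finrank ℝ ↥(U ⊔ W) ≤ n := by
    have := Submodule.finrank_le (U ⊔ W)
    simpa [finrank_euclideanSpace] using this
  have hinf : 0 < finrank ℝ ↥(U ⊓ W) := by omega
  have : Nontrivial ↥(U ⊓ W) := finrank_pos_iff.mp hinf
  obtain ⟨⟨x, hxUW⟩, hxne⟩ := exists_ne (0 : ↥(U ⊓ W))
  have hxU : x ∈ U := hxUW.1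
  have hxW : x ∈ W := hxUW.2
  have hx0 : x ≠ 0 := fun h => hxne (by simp [h])
  -- expand x in the eigenbasis
  obtain ⟨d, hd⟩ := (Submodule.mem_span_range_iff_exists_fun ℝ).mp hxU
  -- A *ᵥ x
  have hAx : (WithLp.toLp 2 (A *ᵥ x) : EuclideanSpace ℝ (Fin n))
      = ∑ j : T, (g j * d j) • (B j : EuclideanSpace ℝ (Fin n)) := by
    have : (A *ᵥ x : Fin n → ℝ) = A.mulVecLin x := rfl
    rw [← hd]
    apply WithLp.ofLp_injective 2
    simp only [WithLp.ofLp_toLp, WithLp.ofLp_sum, WithLp.ofLp_smul, Matrix.mulVec_sum,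
      Matrix.mulVec_smul]
    refine Finset.sum_congr rfl fun j _ => ?_
    have h := hA.mulVec_eigenvectorBasis (j : Fin n)
    rw [show A *ᵥ (B ↑j : EuclideanSpace ℝ (Fin n)).ofLp
        = g ↑j • (B ↑j : EuclideanSpace ℝ (Fin n)).ofLp from h, smul_smul, mul_comm]
  have hinner : ⟪x, (WithLp.toLp 2 (A *ᵥ x) : EuclideanSpace ℝ (Fin n))⟫ = ∑ j : T, d j * (g j * d j) := by
    rw [hAx, ← hd]
    have := hBorth.inner_sum d (fun j => g j * d j) Finset.univ
    simpa using this
  have hnorm : (‖x‖ : ℝ) ^ 2 = ∑ j : T, d j * d j := by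
    rw [← real_inner_self_eq_norm_sq]
    conv_lhs => rw [← hd]
    have := hBorth.inner_sum d d Finset.univ
    simpa using this
  have hbound : ⟪x, (WithLp.toLp 2 (A *ᵥ x) : EuclideanSpace ℝ (Fin n))⟫ ≤ c * ‖x‖ ^ 2 := by
    rw [hinner, hnorm, Finset.mul_sum]
    refine Finset.sum_le_sum fun j _ => ?_
    have h1 : g j ≤ c := hT j j.2
    have h2 : (0:ℝ) ≤ d j * d j := mul_self_nonneg _
    calc d j * (g j * d j) = g j * (d j * d j) := by ring
      _ ≤ c * (d j * d j) := mul_le_mul_of_nonneg_right h1 h2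
  have hpos : (0:ℝ) < ‖x‖ ^ 2 := pow_pos (norm_pos_iff.mpr hx0) 2
  have := hW x hxW
  nlinarith

lemma myClashHigh (hA : A.IsHermitian) (T : Finset (Fin n))
    (W : Submodule ℝ (EuclideanSpace ℝ (Fin n))) (c c' : ℝ) (hcc : c' < c)
    (hT : ∀ j ∈ T, c ≤ hA.eigenvalues j)
    (hW : ∀ x ∈ W, ⟪x, (WithLp.toLp 2 (A *ᵥ x) : EuclideanSpace ℝ (Fin n))⟫ ≤ c' * ‖x‖ ^ 2)
    (hdim : n < T.card + finrank ℝ W) : False := by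
  classical
  set B := hA.eigenvectorBasis with hB
  set g := hA.eigenvalues with hg
  set U : Submodule ℝ (EuclideanSpace ℝ (Fin n)) :=
    Submodule.span ℝ (Set.range (fun j : T => (B j : EuclideanSpace ℝ (Fin n)))) with hU
  have hBorth : Orthonormal ℝ (fun j : T => (B j : EuclideanSpace ℝ (Fin n))) :=
    B.orthonormal.comp _ Subtype.val_injective
  have hli : LinearIndependent ℝ (fun j : T => (B j : EuclideanSpace ℝ (Fin n))) :=
    hBorth.linearIndependent
  have hUrank : finrank ℝ U = T.card := by
    rw [hU, finrank_span_eq_card hli, Fintype.card_coe]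
  have hsum := Submodule.finrank_sup_add_finrank_inf_eq U W
  have hle : finrank ℝ ↥(U ⊔ W) ≤ n := by
    have := Submodule.finrank_le (U ⊔ W)
    simpa [finrank_euclideanSpace] using this
  have hinf : 0 < finrank ℝ ↥(U ⊓ W) := by omega
  have : Nontrivial ↥(U ⊓ W) := finrank_pos_iff.mp hinf
  obtain ⟨⟨x, hxUW⟩, hxne⟩ := exists_ne (0 : ↥(U ⊓ W))
  have hxU : x ∈ U := hxUW.1
  have hxW : x ∈ W := hxUW.2
  have hx0 : x ≠ 0 := fun h => hxne (by simp [h])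
  obtain ⟨d, hd⟩ := (Submodule.mem_span_range_iff_exists_fun ℝ).mp hxU
  have hAx : (WithLp.toLp 2 (A *ᵥ x) : EuclideanSpace ℝ (Fin n))
      = ∑ j : T, (g j * d j) • (B j : EuclideanSpace ℝ (Fin n)) := by
    have : (A *ᵥ x : Fin n → ℝ) = A.mulVecLin x := rfl
    rw [← hd]
    apply WithLp.ofLp_injective 2
    simp only [WithLp.ofLp_toLp, WithLp.ofLp_sum, WithLp.ofLp_smul, Matrix.mulVec_sum,
      Matrix.mulVec_smul]
    refine Finset.sum_congr rfl fun j _ => ?_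
    have h := hA.mulVec_eigenvectorBasis (j : Fin n)
    rw [show A *ᵥ (B ↑j : EuclideanSpace ℝ (Fin n)).ofLp
        = g ↑j • (B ↑j : EuclideanSpace ℝ (Fin n)).ofLp from h, smul_smul, mul_comm]
  have hinner : ⟪x, (WithLp.toLp 2 (A *ᵥ x) : EuclideanSpace ℝ (Fin n))⟫ = ∑ j : T, d j * (g j * d j) := by
    rw [hAx, ← hd]
    have := hBorth.inner_sum d (fun j => g j * d j) Finset.univ
    simpa using this
  have hnorm : (‖x‖ : ℝ) ^ 2 = ∑ j : T, d j * d j := by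
    rw [← real_inner_self_eq_norm_sq]
    conv_lhs => rw [← hd]
    have := hBorth.inner_sum d d Finset.univ
    simpa using this
  have hbound : c * ‖x‖ ^ 2 ≤ ⟪x, (WithLp.toLp 2 (A *ᵥ x) : EuclideanSpace ℝ (Fin n))⟫ := by
    rw [hinner, hnorm, Finset.mul_sum]
    refine Finset.sum_le_sum fun j _ => ?_
    have h1 : c ≤ g j := hT j j.2
    have h2 : (0:ℝ) ≤ d j * d j := mul_self_nonneg _
    calc c * (d j * d j) ≤ g j * (d j * d j) := mul_le_mul_of_nonneg_right h1 h2
      _ = d j * (g j * d j) := by ring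
  have hpos : (0:ℝ) < ‖x‖ ^ 2 := pow_pos (norm_pos_iff.mpr hx0) 2
  have := hW x hxW
  nlinarith


open Matrix Finset

variable {n : ℕ} {A : Matrix (Fin n) (Fin n) ℝ}

lemma eigAsc_eq (hA : A.IsHermitian) :
    eigAsc A = (Finset.univ.val.map hA.eigenvalues).sort (· ≤ ·) := by
  simp only [eigAsc]
  rw [dif_pos hA]

lemma eigAsc_length (hA : A.IsHermitian) : (eigAsc A).length = n := by
  rw [eigAsc_eq hA, Multiset.length_sort]
  simp

lemma myCard_filter_le (hA : A.IsHermitian) (m : ℕ) (hm : m < n) :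
    m + 1 ≤ (Finset.univ.filter
      (fun j => hA.eigenvalues j ≤ (eigAsc A).getD m 0)).card := by
  classical
  set g := hA.eigenvalues with hg
  set L := (Finset.univ.val.map g).sort (· ≤ ·) with hL
  have heig : eigAsc A = L := eigAsc_eq hA
  have hlen : L.length = n := by rw [← heig]; exact eigAsc_length hA
  have hm' : m < L.length := by omega
  set a := (eigAsc A).getD m 0 with ha
  have ha' : a = L.get ⟨m, hm'⟩ := by
    rw [ha, heig]
    exact List.getD_eq_getElem L 0 hm'
  have hsorted : L.Pairwise (· ≤ ·) := Multiset.pairwise_sort _ _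
  have hcoe : (↑L : Multiset ℝ) = Finset.univ.val.map g := Multiset.sort_eq _ _
  -- card of the filter equals the multiset count
  have hcard : (Finset.univ.filter (fun j => g j ≤ a)).card
      = Multiset.card (Multiset.filter (fun x => x ≤ a) (↑L : Multiset ℝ)) := by
    rw [hcoe, Multiset.filter_map, Multiset.card_map]
    rfl
  rw [hcard]
  -- split L into take and drop
  have hsplit : (↑L : Multiset ℝ)
      = (↑(L.take (m+1)) : Multiset ℝ) + (↑(L.drop (m+1)) : Multiset ℝ) := by
    conv_lhs => rw [← List.take_append_drop (m+1) L]
    rfl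
  have hall : ∀ x ∈ L.take (m+1), x ≤ a := by
    intro x hx
    obtain ⟨i, hi, hxi⟩ := List.mem_iff_getElem.mp hx
    have hi2 : i < m + 1 := by
      have := hi; rw [List.length_take] at this; omega
    have hiL : i < L.length := by omega
    have htk : (L.take (m+1))[i] = L[i]'hiL := List.getElem_take
    rw [← hxi, htk, ha']
    have : L.get ⟨i, hiL⟩ ≤ L.get ⟨m, hm'⟩ := by
      rcases Nat.lt_or_ge i m with h | h
      · exact List.pairwise_iff_get.mp hsorted ⟨i, hiL⟩ ⟨m, hm'⟩ h
      · have : i = m := by omega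
        subst this; exact le_refl _
    exact this
  have h1 : Multiset.filter (fun x => x ≤ a) (↑(L.take (m+1)) : Multiset ℝ)
      = (↑(L.take (m+1)) : Multiset ℝ) := Multiset.filter_eq_self.mpr hall
  rw [hsplit, Multiset.filter_add, Multiset.card_add, h1, Multiset.coe_card,
    List.length_take]
  have : min (m+1) L.length = m + 1 := by omega
  omega

lemma myCard_filter_ge (hA : A.IsHermitian) (m : ℕ) (hm : m < n) :
    n - m ≤ (Finset.univ.filter
      (fun j => (eigAsc A).getD m 0 ≤ hA.eigenvalues j)).card := by
  classical
  set g := hA.eigenvalues with hg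
  set L := (Finset.univ.val.map g).sort (· ≤ ·) with hL
  have heig : eigAsc A = L := eigAsc_eq hA
  have hlen : L.length = n := by rw [← heig]; exact eigAsc_length hA
  have hm' : m < L.length := by omega
  set a := (eigAsc A).getD m 0 with ha
  have ha' : a = L.get ⟨m, hm'⟩ := by
    rw [ha, heig]
    exact List.getD_eq_getElem L 0 hm'
  have hsorted : L.Pairwise (· ≤ ·) := Multiset.pairwise_sort _ _
  have hcoe : (↑L : Multiset ℝ) = Finset.univ.val.map g := Multiset.sort_eq _ _
  have hcard : (Finset.univ.filter (fun j => a ≤ g j)).card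
      = Multiset.card (Multiset.filter (fun x => a ≤ x) (↑L : Multiset ℝ)) := by
    rw [hcoe, Multiset.filter_map, Multiset.card_map]
    rfl
  rw [hcard]
  have hsplit : (↑L : Multiset ℝ)
      = (↑(L.take m) : Multiset ℝ) + (↑(L.drop m) : Multiset ℝ) := by
    conv_lhs => rw [← List.take_append_drop m L]
    rfl
  have hall : ∀ x ∈ L.drop m, a ≤ x := by
    intro x hx
    obtain ⟨i, hi, hxi⟩ := List.mem_iff_getElem.mp hx
    have hiL : m + i < L.length := by
      have := hi; rw [List.length_drop] at this; omega
    have htk : (L.drop m)[i] = L[m + i]'hiL := List.getElem_drop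
    rw [← hxi, htk, ha']
    have : L.get ⟨m, hm'⟩ ≤ L.get ⟨m + i, hiL⟩ := by
      rcases Nat.eq_zero_or_pos i with h | h
      · subst h; simp
      · exact List.pairwise_iff_get.mp hsorted ⟨m, hm'⟩ ⟨m + i, hiL⟩ (Fin.mk_lt_mk.mpr (by omega))
    exact this
  have h1 : Multiset.filter (fun x => a ≤ x) (↑(L.drop m) : Multiset ℝ)
      = (↑(L.drop m) : Multiset ℝ) := Multiset.filter_eq_self.mpr hall
  rw [hsplit, Multiset.filter_add, Multiset.card_add, h1, Multiset.coe_card,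
    List.length_drop]
  omega


open Matrix Finset Module

variable {n : ℕ}


-- evaluation as a linear map on EuclideanSpace
noncomputable def evalLM (i : Fin n) : EuclideanSpace ℝ (Fin n) →ₗ[ℝ] ℝ :=
  (LinearMap.proj i).comp (WithLp.linearEquiv 2 ℝ (Fin n → ℝ)).toLinearMap

@[simp] lemma evalLM_apply (i : Fin n) (x : EuclideanSpace ℝ (Fin n)) :
    evalLM i x = x i := rfl

lemma myInnerForm (A : Matrix (Fin n) (Fin n) ℝ) (x : EuclideanSpace ℝ (Fin n)) :
    ⟪x, (WithLp.toLp 2 (A *ᵥ x) : EuclideanSpace ℝ (Fin n))⟫ = ∑ v, ∑ u, x v * (A v u * x u) := by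
  rw [PiLp.inner_apply]
  refine Finset.sum_congr rfl fun v _ => ?_
  have h1 : (WithLp.toLp 2 (A *ᵥ x) : EuclideanSpace ℝ (Fin n)) v = ∑ u, A v u * x u := by
    show (fun j => A v j) ⬝ᵥ (x : Fin n → ℝ) = _
    rw [dotProduct]
  rw [RCLike.inner_apply, conj_trivial, h1, mul_comm (∑ u, A v u * x u), Finset.mul_sum]

lemma myNormSq (x : EuclideanSpace ℝ (Fin n)) : ‖x‖ ^ 2 = ∑ v, x v * x v := by
  rw [← real_inner_self_eq_norm_sq, PiLp.inner_apply]
  refine Finset.sum_congr rfl fun v _ => ?_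
  rw [RCLike.inner_apply, conj_trivial]

/-- subspace of vectors supported on `S` (with an optional sum-zero condition). -/
def mySupp (S : Finset (Fin n)) : Submodule ℝ (EuclideanSpace ℝ (Fin n)) where
  carrier := {x | ∀ v, v ∉ S → x v = 0}
  add_mem' := by
    intro x y hx hy v hv
    show x v + y v = 0
    rw [hx v hv, hy v hv, add_zero]
  zero_mem' := fun v _ => rfl
  smul_mem' := by
    intro c x hx v hv
    show c * x v = 0
    rw [hx v hv, mul_zero]

def mySuppZero (S : Finset (Fin n)) : Submodule ℝ (EuclideanSpace ℝ (Fin n)) where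
  carrier := {x | (∀ v, v ∉ S → x v = 0) ∧ ∑ v, x v = 0}
  add_mem' := by
    intro x y hx hy
    refine ⟨fun v hv => ?_, ?_⟩
    · show x v + y v = 0
      rw [hx.1 v hv, hy.1 v hv, add_zero]
    · have : ∑ v, ((x + y) : EuclideanSpace ℝ (Fin n)) v = ∑ v, (x v + y v) :=
        Finset.sum_congr rfl fun v _ => rfl
      rw [this, Finset.sum_add_distrib, hx.2, hy.2, add_zero]
  zero_mem' := ⟨fun v _ => rfl, by simp⟩
  smul_mem' := by
    intro c x hx
    refine ⟨fun v hv => ?_, ?_⟩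
    · show c * x v = 0
      rw [hx.1 v hv, mul_zero]
    · have : ∑ v, ((c • x) : EuclideanSpace ℝ (Fin n)) v = ∑ v, c * x v :=
        Finset.sum_congr rfl fun v _ => rfl
      rw [this, ← Finset.mul_sum, hx.2, mul_zero]

lemma myIndepW (A : Matrix (Fin n) (Fin n) ℝ) (S : Finset (Fin n))
    (h0 : ∀ u ∈ S, ∀ v ∈ S, A u v = 0) :
    ∃ W : Submodule ℝ (EuclideanSpace ℝ (Fin n)), S.card ≤ finrank ℝ W ∧
      (∀ x ∈ W, -(‖x‖ ^ 2) ≤ ⟪x, (WithLp.toLp 2 (A *ᵥ x) : EuclideanSpace ℝ (Fin n))⟫) ∧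
      (∀ x ∈ W, ⟪x, (WithLp.toLp 2 (A *ᵥ x) : EuclideanSpace ℝ (Fin n))⟫ ≤ 0) := by
  classical
  set w : S → EuclideanSpace ℝ (Fin n) :=
    fun v => EuclideanSpace.single (v : Fin n) (1:ℝ) with hw
  have hworth : Orthonormal ℝ w := by
    have heq : w = (⇑(EuclideanSpace.basisFun (Fin n) ℝ)) ∘ (fun v : S => (v : Fin n)) := by
      funext v
      rw [hw]
      exact (EuclideanSpace.basisFun_apply (Fin n) ℝ _).symm
    rw [heq]
    exact (EuclideanSpace.basisFun (Fin n) ℝ).orthonormal.comp _ Subtype.val_injective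
  have hli : LinearIndependent ℝ w := hworth.linearIndependent
  refine ⟨Submodule.span ℝ (Set.range w), ?_, ?_, ?_⟩
  · rw [finrank_span_eq_card hli, Fintype.card_coe]
  all_goals {
    intro x hx
    have hsupp : ∀ v, v ∉ S → x v = 0 := by
      have hle : Submodule.span ℝ (Set.range w) ≤ mySupp S := by
        rw [Submodule.span_le]
        rintro - ⟨v, rfl⟩
        intro u hu
        rw [hw]
        show EuclideanSpace.single (v : Fin n) (1:ℝ) u = 0
        rw [EuclideanSpace.single_apply]
        have : u ≠ (v : Fin n) := fun h => hu (h ▸ v.2)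
        simp [this]
      exact hle hx
    have hform : ⟪x, (WithLp.toLp 2 (A *ᵥ x) : EuclideanSpace ℝ (Fin n))⟫ = 0 := by
      rw [myInnerForm]
      refine Finset.sum_eq_zero fun v _ => ?_
      by_cases hv : v ∈ S
      · refine Finset.sum_eq_zero fun u _ => ?_
        by_cases hu : u ∈ S
        · rw [h0 v hv u hu, zero_mul, mul_zero]
        · rw [hsupp u hu, mul_zero, mul_zero]
      · refine Finset.sum_eq_zero fun u _ => ?_
        rw [hsupp v hv, zero_mul]
    have hn2 : (0:ℝ) ≤ ‖x‖ ^ 2 := by positivity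
    rw [hform]
    all_goals linarith
  }

lemma myCliqueW (A : Matrix (Fin n) (Fin n) ℝ) (Q : Finset (Fin n))
    (h1 : ∀ u ∈ Q, ∀ v ∈ Q, u ≠ v → A u v = 1) (hdiag : ∀ u ∈ Q, A u u = 0)
    (hQ : Q.Nonempty) :
    ∃ W : Submodule ℝ (EuclideanSpace ℝ (Fin n)), Q.card - 1 ≤ finrank ℝ W ∧
      (∀ x ∈ W, -(‖x‖ ^ 2) ≤ ⟪x, (WithLp.toLp 2 (A *ᵥ x) : EuclideanSpace ℝ (Fin n))⟫) ∧
      (∀ x ∈ W, ⟪x, (WithLp.toLp 2 (A *ᵥ x) : EuclideanSpace ℝ (Fin n))⟫ ≤ 0) := by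
  classical
  obtain ⟨v₀, hv₀⟩ := hQ
  set w : (Q.erase v₀) → EuclideanSpace ℝ (Fin n) :=
    fun v => EuclideanSpace.single (v : Fin n) (1:ℝ) - EuclideanSpace.single v₀ (1:ℝ) with hw
  have hwv : ∀ (v : Q.erase v₀) (u : Fin n),
      (w v) u = (if u = (v : Fin n) then (1:ℝ) else 0) - (if u = v₀ then (1:ℝ) else 0) := by
    intro v u
    have : (w v) u = evalLM u (w v) := rfl
    rw [this, hw]
    simp only [map_sub, evalLM_apply]
    rw [EuclideanSpace.single_apply, EuclideanSpace.single_apply]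
  have hli : LinearIndependent ℝ w := by
    rw [linearIndependent_iff']
    intro s c hsum i hi
    have h := congrArg (evalLM (i : Fin n)) hsum
    rw [map_sum, map_zero] at h
    have hterm : ∀ j ∈ s, evalLM (i : Fin n) (c j • w j) = if j = i then c j else 0 := by
      intro j _
      rw [_root_.map_smul, smul_eq_mul]
      have := hwv j (i : Fin n)
      rw [show evalLM (i : Fin n) (w j) = (w j) (i : Fin n) from rfl, this]
      have hiv₀ : (i : Fin n) ≠ v₀ := (Finset.mem_erase.mp i.2).1
      by_cases hij : j = i
      · subst hij
        simp [hiv₀]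
      · have : (i : Fin n) ≠ (j : Fin n) := fun h => hij (Subtype.ext h.symm)
        simp [this, hiv₀, hij]
    rw [Finset.sum_congr rfl hterm, Finset.sum_ite_eq' s i (fun j => c j), if_pos hi] at h
    exact h
  refine ⟨Submodule.span ℝ (Set.range w), ?_, ?_, ?_⟩
  · rw [finrank_span_eq_card hli, Fintype.card_coe, Finset.card_erase_of_mem hv₀]
  all_goals {
    intro x hx
    have hmem : x ∈ mySuppZero Q := by
      have hle : Submodule.span ℝ (Set.range w) ≤ mySuppZero Q := by
        rw [Submodule.span_le]
        rintro - ⟨v, rfl⟩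
        have hvQ : (v : Fin n) ∈ Q := Finset.mem_of_mem_erase v.2
        constructor
        · intro u hu
          rw [hwv v u]
          have h1' : u ≠ (v : Fin n) := fun h => hu (h ▸ hvQ)
          have h2' : u ≠ v₀ := fun h => hu (h ▸ hv₀)
          simp [h1', h2']
        · have : ∀ u, (w v) u
              = (if u = (v : Fin n) then (1:ℝ) else 0) - (if u = v₀ then (1:ℝ) else 0) := hwv v
          rw [Finset.sum_congr rfl (fun u _ => this u)]
          rw [Finset.sum_sub_distrib]
          simp
      exact hle hx
    obtain ⟨hsupp, hsum0⟩ := hmem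
    have hsumQ : ∑ u ∈ Q, x u = 0 := by
      rw [Finset.sum_subset (Finset.subset_univ Q) (fun u _ hu => hsupp u hu)]
      exact hsum0
    have hform : ⟪x, (WithLp.toLp 2 (A *ᵥ x) : EuclideanSpace ℝ (Fin n))⟫ = -(‖x‖ ^ 2) := by
      rw [myInnerForm]
      rw [← Finset.sum_subset (Finset.subset_univ Q) (fun v _ hv => ?_)]
      swap
      · refine Finset.sum_eq_zero fun u _ => ?_
        rw [hsupp v hv, zero_mul]
      have hrow : ∀ v ∈ Q, ∑ u, x v * (A v u * x u) = -(x v * x v) := by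
        intro v hv
        rw [← Finset.sum_subset (Finset.subset_univ Q) (fun u _ hu => ?_)]
        swap
        · rw [hsupp u hu, mul_zero, mul_zero]
        have hAterm : ∀ u ∈ Q, A v u * x u = x u - (if u = v then x v else 0) := by
          intro u hu
          by_cases huv : u = v
          · subst huv
            rw [hdiag u hu, zero_mul, if_pos rfl, sub_self]
          · rw [h1 v hv u hu (fun h => huv h.symm), one_mul, if_neg huv, sub_zero]
        rw [Finset.sum_congr rfl (fun u hu => by rw [hAterm u hu])]
        rw [← Finset.mul_sum]
        rw [Finset.sum_sub_distrib, Finset.sum_ite_eq' Q v (fun _ => x v), if_pos hv, hsumQ,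
          zero_sub, mul_neg]
      rw [Finset.sum_congr rfl hrow, myNormSq]
      rw [← Finset.sum_subset (Finset.subset_univ Q) (fun u _ hu => by rw [hsupp u hu, mul_zero])]
      rw [← Finset.sum_neg_distrib]
    have hn2 : (0:ℝ) ≤ ‖x‖ ^ 2 := by positivity
    rw [hform]
    all_goals linarith
  }


section Glue

open Matrix Finset Module


lemma myChooseGe : ∀ m : ℕ, m + 1 ≤ Nat.choose (2 * m + 1) m := by
  intro m
  induction m with
  | zero => simp
  | succ m ih =>
    have h1 : Nat.choose (2 * (m+1) + 1) (m+1)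
        = Nat.choose (2 * m + 2) m + Nat.choose (2 * m + 2) (m + 1) := by
      have : 2 * (m+1) + 1 = (2 * m + 2) + 1 := by ring
      rw [this, Nat.choose_succ_succ' (2 * m + 2) m]
    have h2 : Nat.choose (2 * m + 2) (m + 1)
        = Nat.choose (2 * m + 1) m + Nat.choose (2 * m + 1) (m + 1) := by
      have : 2 * m + 2 = (2 * m + 1) + 1 := by ring
      rw [this, Nat.choose_succ_succ' (2 * m + 1) m]
    have h3 : 1 ≤ Nat.choose (2 * m + 2) m := Nat.choose_pos (by omega)
    omega

lemma myKey {n : ℕ} {A : Matrix (Fin n) (Fin n) ℝ} (hA : A.IsHermitian) (k : ℕ)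
    (hk : 1 ≤ k) (hkn : k ≤ n) (W : Submodule ℝ (EuclideanSpace ℝ (Fin n)))
    (hdim : k ≤ finrank ℝ W)
    (hlow : ∀ x ∈ W, -(‖x‖ ^ 2) ≤ ⟪x, (WithLp.toLp 2 (A *ᵥ x) : EuclideanSpace ℝ (Fin n))⟫)
    (hup : ∀ x ∈ W, ⟪x, (WithLp.toLp 2 (A *ᵥ x) : EuclideanSpace ℝ (Fin n))⟫ ≤ 0) :
    -1 ≤ (eigAsc A).getD (n - k) 0 ∧ (eigAsc A).getD (k - 1) 0 ≤ 0 := by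
  classical
  constructor
  · by_contra hcon
    push_neg at hcon
    have hm : n - k < n := by omega
    have hc := myCard_filter_le hA (n - k) hm
    refine myClashLow hA
      (Finset.univ.filter (fun j => hA.eigenvalues j ≤ (eigAsc A).getD (n - k) 0)) W
      ((eigAsc A).getD (n - k) 0) (-1) hcon
      (fun j hj => (Finset.mem_filter.mp hj).2) (fun x hx => ?_) (by omega)
    have := hlow x hx
    linarith
  · by_contra hcon
    push_neg at hcon
    have hm : k - 1 < n := by omega
    have hc := myCard_filter_ge hA (k - 1) hm
    refine myClashHigh hA
      (Finset.univ.filter (fun j => (eigAsc A).getD (k - 1) 0 ≤ hA.eigenvalues j)) W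
      ((eigAsc A).getD (k - 1) 0) 0 hcon
      (fun j hj => (Finset.mem_filter.mp hj).2) (fun x hx => ?_) (by omega)
    have := hup x hx
    linarith

lemma myMainAux (k n : ℕ) (hk : 1 ≤ k) (hn : Nat.choose (2 * k - 1) (k - 1) ≤ n)
    (G : SimpleGraph (Fin n)) (inst : DecidableRel G.Adj) :
    -1 ≤ (eigAsc (G.adjMatrix ℝ)).getD (n - k) 0 ∧
      (eigAsc (G.adjMatrix ℝ)).getD (k - 1) 0 ≤ 0 := by
  classical
  set A := G.adjMatrix ℝ with hAdef
  have hA : A.IsHermitian := by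
    rw [Matrix.IsHermitian]
    ext i j
    simp [hAdef, Matrix.conjTranspose_apply, SimpleGraph.adjMatrix_apply, SimpleGraph.adj_comm]
  obtain ⟨m, rfl⟩ : ∃ m, k = m + 1 := ⟨k - 1, by omega⟩
  have hkn : m + 1 ≤ n := by
    refine le_trans ?_ hn
    have := myChooseGe m
    have h1 : 2 * (m + 1) - 1 = 2 * m + 1 := by omega
    have h2 : (m + 1) - 1 = m := by omega
    rw [h1, h2]
    exact this
  have hram := myRamsey (2 * m + 1) m (m + 1) G Finset.univ (by omega)
    (by
      have heq : Nat.choose (m + (m + 1)) m = Nat.choose (2 * (m + 1) - 1) ((m + 1) - 1) := by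
        congr 1 <;> omega
      rw [heq, Finset.card_univ, Fintype.card_fin]
      exact hn)
  rcases hram with ⟨S, _, hcard, hind⟩ | ⟨Q, _, hcard, hclq⟩
  · -- independent set of size m + 1
    have h0 : ∀ u ∈ S, ∀ v ∈ S, A u v = 0 := by
      intro u hu v hv
      by_cases huv : u = v
      · subst huv; simp [hAdef]
      · simp [hAdef, SimpleGraph.adjMatrix_apply, hind u hu v hv huv]
    obtain ⟨W, hW1, hW2, hW3⟩ := myIndepW A S h0
    exact myKey hA (m + 1) (by omega) hkn W (by omega) hW2 hW3
  · -- clique of size m + 2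
    have h1 : ∀ u ∈ Q, ∀ v ∈ Q, u ≠ v → A u v = 1 := by
      intro u hu v hv huv
      simp [hAdef, SimpleGraph.adjMatrix_apply, hclq u hu v hv huv]
    have hdiag : ∀ u ∈ Q, A u u = 0 := by
      intro u _
      simp [hAdef]
    have hQne : Q.Nonempty := Finset.card_pos.mp (by omega)
    obtain ⟨W, hW1, hW2, hW3⟩ := myCliqueW A Q h1 hdiag hQne
    exact myKey hA (m + 1) (by omega) hkn W (by omega) hW2 hW3

end Glue


theorem stmt0 (k n : ℕ) (hk : 1 ≤ k) (hn : Nat.choose (2 * k - 1) (k - 1) ≤ n)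
    (G : SimpleGraph (Fin n)) :
    graphEig G k ≥ -1 ∧ graphEig G (n - k + 1) ≤ 0 := by
  classical
  have hkn : k ≤ n := by
    refine le_trans ?_ hn
    obtain ⟨m, rfl⟩ : ∃ m, k = m + 1 := ⟨k - 1, by omega⟩
    have := myChooseGe m
    have h1 : 2 * (m + 1) - 1 = 2 * m + 1 := by omega
    have h2 : (m + 1) - 1 = m := by omega
    rw [h1, h2]
    exact this
  have hmain := myMainAux k n hk hn G (Classical.decRel G.Adj)
  have hidx : n - (n - k + 1) = k - 1 := by omega
  constructor
  · show -1 ≤ graphEig G k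
    simp only [graphEig, eigval]
    convert hmain.1 using 3
  · show graphEig G (n - k + 1) ≤ 0
    simp only [graphEig, eigval]
    rw [hidx] -- may need adjusting
    convert hmain.2 using 3
end

section
/- If G is a finite simple graph of order n with complement Ḡ, and 2 ≤ k ≤ n, then λ_k(G) + λ_{n−k+2}(Ḡ) ≤ −1. -/
open Matrix BigOperators
open scoped RealInnerProductSpace

section aux

variable {n : ℕ} {A : Matrix (Fin n) (Fin n) ℝ} (hA : A.IsHermitian)

lemma my_repr_support (S : Finset (Fin n)) {x : EuclideanSpace ℝ (Fin n)}
    (hx : x ∈ Submodule.span ℝ (hA.eigenvectorBasis '' (S : Set (Fin n))))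
    {i : Fin n} (hi : i ∉ S) : hA.eigenvectorBasis.repr x i = 0 := by
  induction hx using Submodule.span_induction with
  | mem y hy =>
    obtain ⟨j, hj, rfl⟩ := hy
    rw [OrthonormalBasis.repr_self, EuclideanSpace.single_apply, if_neg]
    rintro rfl; exact hi hj
  | zero => simp
  | add y z _ _ hy hz => simp [hy, hz]
  | smul c y _ hy => simp [hy]

lemma my_eigenvec (i : Fin n) :
    Matrix.toEuclideanLin A (hA.eigenvectorBasis i)
      = hA.eigenvalues i • hA.eigenvectorBasis i := by
  ext j
  have := congrFun (hA.mulVec_eigenvectorBasis i) j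
  simpa [Matrix.toEuclideanLin_apply] using this

lemma my_quad_ge (t : ℝ) (S : Finset (Fin n)) (hS : ∀ i ∈ S, t ≤ hA.eigenvalues i)
    {x : EuclideanSpace ℝ (Fin n)}
    (hx : x ∈ Submodule.span ℝ (hA.eigenvectorBasis '' (S : Set (Fin n)))) :
    t * ⟪x, x⟫ ≤ ⟪x, Matrix.toEuclideanLin A x⟫ := by
  set b := hA.eigenvectorBasis with hb
  set c : Fin n → ℝ := fun i => b.repr x i with hc
  have hsupp : ∀ i ∉ S, c i = 0 := fun i hi => my_repr_support hA S hx hi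
  have hxb : ∀ i, ⟪x, b i⟫ = c i := by
    intro i; rw [real_inner_comm, hc, ← b.repr_apply_apply]
  have hAx : Matrix.toEuclideanLin A x = ∑ i, (hA.eigenvalues i * c i) • b i := by
    conv_lhs => rw [← b.sum_repr x]
    rw [map_sum]
    refine Finset.sum_congr rfl fun i _ => ?_
    rw [LinearMap.map_smul, my_eigenvec hA i, smul_smul, mul_comm]
  have h1 : ⟪x, Matrix.toEuclideanLin A x⟫ = ∑ i, hA.eigenvalues i * c i * c i := by
    rw [hAx, inner_sum]
    refine Finset.sum_congr rfl fun i _ => ?_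
    rw [real_inner_smul_right, hxb]
  have h2 : ⟪x, x⟫ = ∑ i, c i * c i := by
    nth_rw 2 [← b.sum_repr x]
    rw [inner_sum]
    refine Finset.sum_congr rfl fun i _ => ?_
    rw [real_inner_smul_right, hxb]
  rw [h1, h2, Finset.mul_sum]
  refine Finset.sum_le_sum fun i _ => ?_
  by_cases hi : i ∈ S
  · have := hS i hi; nlinarith [mul_self_nonneg (c i)]
  · simp [hsupp i hi]

lemma my_finrank_span (S : Finset (Fin n)) :
    Module.finrank ℝ
      (Submodule.span ℝ (hA.eigenvectorBasis '' (S : Set (Fin n)))) = S.card := by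
  set b := hA.eigenvectorBasis
  have li : LinearIndependent ℝ (fun i : (S : Set (Fin n)) => b i) :=
    b.orthonormal.linearIndependent.comp _ Subtype.val_injective
  have hr : Set.range (fun i : (S : Set (Fin n)) => b i) = b '' (S : Set (Fin n)) := by
    have : (fun i : (S : Set (Fin n)) => b i)
        = b ∘ (Subtype.val : ↥(S : Set (Fin n)) → Fin n) := rfl
    rw [this, Set.range_comp, Subtype.range_val]
  rw [← hr, finrank_span_eq_card li]
  simp

end aux

lemma my_count {n : ℕ} (μ : Fin n → ℝ) {j : ℕ} (hj : j < n) :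
    n - j ≤ (Finset.univ.filter
      (fun i => ((Finset.univ.val.map μ).sort (· ≤ ·)).getD j 0 ≤ μ i)).card := by
  classical
  set l := (Finset.univ.val.map μ).sort (· ≤ ·) with hl
  have hlen : l.length = n := by
    rw [hl, Multiset.length_sort, Multiset.card_map, Finset.card_val, Finset.card_univ,
      Fintype.card_fin]
  have hsorted : l.Pairwise (· ≤ ·) := Multiset.pairwise_sort _ _
  set t := l.getD j 0 with ht
  have hcard : (Finset.univ.filter (fun i => t ≤ μ i)).card
      = l.countP (fun a => decide (t ≤ a)) := by
    have e1 : (Finset.univ.filter (fun i => t ≤ μ i)).card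
        = Multiset.countP (fun i => t ≤ μ i) Finset.univ.val := by
      rw [Multiset.countP_eq_card_filter]; rfl
    have e2 : Multiset.countP (fun a : ℝ => t ≤ a) (Finset.univ.val.map μ)
        = Multiset.countP (fun i => t ≤ μ i) Finset.univ.val := by
      rw [Multiset.countP_map, Multiset.countP_eq_card_filter]
    have e3 : (Finset.univ.val.map μ) = (l : Multiset ℝ) := (Multiset.sort_eq _ _).symm
    rw [e1, ← e2, e3, Multiset.coe_countP]
  rw [hcard]
  have hdrop : ∀ x ∈ l.drop j, t ≤ x := by
    intro x hx
    obtain ⟨i, hi⟩ := List.get_of_mem hx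
    have hji : j + (i : ℕ) < l.length := by
      have h1 := i.isLt; have h2 := List.length_drop (i := j) (l := l); omega
    have hgd : (l.drop j).get i = l.get ⟨j + i, hji⟩ := by
      simp [List.getElem_drop]
    have htg : t = l.get ⟨j, by omega⟩ := by
      rw [ht, List.getD_eq_getElem l 0 (by omega)]; rfl
    rw [← hi, hgd, htg]
    exact hsorted.rel_get_of_le (by simp)
  calc n - j = (l.drop j).length := by rw [List.length_drop, hlen]
    _ = (l.drop j).countP (fun a => decide (t ≤ a)) := by
        rw [eq_comm, List.countP_eq_length]
        intro a ha; simpa using hdrop a ha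
    _ ≤ l.countP (fun a => decide (t ≤ a)) := by
        conv_rhs => rw [← List.take_append_drop j l]
        rw [List.countP_append]; omega

lemma my_finrank_inf {E : Type*} [NormedAddCommGroup E] [InnerProductSpace ℝ E]
    [FiniteDimensional ℝ E] (U V : Submodule ℝ E) :
    Module.finrank ℝ U + Module.finrank ℝ V
      ≤ Module.finrank ℝ E + Module.finrank ℝ (U ⊓ V : Submodule ℝ E) := by
  rw [← Submodule.finrank_sup_add_finrank_inf_eq U V]
  have := Submodule.finrank_le (U ⊔ V)
  omega



theorem stmt2 (k n : ℕ) (hk : 2 ≤ k) (hkn : k ≤ n) (G : SimpleGraph (Fin n)) :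
    graphEig G k + graphEig Gᶜ (n - k + 2) ≤ -1 := by
  classical
  have hn : 2 ≤ n := hk.trans hkn
  set A := G.adjMatrix ℝ with hA_def
  set B := Gᶜ.adjMatrix ℝ with hB_def
  have hA : A.IsHermitian := by
    ext i j
    rw [Matrix.conjTranspose_apply, hA_def]
    simp only [SimpleGraph.adjMatrix_apply, star_trivial]
    by_cases h : G.Adj i j
    · rw [if_pos h, if_pos (G.adj_symm h)]
    · rw [if_neg (fun hji => h (G.adj_symm hji)), if_neg h]
  have hB : B.IsHermitian := by
    ext i j
    rw [Matrix.conjTranspose_apply, hB_def]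
    simp only [SimpleGraph.adjMatrix_apply, star_trivial]
    by_cases h : Gᶜ.Adj i j
    · rw [if_pos h, if_pos (Gᶜ.adj_symm h)]
    · rw [if_neg (fun hji => h (Gᶜ.adj_symm hji)), if_neg h]
  have heigA : eigAsc A = (Finset.univ.val.map hA.eigenvalues).sort (· ≤ ·) := by
    unfold eigAsc; rw [dif_pos hA]
  have heigB : eigAsc B = (Finset.univ.val.map hB.eigenvalues).sort (· ≤ ·) := by
    unfold eigAsc; rw [dif_pos hB]
  have ha0 : graphEig G k = eigval A k := by
    unfold graphEig
    congr 1
  have hb0 : graphEig Gᶜ (n - k + 2) = eigval B (n - k + 2) := by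
    unfold graphEig
    congr 1
    all_goals
      first
      | rfl
      | (rw [hB_def]; ext i j; by_cases h : Gᶜ.Adj i j <;> simp [h])
  have ha : graphEig G k
      = ((Finset.univ.val.map hA.eigenvalues).sort (· ≤ ·)).getD (n - k) 0 := by
    rw [ha0]; unfold eigval; rw [heigA]
  have hb' : graphEig Gᶜ (n - k + 2)
      = ((Finset.univ.val.map hB.eigenvalues).sort (· ≤ ·)).getD (k - 2) 0 := by
    rw [hb0]; unfold eigval; rw [heigB]
    congr 1
    omega
  rw [ha, hb']
  set a := ((Finset.univ.val.map hA.eigenvalues).sort (· ≤ ·)).getD (n - k) 0 with ha'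
  set b := ((Finset.univ.val.map hB.eigenvalues).sort (· ≤ ·)).getD (k - 2) 0 with hb''
  set S₁ := Finset.univ.filter (fun i => a ≤ hA.eigenvalues i) with hS₁def
  set S₂ := Finset.univ.filter (fun i => b ≤ hB.eigenvalues i) with hS₂def
  have hS₁ : k ≤ S₁.card := by
    have h := my_count hA.eigenvalues (j := n - k) (by omega)
    have h2 : n - (n - k) = k := by omega
    rw [h2] at h
    exact h
  have hS₂ : n - k + 2 ≤ S₂.card := by
    have h := my_count hB.eigenvalues (j := k - 2) (by omega)
    have h2 : n - (k - 2) = n - k + 2 := by omega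
    rw [h2] at h
    exact h
  set V₁ := Submodule.span ℝ (hA.eigenvectorBasis '' (S₁ : Set (Fin n))) with hV₁def
  set V₂ := Submodule.span ℝ (hB.eigenvectorBasis '' (S₂ : Set (Fin n))) with hV₂def
  have hV₁ : k ≤ Module.finrank ℝ V₁ := by rw [hV₁def, my_finrank_span]; exact hS₁
  have hV₂ : n - k + 2 ≤ Module.finrank ℝ V₂ := by rw [hV₂def, my_finrank_span]; exact hS₂
  let f : EuclideanSpace ℝ (Fin n) →ₗ[ℝ] ℝ :=
  { toFun := fun y => ∑ i, y i
    map_add' := fun y z => by simp [Finset.sum_add_distrib]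
    map_smul' := fun c y => by simp [Finset.mul_sum] }
  set U := LinearMap.ker f with hUdef
  have hE : Module.finrank ℝ (EuclideanSpace ℝ (Fin n)) = n := by
    simp [finrank_euclideanSpace]
  have hU : n - 1 ≤ Module.finrank ℝ U := by
    have h1 := LinearMap.finrank_range_add_finrank_ker f
    rw [← hUdef, hE] at h1
    have h2 : Module.finrank ℝ (LinearMap.range f) ≤ 1 := by
      have := Submodule.finrank_le (LinearMap.range f)
      simpa using this
    omega
  set V₁₂ := V₁ ⊓ V₂ with hV₁₂def
  set W := V₁₂ ⊓ U with hWdef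
  have d1 : Module.finrank ℝ V₁ + Module.finrank ℝ V₂ ≤ n + Module.finrank ℝ V₁₂ := by
    have := my_finrank_inf V₁ V₂
    rw [hE] at this
    rw [hV₁₂def]
    exact this
  have d2 : Module.finrank ℝ V₁₂ + Module.finrank ℝ U ≤ n + Module.finrank ℝ W := by
    have := my_finrank_inf V₁₂ U
    rw [hE] at this
    rw [hWdef]
    exact this
  have hpos : 0 < Module.finrank ℝ W := by omega
  have hne : W ≠ ⊥ := by
    intro h
    rw [h, finrank_bot] at hpos
    omega
  obtain ⟨x, hxW, hx0⟩ := Submodule.ne_bot_iff _ |>.mp hne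
  have hx1 : x ∈ V₁ := (Submodule.mem_inf.mp (Submodule.mem_inf.mp hxW).1).1
  have hx2 : x ∈ V₂ := (Submodule.mem_inf.mp (Submodule.mem_inf.mp hxW).1).2
  have hxU : x ∈ U := (Submodule.mem_inf.mp hxW).2
  have hsum0 : ∑ i, x i = 0 := LinearMap.mem_ker.mp hxU
  have q1 : a * ⟪x, x⟫ ≤ ⟪x, Matrix.toEuclideanLin A x⟫ :=
    my_quad_ge hA a S₁ (fun i hi => (Finset.mem_filter.mp hi).2) hx1
  have q2 : b * ⟪x, x⟫ ≤ ⟪x, Matrix.toEuclideanLin B x⟫ :=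
    my_quad_ge hB b S₂ (fun i hi => (Finset.mem_filter.mp hi).2) hx2
  have hAB : ∀ i j, (A + B) i j = if i = j then (0 : ℝ) else 1 := by
    intro i j
    by_cases h : i = j
    · subst h
      simp [hA_def, hB_def, Matrix.add_apply, SimpleGraph.adjMatrix_apply]
    · by_cases hadj : G.Adj i j <;>
        simp [hA_def, hB_def, Matrix.add_apply, SimpleGraph.adjMatrix_apply,
          SimpleGraph.compl_adj, h, hadj]
  have hmv : ∀ i, ((A + B) *ᵥ (x : Fin n → ℝ)) i = - x i := by
    intro i
    have step : ∀ j, (A + B) i j * x j = x j - (if i = j then x j else 0) := by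
      intro j
      rw [hAB]
      by_cases h : i = j <;> simp [h]
    calc ((A + B) *ᵥ (x : Fin n → ℝ)) i = ∑ j, (A + B) i j * x j := rfl
      _ = ∑ j, (x j - if i = j then x j else 0) := Finset.sum_congr rfl (fun j _ => step j)
      _ = (∑ j, x j) - ∑ j, (if i = j then x j else 0) := Finset.sum_sub_distrib _ _
      _ = - x i := by rw [hsum0, Finset.sum_ite_eq]; simp
  have hABx : Matrix.toEuclideanLin (A + B) x = -x := by
    ext i
    show ((A + B) *ᵥ (x : Fin n → ℝ)) i = (-x) i
    rw [hmv i]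
    simp
  have hq : ⟪x, Matrix.toEuclideanLin A x⟫ + ⟪x, Matrix.toEuclideanLin B x⟫ = -⟪x, x⟫ := by
    rw [← inner_add_right]
    have hadd : Matrix.toEuclideanLin A x + Matrix.toEuclideanLin B x
        = Matrix.toEuclideanLin (A + B) x := by rw [map_add]; rfl
    rw [hadd, hABx, inner_neg_right]
  have hinner : (0 : ℝ) < ⟪x, x⟫ := by
    have hne0 : ⟪x, x⟫ ≠ 0 := fun h => hx0 (inner_self_eq_zero.mp h)
    exact lt_of_le_of_ne real_inner_self_nonneg (Ne.symm hne0)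
  nlinarith [q1, q2, hq, hinner]
end

section
/- Let k ≥ 1 and let A ∈ S_k. Then either k is a perfect square, or A has the same number of positive eigenvalues as negative eigenvalues (counted with multiplicity). -/
open Matrix BigOperators

/-- `memS k A` says that `A` belongs to the class `S_k`: `A` is a symmetric
`(-1,1)`-matrix of order `n ≥ k` with `λ_k^*(A) = n / √k`. -/
def memS (k : ℕ) {n : ℕ} (A : Matrix (Fin n) (Fin n) ℝ) : Prop :=
  k ≤ n ∧ A.IsSymm ∧ (∀ i j, A i j = 1 ∨ A i j = -1) ∧
    singval A k = (n : ℝ) / Real.sqrt k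

/-- The number of positive eigenvalues of `A`, counted with multiplicity. -/
noncomputable def posCount {n : ℕ} (A : Matrix (Fin n) (Fin n) ℝ) : ℕ :=
  (eigAsc A).countP (fun x => decide (0 < x))

/-- The number of negative eigenvalues of `A`, counted with multiplicity. -/
noncomputable def negCount {n : ℕ} (A : Matrix (Fin n) (Fin n) ℝ) : ℕ :=
  (eigAsc A).countP (fun x => decide (x < 0))

lemma auxTrace {n : ℕ} {A : Matrix (Fin n) (Fin n) ℝ} (hH : A.IsHermitian) :
    A.trace = ∑ i, hH.eigenvalues i ∧ (A * A).trace = ∑ i, hH.eigenvalues i ^ 2 := by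
  set V : Matrix (Fin n) (Fin n) ℝ := (hH.eigenvectorUnitary : Matrix (Fin n) (Fin n) ℝ) with hV
  have h2 : V * star V = 1 := Matrix.mem_unitaryGroup_iff.mp hH.eigenvectorUnitary.2
  have hD : star V * A * V = Matrix.diagonal (RCLike.ofReal ∘ hH.eigenvalues) :=
    by have := hH.conjStarAlgAut_star_eigenvectorUnitary; rwa [Unitary.conjStarAlgAut_star_apply] at this
  have htr : ∀ X : Matrix (Fin n) (Fin n) ℝ, (star V * X * V).trace = X.trace := fun X => by
    rw [Matrix.trace_mul_cycle, h2, Matrix.one_mul]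
  constructor
  · have := htr A
    rw [hD] at this
    rw [← this, Matrix.trace_diagonal]
    simp
  · have hDD : star V * (A * A) * V
        = Matrix.diagonal (RCLike.ofReal ∘ hH.eigenvalues)
          * Matrix.diagonal (RCLike.ofReal ∘ hH.eigenvalues) := by
      rw [← hD]
      simp only [Matrix.mul_assoc]
      rw [← Matrix.mul_assoc V (star V), h2, Matrix.one_mul]
    have := htr (A * A)
    rw [hDD] at this
    rw [← this, Matrix.diagonal_mul_diagonal, Matrix.trace_diagonal]
    simp [sq]

set_option maxHeartbeats 1000000 in
theorem stmt8 (k : ℕ) (hk : 1 ≤ k) {n : ℕ} (A : Matrix (Fin n) (Fin n) ℝ)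
    (hA : memS k A) :
    IsSquare k ∨ posCount A = negCount A := by
  obtain ⟨hkn, hsymm, hE, hsing⟩ := hA
  classical
  have hH : A.IsHermitian := by
    rw [Matrix.IsHermitian, Matrix.conjTranspose_eq_transpose_of_trivial]; exact hsymm
  set μ : Fin n → ℝ := hH.eigenvalues with hμ
  set c : ℝ := (n : ℝ) / Real.sqrt k with hcdef
  have hk0 : (0:ℝ) < Real.sqrt k := Real.sqrt_pos.2 (by exact_mod_cast hk)
  have hn1 : 1 ≤ n := le_trans hk hkn
  have hc : 0 < c := div_pos (by exact_mod_cast hn1) hk0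
  set l : List ℝ := singAsc A with hldef
  have hl : l = (Finset.univ.val.map (fun i => |μ i|)).sort (· ≤ ·) := by
    rw [hldef]; unfold singAsc; rw [dif_pos hH]
  have hlen : l.length = n := by
    rw [hl, Multiset.length_sort]; simp
  have hcoe : (↑l : Multiset ℝ) = Finset.univ.val.map (fun i => |μ i|) := by
    rw [hl]; exact Multiset.sort_eq _ _
  have hsorted : l.Pairwise (· ≤ ·) := by rw [hl]; exact Multiset.pairwise_sort _ _
  have hmemnn : ∀ x ∈ l, 0 ≤ x := by
    intro x hx
    rw [← Multiset.mem_coe, hcoe] at hx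
    obtain ⟨j, _, rfl⟩ := Multiset.mem_map.mp hx
    exact abs_nonneg _
  have hmn : n - k < l.length := by omega
  have hgval : l.get ⟨n - k, hmn⟩ = c := by
    have := hsing
    unfold singval at this
    rw [← hldef] at this
    rwa [List.getD_eq_getElem l 0 hmn] at this
  -- sum of squares of entries of l equals n^2
  have htrsq : (A * A).trace = (n:ℝ)^2 := by
    have : (A * A).trace = ∑ i, ∑ j, A i j * A j i := by
      simp [Matrix.trace, Matrix.mul_apply, Matrix.diag]
    rw [this]
    have h1 : ∀ i j, A i j * A j i = 1 := by
      intro i j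
      have hji : A j i = A i j := by
        conv_lhs => rw [← hsymm]
        rfl
      rw [hji]
      rcases hE i j with h | h <;> rw [h] <;> norm_num
    simp [h1, sq]
  have hsq : ∑ i : Fin l.length, (l.get i)^2 = (n:ℝ)^2 := by
    have h1 : (l.map (fun x => x^2)).sum = ∑ i : Fin l.length, (l.get i)^2 := by
      conv_lhs => rw [← List.ofFn_get l]
      rw [List.map_ofFn, List.sum_ofFn]
      rfl
    have h2 : (Multiset.map (fun x => x^2) (↑l : Multiset ℝ)).sum = (l.map (fun x => x^2)).sum := by
      rw [Multiset.map_coe, Multiset.sum_coe]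
    rw [← h1, ← h2, hcoe, Multiset.map_map]
    have h3 : (Multiset.map ((fun x => x^2) ∘ fun i => |μ i|) Finset.univ.val).sum
        = ∑ j, |μ j|^2 := rfl
    rw [h3]
    have h4 : ∀ j, |μ j|^2 = μ j ^2 := fun j => sq_abs _
    rw [Finset.sum_congr rfl (fun j _ => h4 j), ← (auxTrace hH).2, htrsq]
  -- the top k entries are c, the rest are 0
  set N := l.length with hN
  set a : Fin N := ⟨n - k, hmn⟩ with ha
  set g : Fin N → ℝ := l.get with hg
  have hnn : ∀ i, 0 ≤ g i := fun i => hmemnn _ (l.get_mem i)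
  have hge : ∀ i ∈ Finset.Ici a, c ≤ g i := by
    intro i hi
    rw [← hgval]
    exact hsorted.rel_get_of_le (Finset.mem_Ici.mp hi)
  have hcard : (Finset.Ici a).card = k := by
    rw [Fin.card_Ici]
    show N - (n - k) = k
    omega
  have hkc : (k:ℝ) * c^2 = (n:ℝ)^2 := by
    rw [hcdef, div_pow, Real.sq_sqrt (by positivity : (0:ℝ) ≤ (k:ℝ))]
    have : (k:ℝ) ≠ 0 := by positivity
    field_simp
  have hbig_le : ∑ i ∈ Finset.Ici a, c^2 ≤ ∑ i ∈ Finset.Ici a, g i ^2 :=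
    Finset.sum_le_sum (fun i hi => pow_le_pow_left₀ hc.le (hge i hi) 2)
  have hbig_const : ∑ i ∈ Finset.Ici a, c^2 = (n:ℝ)^2 := by
    rw [Finset.sum_const, hcard, nsmul_eq_mul, hkc]
  have hsplit : ∑ i ∈ Finset.Ici a, g i ^2 + ∑ i ∈ (Finset.Ici a)ᶜ, g i ^2 = (n:ℝ)^2 := by
    rw [Finset.sum_add_sum_compl]
    exact hsq
  have hcompl_nn : 0 ≤ ∑ i ∈ (Finset.Ici a)ᶜ, g i ^2 :=
    Finset.sum_nonneg (fun i _ => sq_nonneg _)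
  have hbig_eq : ∑ i ∈ Finset.Ici a, g i ^2 = ∑ i ∈ Finset.Ici a, c^2 := by
    rw [hbig_const]; linarith
  have hcompl_zero : ∑ i ∈ (Finset.Ici a)ᶜ, g i ^2 = 0 := by
    rw [hbig_eq, hbig_const] at hsplit
    linarith
  have hbig_val : ∀ i ∈ Finset.Ici a, g i = c := by
    intro i hi
    have := ((Finset.sum_eq_sum_iff_of_le
      (fun i hi => pow_le_pow_left₀ hc.le (hge i hi) 2)).mp hbig_eq.symm) i hi
    have h2 : c ^ 2 = g i ^ 2 := this
    nlinarith [hnn i, hge i hi]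
  have hcompl_val : ∀ i ∈ (Finset.Ici a)ᶜ, g i = 0 := by
    intro i hi
    have := (Finset.sum_eq_zero_iff_of_nonneg (fun i _ => sq_nonneg (g i))).mp hcompl_zero i hi
    exact (pow_eq_zero_iff two_ne_zero).mp this
  have hval : ∀ i : Fin N, g i = 0 ∨ g i = c := by
    intro i
    by_cases hi : i ∈ Finset.Ici a
    · exact Or.inr (hbig_val i hi)
    · exact Or.inl (hcompl_val i (Finset.mem_compl.mpr hi))
  have habs : ∀ j, |μ j| = 0 ∨ |μ j| = c := by
    intro j
    have hmem : |μ j| ∈ l := by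
      rw [← Multiset.mem_coe, hcoe]
      exact Multiset.mem_map_of_mem _ (Finset.mem_univ j)
    obtain ⟨i, hi⟩ := List.mem_iff_get.mp hmem
    rw [← hi]
    exact hval i
  have htri : ∀ j, μ j = 0 ∨ μ j = c ∨ μ j = -c := by
    intro j
    rcases habs j with h | h
    · exact Or.inl (abs_eq_zero.mp h)
    · rcases (abs_eq hc.le).mp h with h' | h'
      · exact Or.inr (Or.inl h')
      · exact Or.inr (Or.inr h')
  -- counting
  set P := Finset.univ.filter (fun j => μ j = c) with hP
  set Q := Finset.univ.filter (fun j => μ j = -c) with hQ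
  have hpos : posCount A = P.card := by
    unfold posCount eigAsc
    rw [dif_pos hH]
    have key : (Multiset.sort (Finset.univ.val.map μ) (· ≤ ·)).countP (fun x => decide (0 < x))
        = Multiset.countP (fun x => (0:ℝ) < x) (Finset.univ.val.map μ) := by
      rw [← Multiset.coe_countP, Multiset.sort_eq]
    rw [key, Multiset.countP_map]
    show Multiset.card (Multiset.filter (fun j => 0 < μ j) Finset.univ.val) = P.card
    rw [hP]
    rw [Finset.card_def, Finset.filter_val]
    congr 1
    apply Multiset.filter_congr
    intro j _
    constructor
    · intro h0
      rcases htri j with h|h|h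
      · rw [h] at h0; exact absurd h0 (lt_irrefl _)
      · exact h
      · rw [h] at h0; exact absurd h0 (by linarith)
    · intro h; rw [h]; exact hc
  have hneg : negCount A = Q.card := by
    unfold negCount eigAsc
    rw [dif_pos hH]
    have key : (Multiset.sort (Finset.univ.val.map μ) (· ≤ ·)).countP (fun x => decide (x < 0))
        = Multiset.countP (fun x => x < (0:ℝ)) (Finset.univ.val.map μ) := by
      rw [← Multiset.coe_countP, Multiset.sort_eq]
    rw [key, Multiset.countP_map]
    show Multiset.card (Multiset.filter (fun j => μ j < 0) Finset.univ.val) = Q.card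
    rw [hQ]
    rw [Finset.card_def, Finset.filter_val]
    congr 1
    apply Multiset.filter_congr
    intro j _
    constructor
    · intro h0
      rcases htri j with h|h|h
      · rw [h] at h0; exact absurd h0 (lt_irrefl _)
      · rw [h] at h0; exact absurd h0 (by linarith)
      · exact h
    · intro h; rw [h]; linarith
  -- trace
  have htrace : A.trace = (P.card : ℝ) * c - (Q.card : ℝ) * c := by
    rw [(auxTrace hH).1]
    have hptw : ∀ j, μ j = (if μ j = c then c else 0) + (if μ j = -c then -c else 0) := by
      intro j
      have h1 : ¬((0:ℝ) = c) := by intro hh; linarith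
      have h2 : ¬((0:ℝ) = -c) := by intro hh; linarith
      have h3 : ¬(c = -c) := by intro hh; linarith
      have h4 : ¬(-c = c) := by intro hh; linarith
      rcases htri j with h|h|h <;> rw [h] <;> simp [h1, h2, h3, h4]
    rw [Finset.sum_congr rfl (fun j _ => hptw j), Finset.sum_add_distrib,
      ← Finset.sum_filter, ← Finset.sum_filter, Finset.sum_const, Finset.sum_const,
      ← hP, ← hQ, nsmul_eq_mul, nsmul_eq_mul]
    ring
  have hint : ∃ t : ℤ, (t:ℝ) = A.trace := by
    refine ⟨∑ i, if A i i = 1 then 1 else -1, ?_⟩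
    rw [Matrix.trace]
    push_cast
    refine Finset.sum_congr rfl ?_
    intro i _
    rcases hE i i with h|h <;> simp [Matrix.diag, h] <;> intro hh <;> norm_num at hh
  by_cases hks : IsSquare k
  · exact Or.inl hks
  · right
    rw [hpos, hneg]
    by_contra hne
    obtain ⟨t, ht⟩ := hint
    have hPQ : ((P.card:ℝ) - Q.card) ≠ 0 := by
      rw [sub_ne_zero]
      exact fun h => hne (by exact_mod_cast h)
    have ht' : (t:ℝ) = ((P.card:ℝ) - Q.card) * c := by rw [ht, htrace]; ring
    have htne : (t:ℝ) ≠ 0 := by rw [ht']; exact mul_ne_zero hPQ hc.ne'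
    have hs' : Real.sqrt k * t = ((P.card:ℝ) - Q.card) * n := by
      rw [ht', hcdef]
      field_simp
    have hs : Real.sqrt k = (((P.card:ℝ) - Q.card) * n) / t := by
      rw [eq_div_iff htne]
      linarith [hs']
    have hirr : Irrational (Real.sqrt k) := irrational_sqrt_natCast_iff.mpr hks
    apply hirr
    refine ⟨((P.card:ℚ) - Q.card) * n / (t:ℚ), ?_⟩
    push_cast
    exact hs.symm
end

section
/- If k is an odd positive integer and the class S_k is nonempty, then k is a perfect square. -/
open Matrix BigOperators


lemma sum_map_sub_multiset (m : Multiset ℝ) (f g : ℝ → ℝ) :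
    (m.map (fun x => f x - g x)).sum = (m.map f).sum - (m.map g).sum := by
  induction m using Multiset.induction with
  | empty => simp
  | cons a t ih => simp only [Multiset.map_cons, Multiset.sum_cons, ih]; ring

lemma aux_multiset (m : Multiset ℝ) (s : ℝ) (hs : 0 < s) (k : ℕ)
    [DecidablePred fun x : ℝ => s ≤ x]
    (h0 : ∀ x ∈ m, (0:ℝ) ≤ x)
    (hk : k ≤ Multiset.card (m.filter fun x => s ≤ x))
    (hsum : (m.map fun x => x ^ 2).sum = k * s ^ 2) :
    (∀ x ∈ m, x = 0 ∨ x = s) ∧ Multiset.card (m.filter fun x => s ≤ x) = k := by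
  classical
  set m₁ := m.filter (fun x => s ≤ x) with hm₁
  set m₂ := m.filter (fun x => ¬ s ≤ x) with hm₂
  have hsplit : m₁ + m₂ = m := Multiset.filter_add_not _ m
  have hsum' : (m₁.map fun x => x ^ 2).sum + (m₂.map fun x => x ^ 2).sum = k * s ^ 2 := by
    rw [← Multiset.sum_add, ← Multiset.map_add, hsplit, hsum]
  have h1le : ∀ x ∈ m₁, s ≤ x := fun x hx => (Multiset.mem_filter.mp hx).2
  have hsq1 : ∀ y ∈ m₁.map fun x => x ^ 2, s ^ 2 ≤ y := by
    intro y hy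
    obtain ⟨x, hx, rfl⟩ := Multiset.mem_map.mp hy
    exact pow_le_pow_left₀ hs.le (h1le x hx) 2
  have hcard1 : (Multiset.card m₁ : ℝ) * s ^ 2 ≤ (m₁.map fun x => x ^ 2).sum := by
    have := Multiset.card_nsmul_le_sum hsq1
    simpa [nsmul_eq_mul] using this
  have h2nonneg : ∀ y ∈ m₂.map fun x => x ^ 2, (0:ℝ) ≤ y := by
    intro y hy
    obtain ⟨x, hx, rfl⟩ := Multiset.mem_map.mp hy
    positivity
  have hS2 : (0:ℝ) ≤ (m₂.map fun x => x ^ 2).sum := Multiset.sum_nonneg h2nonneg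
  have hkc : (k : ℝ) ≤ (Multiset.card m₁ : ℝ) := by exact_mod_cast hk
  have hs2 : (0:ℝ) < s ^ 2 := by positivity
  have hcardeq : Multiset.card m₁ = k := by
    have h1 : (Multiset.card m₁ : ℝ) * s ^ 2 ≤ (k:ℝ) * s ^ 2 := by nlinarith
    have h2 : (Multiset.card m₁ : ℝ) ≤ (k:ℝ) := le_of_mul_le_mul_right h1 hs2
    have : Multiset.card m₁ ≤ k := by exact_mod_cast h2
    omega
  have hS2zero : (m₂.map fun x => x ^ 2).sum = 0 := by nlinarith
  have hS1eq : (m₁.map fun x => x ^ 2).sum = (k:ℝ) * s ^ 2 := by linarith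
  have h2 : ∀ x ∈ m₂, x = 0 := by
    intro x hx
    have hle := Multiset.single_le_sum h2nonneg (x ^ 2) (Multiset.mem_map_of_mem _ hx)
    have hx2 : x ^ 2 = 0 := le_antisymm (by rw [hS2zero] at hle; exact hle) (by positivity)
    exact (pow_eq_zero_iff two_ne_zero).mp hx2
  have hsub : (m₁.map fun x => x ^ 2 - s ^ 2).sum = 0 := by
    rw [sum_map_sub_multiset]
    have hconst : (m₁.map fun _ => s ^ 2).sum = (Multiset.card m₁ : ℝ) * s ^ 2 := by
      simp [Multiset.map_const', Multiset.sum_replicate, nsmul_eq_mul]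
    rw [hconst, hS1eq, hcardeq]
    ring
  have h1 : ∀ x ∈ m₁, x = s := by
    intro x hx
    have hnn : ∀ y ∈ m₁.map fun x => x ^ 2 - s ^ 2, (0:ℝ) ≤ y := by
      intro y hy
      obtain ⟨z, hz, rfl⟩ := Multiset.mem_map.mp hy
      have := pow_le_pow_left₀ hs.le (h1le z hz) 2
      linarith
    have hle := Multiset.single_le_sum hnn _ (Multiset.mem_map_of_mem (fun x => x ^ 2 - s ^ 2) hx)
    rw [hsub] at hle
    have hle' : x ^ 2 - s ^ 2 ≤ 0 := hle
    have hxs := h1le x hx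
    by_contra hne
    have hlt : s < x := lt_of_le_of_ne hxs (Ne.symm hne)
    nlinarith [mul_pos (by linarith : (0:ℝ) < x - s) (by linarith : (0:ℝ) < x + s)]
  refine ⟨?_, hcardeq⟩
  intro x hx
  rw [← hsplit] at hx
  rcases Multiset.mem_add.mp hx with h | h
  · exact Or.inr (h1 x h)
  · exact Or.inl (h2 x h)

lemma trace_eigs {n : ℕ} {A : Matrix (Fin n) (Fin n) ℝ} (hA : A.IsHermitian) :
    A.trace = ∑ i, hA.eigenvalues i ∧ (A * A).trace = ∑ i, hA.eigenvalues i ^ 2 := by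
  set U := (hA.eigenvectorUnitary : Matrix (Fin n) (Fin n) ℝ) with hUdef
  have hU : U * star U = 1 := (Matrix.mem_unitaryGroup_iff).mp hA.eigenvectorUnitary.2
  have hD : star (hA.eigenvectorUnitary : Matrix (Fin n) (Fin n) ℝ) * A *
      (hA.eigenvectorUnitary : Matrix (Fin n) (Fin n) ℝ) = diagonal (RCLike.ofReal ∘ hA.eigenvalues) := by
    have h := hA.conjStarAlgAut_star_eigenvectorUnitary
    rw [Unitary.conjStarAlgAut_star_apply] at h
    exact h
  rw [← hUdef] at hD
  have key : ∀ B : Matrix (Fin n) (Fin n) ℝ, (star U * B * U).trace = B.trace := by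
    intro B
    rw [Matrix.trace_mul_cycle, hU, Matrix.one_mul]
  have cancel : ∀ X : Matrix (Fin n) (Fin n) ℝ, U * (star U * X) = X := fun X => by
    rw [← Matrix.mul_assoc, hU, Matrix.one_mul]
  constructor
  · have h := key A
    rw [hD] at h
    rw [← h, Matrix.trace_diagonal]
    simp
  · have hsq : star U * (A * A) * U = (star U * A * U) * (star U * A * U) := by
      simp only [Matrix.mul_assoc, cancel]
    have h := key (A * A)
    rw [hsq, hD, Matrix.diagonal_mul_diagonal] at h
    rw [← h, Matrix.trace_diagonal]
    simp [sq]

theorem stmt9 (k : ℕ) (hk : 0 < k) (hodd : Odd k)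
    (hS : ∃ n : ℕ, ∃ A : Matrix (Fin n) (Fin n) ℝ, memS k A) :
    IsSquare k := by
  classical
  obtain ⟨n, A, hkn, hsymm, hentries, hval⟩ := hS
  have hA : A.IsHermitian := by
    ext i j
    simp only [Matrix.conjTranspose_apply, star_trivial]
    exact hsymm.apply i j
  set μ := hA.eigenvalues with hμ
  have hn : 0 < n := lt_of_lt_of_le hk hkn
  have hkR : (0:ℝ) < (k:ℝ) := by exact_mod_cast hk
  have hsqrtk : (0:ℝ) < Real.sqrt k := Real.sqrt_pos.mpr hkR
  set s : ℝ := (n:ℝ) / Real.sqrt k with hsdef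
  have hs : 0 < s := div_pos (by exact_mod_cast hn) hsqrtk
  have hks2 : (k:ℝ) * s ^ 2 = (n:ℝ) ^ 2 := by
    rw [hsdef, div_pow, Real.sq_sqrt hkR.le]
    field_simp
  -- trace identities
  obtain ⟨htr1, htr2⟩ := trace_eigs hA
  -- sum of squares of eigenvalues is n^2
  have hsumsq : ∑ i, μ i ^ 2 = (n:ℝ) ^ 2 := by
    rw [hμ, ← htr2]
    have : (A * A).trace = ∑ i, ∑ j, A i j * A j i := by
      simp [Matrix.trace, Matrix.diag, Matrix.mul_apply]
    rw [this]
    have hone : ∀ i j, A i j * A j i = 1 := by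
      intro i j
      rw [hsymm.apply i j]
      rcases hentries i j with h | h <;> rw [h] <;> norm_num
    calc (∑ i, ∑ j, A i j * A j i) = ∑ _i : Fin n, ∑ _j : Fin n, (1:ℝ) := by
          exact Finset.sum_congr rfl fun i _ => Finset.sum_congr rfl fun j _ => hone i j
      _ = (n:ℝ) ^ 2 := by simp [sq]
  -- the multiset of singular values
  set m : Multiset ℝ := Finset.univ.val.map (fun i => |μ i|) with hmdef
  have hmsum : (m.map fun x => x ^ 2).sum = (k:ℝ) * s ^ 2 := by
    rw [hmdef, Multiset.map_map, hks2]
    have : ((Finset.univ.val.map ((fun x => x ^ 2) ∘ fun i => |μ i|))).sum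
        = ∑ i, |μ i| ^ 2 := rfl
    rw [this]
    simp only [sq_abs]
    exact hsumsq
  -- the sorted list
  obtain ⟨L, hLeq, hLsorted, hLcoe⟩ :
      ∃ L : List ℝ, singAsc A = L ∧ L.Pairwise (· ≤ ·) ∧ (L : Multiset ℝ) = m := by
    unfold singAsc
    rw [dif_pos hA]
    exact ⟨_, rfl, Multiset.pairwise_sort _ _, Multiset.sort_eq _ _⟩
  have hlen : L.length = n := by
    have h := congrArg Multiset.card hLcoe
    rw [Multiset.coe_card, hmdef, Multiset.card_map] at h
    simpa using h
  have hidx : n - k < L.length := by omega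
  have hget : L.get ⟨n - k, hidx⟩ = s := by
    have h1 : singval A k = L.getD (n - k) 0 := by rw [singval, hLeq]
    rw [List.getD_eq_get L 0 ⟨n - k, hidx⟩] at h1
    rw [← h1, hval]
  -- every element of the last k entries is ≥ s
  have hdrop : ∀ x ∈ L.drop (n - k), s ≤ x := by
    intro x hx
    obtain ⟨j, hj, rfl⟩ := List.mem_iff_getElem.mp hx
    have hj' : n - k + j < L.length := by
      rw [List.length_drop, hlen] at hj
      omega
    have heq : (L.drop (n - k))[j] = L.get ⟨n - k + j, hj'⟩ := by
      rw [List.getElem_drop]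
      simp [List.get_eq_getElem]
    rw [heq]
    rw [← hget]
    exact hLsorted.rel_get_of_le (by simp)
  -- at least k elements of m are ≥ s
  have hfilter : k ≤ Multiset.card (m.filter fun x => s ≤ x) := by
    rw [← hLcoe, Multiset.filter_coe, Multiset.coe_card]
    have hdroplen : (L.drop (n - k)).length = k := by
      rw [List.length_drop, hlen]; omega
    have hdropfilt : (L.drop (n - k)).filter (fun x => decide (s ≤ x)) = L.drop (n - k) := by
      apply List.filter_eq_self.mpr
      intro a ha
      simpa using hdrop a ha
    calc k = ((L.drop (n - k)).filter (fun x => decide (s ≤ x))).length := by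
            rw [hdropfilt, hdroplen]
      _ ≤ (L.filter (fun x => decide (s ≤ x))).length := by
            conv_rhs => rw [← List.take_append_drop (n - k) L]
            rw [List.filter_append, List.length_append]
            omega
  obtain ⟨hall, hcardk⟩ := aux_multiset m s hs k (by
      intro x hx
      obtain ⟨i, _, rfl⟩ := Multiset.mem_map.mp hx
      exact abs_nonneg _) hfilter hmsum
  -- each |μ i| is 0 or s
  have habs : ∀ i, μ i = 0 ∨ μ i = s ∨ μ i = -s := by
    intro i
    have hmem : |μ i| ∈ m := by
      rw [hmdef]
      exact Multiset.mem_map_of_mem _ (Finset.mem_val.mpr (Finset.mem_univ i))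
    rcases hall _ hmem with h | h
    · exact Or.inl (abs_eq_zero.mp h)
    · rcases (abs_eq hs.le).mp h with h' | h'
      · exact Or.inr (Or.inl h')
      · exact Or.inr (Or.inr h')
  -- counting eigenvalues equal to s and -s
  set Pset := Finset.univ.filter (fun i => μ i = s) with hPdef
  set Qset := Finset.univ.filter (fun i => μ i = -s) with hQdef
  have hsns : s ≠ -s := by intro h; linarith
  have hcard' : Multiset.card (m.filter fun x => s ≤ x)
      = (Finset.univ.filter fun i => s ≤ |μ i|).card := by
    rw [hmdef, Multiset.filter_map, Multiset.card_map]
    rfl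
  have hPQ : Pset.card + Qset.card = k := by
    have hset : (Finset.univ.filter fun i => s ≤ |μ i|) = Pset ∪ Qset := by
      ext i
      simp only [Finset.mem_filter, Finset.mem_union, Finset.mem_univ, true_and, hPdef, hQdef]
      constructor
      · intro hle
        have hmem : |μ i| ∈ m := by
          rw [hmdef]
          exact Multiset.mem_map_of_mem _ (Finset.mem_val.mpr (Finset.mem_univ i))
        rcases hall _ hmem with h | h
        · exfalso; rw [h] at hle; linarith
        · rcases (abs_eq hs.le).mp h with h' | h'
          · exact Or.inl h'
          · exact Or.inr h'
      · rintro (h | h) <;> rw [h]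
        · rw [abs_of_pos hs]
        · rw [abs_of_neg (by linarith : -s < 0)]; simp
    have hdisj : Disjoint Pset Qset := by
      rw [Finset.disjoint_left]
      intro i hi hi'
      rw [hPdef, Finset.mem_filter] at hi
      rw [hQdef, Finset.mem_filter] at hi'
      exact hsns (hi.2 ▸ hi'.2)
    rw [← hcardk, hcard', hset, Finset.card_union_of_disjoint hdisj]
  have hsum_eig : ∑ i, μ i = (Pset.card : ℝ) * s - (Qset.card : ℝ) * s := by
    rw [← Finset.sum_filter_add_sum_filter_not Finset.univ (fun i => μ i = s) (fun i => μ i)]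
    have h1 : ∑ i ∈ Finset.univ.filter (fun i => μ i = s), μ i = (Pset.card : ℝ) * s := by
      rw [Finset.sum_congr rfl (fun i hi => (Finset.mem_filter.mp hi).2), Finset.sum_const,
        nsmul_eq_mul, hPdef]
    have hrest : ∑ i ∈ Finset.univ.filter (fun i => ¬ μ i = s), μ i
        = -((Qset.card : ℝ) * s) := by
      rw [← Finset.sum_filter_add_sum_filter_not (Finset.univ.filter fun i => ¬ μ i = s)
        (fun i => μ i = -s) (fun i => μ i)]
      have h2 : (Finset.univ.filter fun i => ¬ μ i = s).filter (fun i => μ i = -s) = Qset := by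
        ext i
        simp only [Finset.mem_filter, Finset.mem_univ, true_and, hQdef]
        constructor
        · exact fun h => h.2
        · exact fun h => ⟨fun hc => hsns (hc.symm.trans h), h⟩
      have h3 : ∑ i ∈ (Finset.univ.filter fun i => ¬ μ i = s).filter (fun i => ¬ μ i = -s),
          μ i = 0 := by
        apply Finset.sum_eq_zero
        intro i hi
        simp only [Finset.mem_filter] at hi
        rcases habs i with h | h | h
        · exact h
        · exact absurd h hi.1.2
        · exact absurd h hi.2
      rw [h2, h3, add_zero]
      rw [Finset.sum_congr rfl (fun i hi => (Finset.mem_filter.mp hi).2), Finset.sum_const,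
        nsmul_eq_mul]
      ring
    rw [h1, hrest]
    ring
  -- the trace is an integer
  have htrint : ∃ z : ℤ, A.trace = (z : ℝ) := by
    have hdiag : ∀ i, ∃ w : ℤ, A i i = (w : ℝ) := by
      intro i; rcases hentries i i with h | h
      · exact ⟨1, by rw [h]; norm_num⟩
      · exact ⟨-1, by rw [h]; norm_num⟩
    choose w hw using hdiag
    refine ⟨∑ i, w i, ?_⟩
    have htd : A.trace = ∑ i, A i i := by simp [Matrix.trace, Matrix.diag]
    rw [htd]
    push_cast
    exact Finset.sum_congr rfl fun i _ => hw i
  obtain ⟨z, hz⟩ := htrint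
  have heq : ((Pset.card : ℝ) - Qset.card) * s = (z : ℝ) := by
    rw [htr1, ← hμ, hsum_eig] at hz
    linarith [hz]
  by_cases hPQeq : Pset.card = Qset.card
  · exfalso
    have : Even k := ⟨Pset.card, by omega⟩
    exact (Nat.not_even_iff_odd.mpr hodd) this
  · have hcR : ((Pset.card : ℝ) - Qset.card) ≠ 0 := by
      intro h
      apply hPQeq
      have : (Pset.card : ℝ) = Qset.card := by linarith
      exact_mod_cast this
    have hzne : (z : ℝ) ≠ 0 := by rw [← heq]; exact mul_ne_zero hcR hs.ne'
    have h1 : s * Real.sqrt k = n := by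
      rw [hsdef]
      field_simp
    have hsqrt_eq : Real.sqrt k
        = ((((n : ℚ) * ((Pset.card : ℚ) - Qset.card) / (z : ℚ)) : ℚ) : ℝ) := by
      push_cast
      rw [eq_div_iff hzne, ← heq, ← h1]
      ring
    have hni : ¬ Irrational (Real.sqrt k) := by
      rw [hsqrt_eq]
      exact Rat.not_irrational _
    by_contra hns
    exact hni (irrational_sqrt_natCast_iff.mpr hns)
end

section
/- Let k ≥ 1 and suppose the class S_k is nonempty. Then there exists an integer n > k such that for every integer t ≥ 1 there is a finite simple graph G of order nt satisfying λ_{k+1}(G) + λ_{k+1}(Ḡ) ≥ nt/√(2k) − 2 and |λ_{nt−k+1}(G)| + |λ_{nt−k+1}(Ḡ)| ≥ nt/√(2k), where Ḡ is the complement of G. -/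
open Matrix BigOperators

open Finset List

lemma SL_mem_take {l : List ℝ} (hl : l.Pairwise (· ≤ ·)) {p : ℕ} (hp : p < l.length)
    {x : ℝ} (hx : x ∈ l.take (p+1)) : x ≤ l.get ⟨p, hp⟩ := by
  rw [List.mem_take_iff_getElem] at hx
  obtain ⟨i, hi, rfl⟩ := hx
  have hi' : i < l.length := lt_of_lt_of_le (Nat.lt_min.mp hi).2 (le_refl _)
  have : i ≤ p := Nat.lt_succ_iff.mp (Nat.lt_min.mp hi).1
  exact hl.rel_get_of_le (a := ⟨i, hi'⟩) (b := ⟨p, hp⟩) this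

lemma SL_mem_drop {l : List ℝ} (hl : l.Pairwise (· ≤ ·)) {p : ℕ} (hp : p < l.length)
    {x : ℝ} (hx : x ∈ l.drop p) : l.get ⟨p, hp⟩ ≤ x := by
  rw [List.mem_drop_iff_getElem] at hx
  obtain ⟨i, hi, hx⟩ := hx
  have h2 : p + i < l.length := by omega
  have hrel := hl.rel_get_of_le (a := ⟨p, hp⟩) (b := ⟨p+i, h2⟩) (by simp)
  simpa [List.get_eq_getElem, hx] using hrel

lemma SL_ge {l : List ℝ} (hl : l.Pairwise (· ≤ ·)) {p : ℕ} (hp : p < l.length) {c : ℝ}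
    (h : l.length - p ≤ l.countP (fun x => decide (c ≤ x))) : c ≤ l.get ⟨p, hp⟩ := by
  by_contra hcon
  push_neg at hcon
  have hsplit : l.countP (fun x => decide (c ≤ x)) =
      (l.take (p+1)).countP (fun x => decide (c ≤ x)) + (l.drop (p+1)).countP (fun x => decide (c ≤ x)) := by
    rw [← List.countP_append, List.take_append_drop]
  have h0 : (l.take (p+1)).countP (fun x => decide (c ≤ x)) = 0 := by
    rw [List.countP_eq_zero]
    intro a ha
    have := SL_mem_take hl hp ha
    simp only [decide_eq_true_eq]
    linarith
  have h1 : (l.drop (p+1)).countP (fun x => decide (c ≤ x)) ≤ l.length - (p+1) := by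
    simpa using List.countP_le_length (l := l.drop (p+1)) (p := fun x => decide (c ≤ x))
  omega

lemma SL_le {l : List ℝ} (hl : l.Pairwise (· ≤ ·)) {p : ℕ} (hp : p < l.length) {c : ℝ}
    (h : p + 1 ≤ l.countP (fun x => decide (x ≤ c))) : l.get ⟨p, hp⟩ ≤ c := by
  by_contra hcon
  push_neg at hcon
  have hsplit : l.countP (fun x => decide (x ≤ c)) =
      (l.take p).countP (fun x => decide (x ≤ c)) + (l.drop p).countP (fun x => decide (x ≤ c)) := by
    rw [← List.countP_append, List.take_append_drop]
  have h0 : (l.drop p).countP (fun x => decide (x ≤ c)) = 0 := by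
    rw [List.countP_eq_zero]
    intro a ha
    have := SL_mem_drop hl hp ha
    simp only [decide_eq_true_eq]
    linarith
  have h1 : (l.take p).countP (fun x => decide (x ≤ c)) ≤ p := by
    have := List.countP_le_length (l := l.take p) (p := fun x => decide (x ≤ c))
    simpa using le_trans this (by simp)
  omega

lemma SL_count {l : List ℝ} (hl : l.Pairwise (· ≤ ·)) {p : ℕ} (hp : p < l.length) :
    l.length - p ≤ l.countP (fun x => decide (l.get ⟨p, hp⟩ ≤ x)) := by
  have hsplit : l.countP (fun x => decide (l.get ⟨p, hp⟩ ≤ x)) =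
      (l.take p).countP (fun x => decide (l.get ⟨p, hp⟩ ≤ x)) + (l.drop p).countP (fun x => decide (l.get ⟨p, hp⟩ ≤ x)) := by
    rw [← List.countP_append, List.take_append_drop]
  have h0 : (l.drop p).countP (fun x => decide (l.get ⟨p, hp⟩ ≤ x)) = (l.drop p).length := by
    rw [List.countP_eq_length]
    intro a ha
    simpa using SL_mem_drop hl hp ha
  rw [hsplit, h0]
  simp only [List.length_drop]
  omega

section CV
variable {N j : ℕ} {S : Matrix (Fin N) (Fin N) ℝ}

lemma expand_forms (hS : S.IsHermitian) (x : Fin N → ℝ) :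
    x ⬝ᵥ (S *ᵥ x) = ∑ i, hS.eigenvalues i * (star (hS.eigenvectorUnitary : Matrix (Fin N) (Fin N) ℝ) *ᵥ x) i ^ 2 ∧
    x ⬝ᵥ x = ∑ i, (star (hS.eigenvectorUnitary : Matrix (Fin N) (Fin N) ℝ) *ᵥ x) i ^ 2 := by
  set U : Matrix (Fin N) (Fin N) ℝ := (hS.eigenvectorUnitary : Matrix (Fin N) (Fin N) ℝ) with hUdef
  set y : Fin N → ℝ := star U *ᵥ x with hy
  have h1 : star U * U = 1 := Unitary.coe_star_mul_self hS.eigenvectorUnitary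
  have h2 : U * star U = 1 := Unitary.coe_mul_star_self hS.eigenvectorUnitary
  have hUt : star U = Uᵀ := by
    rw [Matrix.star_eq_conjTranspose, Matrix.conjTranspose_eq_transpose_of_trivial]
  have hxy : x = U *ᵥ y := by
    rw [hy, mulVec_mulVec, h2, one_mulVec]
  have key : ∀ M : Matrix (Fin N) (Fin N) ℝ, x ⬝ᵥ (U * M) *ᵥ x = y ⬝ᵥ (M *ᵥ x) := by
    intro M
    rw [← mulVec_mulVec, dotProduct_mulVec x U, ← mulVec_transpose, ← hUt]
  constructor
  · have hsp : S = U * (diagonal (RCLike.ofReal ∘ hS.eigenvalues) * star U) := by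
      rw [← mul_assoc]; exact hS.spectral_theorem
    have e1 := congrArg (fun M => x ⬝ᵥ (M *ᵥ x)) hsp
    rw [e1, key, ← mulVec_mulVec]
    have : diagonal (RCLike.ofReal ∘ hS.eigenvalues) *ᵥ y = fun i => hS.eigenvalues i * y i := by
      funext i; rw [mulVec_diagonal]; simp [RCLike.ofReal]
    rw [this, dotProduct]
    exact Finset.sum_congr rfl (fun i _ => by ring)
  · conv_lhs => rw [hxy]
    rw [dotProduct_mulVec, ← mulVec_transpose, ← hUt, mulVec_mulVec, h1, one_mulVec, dotProduct]
    exact Finset.sum_congr rfl (fun i _ => by ring)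

/-- linear combination map -/
noncomputable def combo (f : Fin j → (Fin N → ℝ)) : (Fin j → ℝ) →ₗ[ℝ] (Fin N → ℝ) where
  toFun := fun a => ∑ i, a i • f i
  map_add' := by intro a b; simp [add_smul, Finset.sum_add_distrib]
  map_smul' := by intro c a; simp [smul_smul, Finset.smul_sum]

lemma core_count_ge (hS : S.IsHermitian) (c : ℝ) (f : Fin j → (Fin N → ℝ))
    (hf : LinearIndependent ℝ f)
    (hform : ∀ a : Fin j → ℝ,
      c * ((∑ i, a i • f i) ⬝ᵥ (∑ i, a i • f i)) ≤ (∑ i, a i • f i) ⬝ᵥ (S *ᵥ (∑ i, a i • f i))) :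
    j ≤ (univ.filter (fun i => c ≤ hS.eigenvalues i)).card := by
  classical
  by_contra hcard
  push_neg at hcard
  set P := univ.filter (fun i => c ≤ hS.eigenvalues i) with hP
  let ψ : (Fin j → ℝ) →ₗ[ℝ] (↥P → ℝ) :=
    (LinearMap.pi fun p : ↥P => LinearMap.proj (p : Fin N)) ∘ₗ
      (Matrix.mulVecLin (star (hS.eigenvectorUnitary : Matrix (Fin N) (Fin N) ℝ))) ∘ₗ combo f
  have hnotinj : ¬ Function.Injective ψ := by
    intro hinj
    have := LinearMap.finrank_le_finrank_of_injective hinj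
    simp at this
    omega
  have hker : LinearMap.ker ψ ≠ ⊥ := by
    intro h
    exact hnotinj (LinearMap.ker_eq_bot.mp h)
  obtain ⟨a, haker, ha0⟩ := Submodule.exists_mem_ne_zero_of_ne_bot hker
  set x : Fin N → ℝ := ∑ i, a i • f i with hx
  have hx0 : x ≠ 0 := by
    intro h
    exact ha0 (funext fun i => Fintype.linearIndependent_iff.mp hf a h i)
  set y : Fin N → ℝ := star (hS.eigenvectorUnitary : Matrix (Fin N) (Fin N) ℝ) *ᵥ x with hy
  have hyP : ∀ p : Fin N, p ∈ P → y p = 0 := by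
    intro p hp
    have h1 := LinearMap.mem_ker.mp haker
    have h2 := congrFun h1 ⟨p, hp⟩
    simpa [ψ, combo, ← hx, ← hy] using h2
  obtain ⟨hq, hn⟩ := expand_forms hS x
  rw [← hy] at hq hn
  have hy0 : y ≠ 0 := by
    intro h
    apply hx0
    rw [← dotProduct_self_eq_zero (v := x), hn]
    simp [h]
  obtain ⟨i0, hi0⟩ : ∃ i0, y i0 ≠ 0 := by
    by_contra hc; push_neg at hc; exact hy0 (funext hc)
  have hi0P : i0 ∉ P := fun h => hi0 (hyP i0 h)
  have hmu : hS.eigenvalues i0 < c := by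
    simp only [hP, Finset.mem_filter, Finset.mem_univ, true_and] at hi0P
    linarith [not_le.mp hi0P]
  have hsq : (0:ℝ) < y i0 ^ 2 := by positivity
  have hform' := hform a
  rw [← hx, hq, hn, Finset.mul_sum] at hform'
  have hlt : (∑ i, hS.eigenvalues i * y i ^ 2) < (∑ i, c * y i ^ 2) := by
    apply Finset.sum_lt_sum
    · intro i _
      by_cases hiP : i ∈ P
      · rw [hyP i hiP]; simp
      · have : hS.eigenvalues i < c := by
          simp only [hP, Finset.mem_filter, Finset.mem_univ, true_and] at hiP
          linarith [not_le.mp hiP]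
        nlinarith [sq_nonneg (y i)]
    · exact ⟨i0, Finset.mem_univ _, by nlinarith⟩
  exact absurd hform' (not_le.mpr hlt)

lemma core_count_le (hS : S.IsHermitian) (c : ℝ) (f : Fin j → (Fin N → ℝ))
    (hf : LinearIndependent ℝ f)
    (hform : ∀ a : Fin j → ℝ,
      c * ((∑ i, a i • f i) ⬝ᵥ (∑ i, a i • f i)) ≥ (∑ i, a i • f i) ⬝ᵥ (S *ᵥ (∑ i, a i • f i))) :
    j ≤ (univ.filter (fun i => c ≥ hS.eigenvalues i)).card := by
  classical
  by_contra hcard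
  push_neg at hcard
  set P := univ.filter (fun i => c ≥ hS.eigenvalues i) with hP
  let ψ : (Fin j → ℝ) →ₗ[ℝ] (↥P → ℝ) :=
    (LinearMap.pi fun p : ↥P => LinearMap.proj (p : Fin N)) ∘ₗ
      (Matrix.mulVecLin (star (hS.eigenvectorUnitary : Matrix (Fin N) (Fin N) ℝ))) ∘ₗ combo f
  have hnotinj : ¬ Function.Injective ψ := by
    intro hinj
    have := LinearMap.finrank_le_finrank_of_injective hinj
    simp at this
    omega
  have hker : LinearMap.ker ψ ≠ ⊥ := by
    intro h
    exact hnotinj (LinearMap.ker_eq_bot.mp h)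
  obtain ⟨a, haker, ha0⟩ := Submodule.exists_mem_ne_zero_of_ne_bot hker
  set x : Fin N → ℝ := ∑ i, a i • f i with hx
  have hx0 : x ≠ 0 := by
    intro h
    exact ha0 (funext fun i => Fintype.linearIndependent_iff.mp hf a h i)
  set y : Fin N → ℝ := star (hS.eigenvectorUnitary : Matrix (Fin N) (Fin N) ℝ) *ᵥ x with hy
  have hyP : ∀ p : Fin N, p ∈ P → y p = 0 := by
    intro p hp
    have h1 := LinearMap.mem_ker.mp haker
    have h2 := congrFun h1 ⟨p, hp⟩
    simpa [ψ, combo, ← hx, ← hy] using h2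
  obtain ⟨hq, hn⟩ := expand_forms hS x
  rw [← hy] at hq hn
  have hy0 : y ≠ 0 := by
    intro h
    apply hx0
    rw [← dotProduct_self_eq_zero (v := x), hn]
    simp [h]
  obtain ⟨i0, hi0⟩ : ∃ i0, y i0 ≠ 0 := by
    by_contra hc; push_neg at hc; exact hy0 (funext hc)
  have hi0P : i0 ∉ P := fun h => hi0 (hyP i0 h)
  have hmu : hS.eigenvalues i0 > c := by
    simp only [hP, Finset.mem_filter, Finset.mem_univ, true_and] at hi0P
    linarith [not_le.mp hi0P]
  have hsq : (0:ℝ) < y i0 ^ 2 := by positivity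
  have hform' := hform a
  rw [← hx, hq, hn, Finset.mul_sum] at hform'
  have hlt : (∑ i, hS.eigenvalues i * y i ^ 2) > (∑ i, c * y i ^ 2) := by
    apply Finset.sum_lt_sum
    · intro i _
      by_cases hiP : i ∈ P
      · rw [hyP i hiP]; simp
      · have : hS.eigenvalues i > c := by
          simp only [hP, Finset.mem_filter, Finset.mem_univ, true_and] at hiP
          linarith [not_le.mp hiP]
        nlinarith [sq_nonneg (y i)]
    · exact ⟨i0, Finset.mem_univ _, by nlinarith⟩
  exact absurd hform' (not_le.mpr hlt)





lemma eigAsc_spec (hS : S.IsHermitian) :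
    eigAsc S = Multiset.sort (Multiset.map hS.eigenvalues Finset.univ.val) (· ≤ ·) := by
  simp only [eigAsc, dif_pos hS]

lemma length_eigAsc (hS : S.IsHermitian) : (eigAsc S).length = N := by
  rw [eigAsc_spec hS, Multiset.length_sort]
  simp

lemma countP_eigAsc (hS : S.IsHermitian) (q : ℝ → Prop) [DecidablePred q] :
    (eigAsc S).countP (fun x => decide (q x)) = (univ.filter (fun i => q (hS.eigenvalues i))).card := by
  rw [eigAsc_spec hS]
  rw [← Multiset.coe_countP, Multiset.sort_eq, Multiset.countP_map]
  simp [Finset.card_filter, Finset.filter]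

lemma eigval_ge_of_count {j : ℕ} (hS : S.IsHermitian) (hj1 : 1 ≤ j) (hjN : j ≤ N) {c : ℝ}
    (h : j ≤ (univ.filter fun i => c ≤ hS.eigenvalues i).card) : c ≤ eigval S j := by
  have hlen : (eigAsc S).length = N := length_eigAsc hS
  have hp : N - j < (eigAsc S).length := by omega
  rw [eigval, List.getD_eq_getElem _ _ (by omega)]
  have hs : (eigAsc S).Pairwise (· ≤ ·) := by
    rw [eigAsc_spec hS]; exact Multiset.pairwise_sort _ _
  have := SL_ge hs hp (c := c) ?_
  · simpa [List.get_eq_getElem] using this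
  · rw [countP_eigAsc hS (fun x => c ≤ x)]
    omega

lemma eigval_le_of_count {kk : ℕ} (hS : S.IsHermitian) (hk1 : 1 ≤ kk) (hkN : kk ≤ N) {c : ℝ}
    (h : kk ≤ (univ.filter fun i => hS.eigenvalues i ≤ c).card) : eigval S (N - kk + 1) ≤ c := by
  have hlen : (eigAsc S).length = N := length_eigAsc hS
  have hidx : N - (N - kk + 1) = kk - 1 := by omega
  have hp : kk - 1 < (eigAsc S).length := by omega
  rw [eigval, hidx, List.getD_eq_getElem _ _ (by omega)]
  have hs : (eigAsc S).Pairwise (· ≤ ·) := by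
    rw [eigAsc_spec hS]; exact Multiset.pairwise_sort _ _
  have := SL_le hs hp (c := c) ?_
  · simpa [List.get_eq_getElem] using this
  · rw [countP_eigAsc hS (fun x => x ≤ c)]
    omega

lemma singval_count (hS : S.IsHermitian) {kk : ℕ} (hk1 : 1 ≤ kk) (hkm : kk ≤ N) :
    kk ≤ (univ.filter fun i => singval S kk ≤ |hS.eigenvalues i|).card := by
  have hspec : singAsc S = Multiset.sort (Multiset.map (fun i => |hS.eigenvalues i|) Finset.univ.val) (· ≤ ·) := by
    simp only [singAsc, dif_pos hS]
  have hlen : (singAsc S).length = N := by rw [hspec, Multiset.length_sort]; simp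
  have hsrt : (singAsc S).Pairwise (· ≤ ·) := by rw [hspec]; exact Multiset.pairwise_sort _ _
  have hp : N - kk < (singAsc S).length := by omega
  have hcount := SL_count hsrt hp
  have hval : singval S kk = (singAsc S).get ⟨N - kk, hp⟩ := by
    rw [singval, List.getD_eq_getElem _ _ (by omega)]
    simp [List.get_eq_getElem]
  rw [← hval] at hcount
  have hc : (singAsc S).countP (fun x => decide (singval S kk ≤ x))
      = (univ.filter (fun i => singval S kk ≤ |hS.eigenvalues i|)).card := by
    rw [hspec, ← Multiset.coe_countP, Multiset.sort_eq, Multiset.countP_map]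
    simp [Finset.card_filter, Finset.filter]
  rw [hc] at hcount
  omega



end CV
lemma trace_sq {N : ℕ} {S : Matrix (Fin N) (Fin N) ℝ} (hS : S.IsHermitian) :
    Matrix.trace (S * S) = ∑ i, hS.eigenvalues i ^ 2 := by
  have h1 : star (hS.eigenvectorUnitary : Matrix (Fin N) (Fin N) ℝ) * hS.eigenvectorUnitary = 1 :=
    Unitary.coe_star_mul_self hS.eigenvectorUnitary
  set U : Matrix (Fin N) (Fin N) ℝ := (hS.eigenvectorUnitary : Matrix (Fin N) (Fin N) ℝ)
  set D : Matrix (Fin N) (Fin N) ℝ := diagonal (RCLike.ofReal ∘ hS.eigenvalues) with hD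
  have e1 : S * S = U * (D * D) * star U := by
    conv_lhs => rw [show S = U*D*star U from hS.spectral_theorem]
    rw [show ((U*D*star U)*(U*D*star U) : Matrix (Fin N) (Fin N) ℝ)
        = U*D*(star U*U)*D*star U by noncomm_ring]
    rw [h1]
    noncomm_ring
  rw [e1, Matrix.trace_mul_cycle, ← Matrix.mul_assoc, h1, Matrix.one_mul]
  rw [hD, Matrix.diagonal_mul_diagonal, Matrix.trace_diagonal]
  exact Finset.sum_congr rfl (fun i _ => by simp [RCLike.ofReal]; ring)

lemma dot_sum {M : ℕ} {j : ℕ} (v : Fin M → ℝ) (w : Fin j → Fin M → ℝ) :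
    v ⬝ᵥ (∑ i, w i) = ∑ i, v ⬝ᵥ w i := by
  simp only [dotProduct, Finset.sum_apply, Finset.mul_sum]
  rw [Finset.sum_comm]

lemma li_of_orth {j M : ℕ} (f : Fin j → Fin M → ℝ) (h0 : ∀ i, 0 < f i ⬝ᵥ f i)
    (horth : ∀ i i', i ≠ i' → f i ⬝ᵥ f i' = 0) : LinearIndependent ℝ f := by
  rw [Fintype.linearIndependent_iff]
  intro g hg i
  have hdot := congrArg (fun z => f i ⬝ᵥ z) hg
  simp only [dotProduct_zero] at hdot
  rw [show (∑ i, g i • f i) = ∑ i, (g i • f i) from rfl, dot_sum] at hdot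
  have : ∀ i' ∈ univ, i' ≠ i → f i ⬝ᵥ (g i' • f i') = 0 := by
    intro i' _ hne
    rw [dotProduct_smul, horth i i' (Ne.symm hne), smul_zero]
  rw [Finset.sum_eq_single i (fun b _ hb => this b (mem_univ b) hb) (by simp)] at hdot
  rw [dotProduct_smul, smul_eq_mul] at hdot
  rcases mul_eq_zero.mp hdot with h | h
  · exact h
  · exact absurd h (ne_of_gt (h0 i))

noncomputable def K4 : Matrix (Fin 4) (Fin 4) ℝ :=
  !![1,1,-1,-1; 1,-1,-1,1; -1,-1,1,1; -1,1,1,-1]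

noncomputable def w4 (ε : Bool) : Fin 4 → ℝ :=
  if ε then ![1+Real.sqrt 2, 1, -1-Real.sqrt 2, -1] else ![1-Real.sqrt 2, 1, -1+Real.sqrt 2, -1]

lemma K4_symm (i j : Fin 4) : K4 j i = K4 i j := by
  fin_cases i <;> fin_cases j <;> norm_num [K4]

lemma K4_pm (i j : Fin 4) : K4 i j = 1 ∨ K4 i j = -1 := by
  fin_cases i <;> fin_cases j <;> norm_num [K4]

lemma K4_rowsum (i : Fin 4) : ∑ j, K4 i j = 0 := by
  fin_cases i <;> simp [K4, Fin.sum_univ_four] <;> norm_num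

lemma K4_mulVec_one : K4 *ᵥ (fun _ => (1:ℝ)) = 0 := by
  funext i
  simp only [Matrix.mulVec, dotProduct, mul_one, Pi.zero_apply]
  exact K4_rowsum i

lemma sqrt2_sq : Real.sqrt 2 * Real.sqrt 2 = 2 := Real.mul_self_sqrt (by norm_num)

lemma K4_mulVec_w4 (ε : Bool) :
    K4 *ᵥ w4 ε = ((if ε then 1 else -1) * (2 * Real.sqrt 2)) • w4 ε := by
  have h2 := sqrt2_sq
  cases ε <;> (funext i; fin_cases i) <;>
    simp [K4, w4, Matrix.mulVec, dotProduct, Fin.sum_univ_four, Matrix.cons_val_zero,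
      Matrix.cons_val_one] <;> nlinarith [h2]

lemma w4_sum (ε : Bool) : ∑ j, w4 ε j = 0 := by
  cases ε <;> simp [w4, Fin.sum_univ_four] <;> ring

lemma w4_dot_self (ε : Bool) : 0 < w4 ε ⬝ᵥ w4 ε := by
  have h2 := sqrt2_sq
  have h3 : Real.sqrt 2 < 2 := by nlinarith [Real.sqrt_nonneg 2]
  have h4 : (0:ℝ) ≤ Real.sqrt 2 := Real.sqrt_nonneg 2
  cases ε <;> simp [w4, dotProduct, Fin.sum_univ_four] <;> nlinarith

lemma w4_dot_opp (ε : Bool) : w4 ε ⬝ᵥ w4 (!ε) = 0 := by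
  have h2 := sqrt2_sq
  cases ε <;> simp [w4, dotProduct, Fin.sum_univ_four] <;> nlinarith

lemma w4_pm_sq (i : Fin 4) : True := trivial

def evq (m₀ t : ℕ) : Fin (4*m₀*t) ≃ Fin m₀ × Fin 4 × Fin t :=
  (finCongr (by ring)).trans ((finProdFinEquiv (m := m₀) (n := 4*t)).symm.trans
    ((Equiv.refl (Fin m₀)).prodCongr (finProdFinEquiv (m := 4) (n := t)).symm))

noncomputable def Bmat {m₀ : ℕ} (A₀ : Matrix (Fin m₀) (Fin m₀) ℝ) (t : ℕ) :
    Matrix (Fin (4*m₀*t)) (Fin (4*m₀*t)) ℝ :=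
  Matrix.of fun i j => A₀ (evq m₀ t i).1 (evq m₀ t j).1 * K4 (evq m₀ t i).2.1 (evq m₀ t j).2.1

noncomputable def tens {m₀ : ℕ} (t : ℕ) (v : Fin m₀ → ℝ) (w : Fin 4 → ℝ) :
    Fin (4*m₀*t) → ℝ :=
  fun i => v (evq m₀ t i).1 * w (evq m₀ t i).2.1

variable {m₀ t : ℕ}

lemma sum_evq (F : Fin m₀ × Fin 4 × Fin t → ℝ) :
    ∑ i : Fin (4*m₀*t), F (evq m₀ t i) = ∑ x, F x :=
  Fintype.sum_equiv (evq m₀ t) _ _ (fun _ => rfl)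

lemma factor3 (f : Fin m₀ → ℝ) (g : Fin 4 → ℝ) :
    ∑ x : Fin m₀ × Fin 4 × Fin t, f x.1 * g x.2.1 = (∑ a, f a) * (∑ b, g b) * t := by
  rw [Fintype.sum_prod_type]
  have inner : ∀ a : Fin m₀, ∑ y : Fin 4 × Fin t, f a * g y.1 = f a * ((∑ b, g b) * t) := by
    intro a
    rw [Fintype.sum_prod_type]
    simp only [Finset.sum_const, card_univ, Fintype.card_fin, nsmul_eq_mul]
    calc ∑ x : Fin 4, (t:ℝ)*(f a * g x) = ∑ x : Fin 4, ((t:ℝ) * f a) * g x := by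
          apply Finset.sum_congr rfl; intro b _; ring
      _ = ((t:ℝ) * f a) * ∑ x : Fin 4, g x := by rw [Finset.mul_sum]
      _ = f a * ((∑ b : Fin 4, g b) * t) := by ring
  rw [Finset.sum_congr rfl (fun a _ => inner a), ← Finset.sum_mul]
  ring

lemma sum_tens (v : Fin m₀ → ℝ) (w : Fin 4 → ℝ) :
    ∑ i, tens t v w i = (∑ a, v a) * (∑ b, w b) * t := by
  rw [show ∑ i, tens t v w i = ∑ i : Fin (4*m₀*t), (fun x : Fin m₀ × Fin 4 × Fin t => v x.1 * w x.2.1) (evq m₀ t i) from rfl,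
    sum_evq (fun x : Fin m₀ × Fin 4 × Fin t => v x.1 * w x.2.1), factor3]

lemma dot_tens (v v' : Fin m₀ → ℝ) (w w' : Fin 4 → ℝ) :
    tens t v w ⬝ᵥ tens t v' w' = (v ⬝ᵥ v') * (w ⬝ᵥ w') * t := by
  rw [dotProduct]
  rw [show ∑ i, tens t v w i * tens t v' w' i
      = ∑ i : Fin (4*m₀*t), (fun x : Fin m₀ × Fin 4 × Fin t => (v x.1 * v' x.1) * (w x.2.1 * w' x.2.1)) (evq m₀ t i) from by
        apply Finset.sum_congr rfl; intro i _; simp [tens]; ring,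
    sum_evq (fun x : Fin m₀ × Fin 4 × Fin t => (v x.1 * v' x.1) * (w x.2.1 * w' x.2.1)),
    factor3 (fun a => v a * v' a) (fun b => w b * w' b), dotProduct, dotProduct]

lemma Bmat_mulVec (A₀ : Matrix (Fin m₀) (Fin m₀) ℝ) (v : Fin m₀ → ℝ) (w : Fin 4 → ℝ) :
    Bmat A₀ t *ᵥ tens t v w
      = fun i => (A₀ *ᵥ v) (evq m₀ t i).1 * ((K4 *ᵥ w) (evq m₀ t i).2.1) * t := by
  funext i
  rw [Matrix.mulVec, dotProduct]
  rw [show ∑ j, Bmat A₀ t i j * tens t v w j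
      = ∑ j : Fin (4*m₀*t), (fun x : Fin m₀ × Fin 4 × Fin t =>
          (A₀ (evq m₀ t i).1 x.1 * v x.1) * (K4 (evq m₀ t i).2.1 x.2.1 * w x.2.1)) (evq m₀ t j) from by
        apply Finset.sum_congr rfl; intro j _; simp [Bmat, tens]; ring,
    sum_evq (fun x : Fin m₀ × Fin 4 × Fin t =>
      (A₀ (evq m₀ t i).1 x.1 * v x.1) * (K4 (evq m₀ t i).2.1 x.2.1 * w x.2.1)),
    factor3 (fun a => A₀ (evq m₀ t i).1 a * v a) (fun b => K4 (evq m₀ t i).2.1 b * w b)]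
  rw [Matrix.mulVec, Matrix.mulVec, dotProduct, dotProduct]
-- MAIN THEOREM PART (appended after helpers)

lemma adj_form {M : ℕ} (B : Matrix (Fin M) (Fin M) ℝ) (hBpm : ∀ i j, B i j = 1 ∨ B i j = -1)
    (G : SimpleGraph (Fin M)) [inst : DecidableRel G.Adj]
    (hGadj : ∀ i j, G.Adj i j ↔ i ≠ j ∧ B i j = -1) (x : Fin M → ℝ) :
    2*(x ⬝ᵥ (G.adjMatrix ℝ *ᵥ x)) =
      (∑ i, x i)^2 - x ⬝ᵥ x - x ⬝ᵥ (B *ᵥ x) + ∑ i, B i i * x i^2 := by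
  have hM : (G.adjMatrix ℝ) = (2⁻¹ : ℝ) •
      (Matrix.of (fun _ _ => (1:ℝ)) - 1 - B + Matrix.diagonal (fun i => B i i)) := by
    ext i j
    by_cases h : i = j
    · subst h
      simp [SimpleGraph.adjMatrix_apply, Matrix.diagonal_apply_eq, Matrix.one_apply_eq]
    · rcases hBpm i j with h1|h1 <;>
        simp [SimpleGraph.adjMatrix_apply, hGadj, h, h1, Matrix.diagonal_apply_ne _ h,
          Matrix.one_apply_ne h] <;> norm_num
  have hJ : x ⬝ᵥ ((Matrix.of fun _ _ => (1:ℝ)) *ᵥ x) = (∑ i, x i)^2 := by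
    simp only [Matrix.mulVec, dotProduct, Matrix.of_apply, one_mul]
    rw [← Finset.sum_mul]
    ring
  have hI : x ⬝ᵥ ((1 : Matrix (Fin M) (Fin M) ℝ) *ᵥ x) = x ⬝ᵥ x := by rw [Matrix.one_mulVec]
  have hD : x ⬝ᵥ (Matrix.diagonal (fun i => B i i) *ᵥ x) = ∑ i, B i i * x i^2 := by
    simp only [dotProduct, Matrix.mulVec_diagonal]
    exact Finset.sum_congr rfl (fun i _ => by ring)
  rw [hM, smul_mulVec, dotProduct_smul, Matrix.add_mulVec, Matrix.sub_mulVec,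
    Matrix.sub_mulVec, dotProduct_add, dotProduct_sub, dotProduct_sub, hJ, hI, hD]
  simp only [smul_eq_mul]
  ring

lemma adjMatrix_instirrel {M : ℕ} (G : SimpleGraph (Fin M)) (i1 i2 : DecidableRel G.Adj) :
    @SimpleGraph.adjMatrix ℝ (Fin M) G i1 _ _ = @SimpleGraph.adjMatrix ℝ (Fin M) G i2 _ _ := by
  ext i j
  by_cases h : G.Adj i j <;> simp [SimpleGraph.adjMatrix_apply, h]

lemma graphEig_eq {M : ℕ} (G : SimpleGraph (Fin M)) (inst : DecidableRel G.Adj) (j : ℕ) :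
    graphEig G j = eigval (@SimpleGraph.adjMatrix ℝ (Fin M) G inst _ _) j := by
  unfold graphEig
  congr 1
  apply adjMatrix_instirrel

lemma adj_isHermitian {M : ℕ} (G : SimpleGraph (Fin M)) [DecidableRel G.Adj] :
    (G.adjMatrix ℝ).IsHermitian := by
  rw [Matrix.IsHermitian, Matrix.conjTranspose_eq_transpose_of_trivial]
  exact (SimpleGraph.isSymm_adjMatrix G)

set_option maxHeartbeats 2000000 in
theorem stmt15 (k : ℕ) (hk : 1 ≤ k)
    (hS : ∃ m : ℕ, ∃ A : Matrix (Fin m) (Fin m) ℝ, memS k A) :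
    ∃ n : ℕ, k < n ∧ ∀ t : ℕ, 1 ≤ t →
      ∃ G : SimpleGraph (Fin (n * t)),
        graphEig G (k + 1) + graphEig Gᶜ (k + 1) ≥
          (n : ℝ) * t / Real.sqrt (2 * k) - 2 ∧
        |graphEig G (n * t - k + 1)| + |graphEig Gᶜ (n * t - k + 1)| ≥
          (n : ℝ) * t / Real.sqrt (2 * k) := by
  classical
  obtain ⟨m₀, A₀, hkm, hsymm, hpm, hsing⟩ := hS
  have hm₀ : 1 ≤ m₀ := le_trans hk hkm
  have hA₀ : A₀.IsHermitian := by
    rw [Matrix.IsHermitian, Matrix.conjTranspose_eq_transpose_of_trivial]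
    exact hsymm
  have hk0 : (0:ℝ) < (k:ℝ) := by exact_mod_cast hk
  have hsqk : (0:ℝ) < Real.sqrt k := Real.sqrt_pos.mpr hk0
  set c₀ : ℝ := (m₀:ℝ) / Real.sqrt k with hc₀def
  have hc₀nn : 0 ≤ c₀ := by positivity
  -- eigenvalues with magnitude c₀
  have hcount : k ≤ (Finset.univ.filter fun i => c₀ ≤ |hA₀.eigenvalues i|).card := by
    have := singval_count hA₀ hk hkm
    rwa [hsing] at this
  obtain ⟨K, hKsub, hKcard⟩ := Finset.exists_subset_card_eq hcount
  have htr : ∑ i, hA₀.eigenvalues i ^ 2 = (m₀:ℝ)^2 := by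
    rw [← trace_sq hA₀, Matrix.trace]
    have hdiag : ∀ i, (A₀*A₀).diag i = ∑ j, (A₀ i j)^2 := by
      intro i
      rw [Matrix.diag_apply, Matrix.mul_apply]
      refine Finset.sum_congr rfl (fun j _ => ?_)
      rw [show A₀ j i = A₀ i j from by
        conv_lhs => rw [← hsymm]
        rfl]
      ring
    rw [Finset.sum_congr rfl (fun i _ => hdiag i)]
    have h1 : ∀ i j : Fin m₀, (A₀ i j)^2 = 1 := by
      intro i j; rcases hpm i j with h|h <;> rw [h] <;> norm_num
    simp only [h1, Finset.sum_const, Finset.card_univ, Fintype.card_fin, nsmul_eq_mul, mul_one]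
    push_cast
    ring
  have hKval : ∀ i ∈ K, |hA₀.eigenvalues i| = c₀ := by
    have hmem : ∀ j ∈ K, c₀ ≤ |hA₀.eigenvalues j| := fun j hj =>
      (Finset.mem_filter.mp (hKsub hj)).2
    have hsq : ∀ j ∈ K, c₀^2 ≤ hA₀.eigenvalues j ^2 := by
      intro j hj
      have h := hmem j hj
      nlinarith [sq_abs (hA₀.eigenvalues j), abs_nonneg (hA₀.eigenvalues j)]
    have hsub : ∑ j ∈ K, hA₀.eigenvalues j ^2 ≤ (m₀:ℝ)^2 := by
      rw [← htr]
      exact Finset.sum_le_sum_of_subset_of_nonneg (Finset.subset_univ K)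
        (fun j _ _ => by positivity)
    have hc₀sq : (k:ℝ) * c₀^2 = (m₀:ℝ)^2 := by
      rw [hc₀def, div_pow, Real.sq_sqrt hk0.le]
      field_simp
    have hzero : ∑ j ∈ K, (hA₀.eigenvalues j ^2 - c₀^2) = 0 := by
      have hle : ∑ j ∈ K, (hA₀.eigenvalues j ^2 - c₀^2) ≤ 0 := by
        rw [Finset.sum_sub_distrib, Finset.sum_const, hKcard, nsmul_eq_mul]
        linarith
      have hge : (0:ℝ) ≤ ∑ j ∈ K, (hA₀.eigenvalues j ^2 - c₀^2) :=
        Finset.sum_nonneg (fun j hj => by linarith [hsq j hj])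
      linarith
    intro i hi
    have hz := (Finset.sum_eq_zero_iff_of_nonneg
      (fun j hj => by linarith [hsq j hj])).mp hzero i hi
    have : hA₀.eigenvalues i ^2 = c₀^2 := by linarith
    calc |hA₀.eigenvalues i| = Real.sqrt (hA₀.eigenvalues i ^2) := (Real.sqrt_sq_eq_abs _).symm
      _ = Real.sqrt (c₀^2) := by rw [this]
      _ = c₀ := Real.sqrt_sq hc₀nn
  -- the order
  refine ⟨4*m₀, by omega, ?_⟩
  intro t ht
  set N : ℕ := 4*m₀*t with hNdef
  have hNk : k + 1 ≤ N := by
    have : 4*k*1 ≤ 4*m₀*t := by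
      apply Nat.mul_le_mul _ ht
      omega
    omega
  have hNcast : ((N:ℕ):ℝ) = 4*(m₀:ℝ)*t := by push_cast [hNdef]; ring
  -- enumeration of K
  set σ : Fin k → Fin m₀ := fun i => ((K.equivFin.symm (Fin.cast hKcard.symm i)) : Fin m₀) with hσdef
  have hσK : ∀ i, σ i ∈ K := fun i => (K.equivFin.symm (Fin.cast hKcard.symm i)).2
  have hσinj : Function.Injective σ := by
    intro a b h
    have h1 : K.equivFin.symm (Fin.cast hKcard.symm a) = K.equivFin.symm (Fin.cast hKcard.symm b) :=
      Subtype.ext h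
    have h2 := K.equivFin.symm.injective h1
    exact Fin.cast_injective _ h2
  -- eigenvectors of A₀
  set vv : Fin k → (Fin m₀ → ℝ) := fun i => ⇑(hA₀.eigenvectorBasis (σ i)) with hvvdef
  have hAvv : ∀ i, A₀ *ᵥ vv i = hA₀.eigenvalues (σ i) • vv i :=
    fun i => hA₀.mulVec_eigenvectorBasis (σ i)
  have hvvdot : ∀ i j, vv i ⬝ᵥ vv j = if i = j then 1 else 0 := by
    intro i j
    have horth := hA₀.eigenvectorBasis.orthonormal
    rw [orthonormal_iff_ite] at horth
    have h1 := horth (σ i) (σ j)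
    rw [show (inner ℝ (hA₀.eigenvectorBasis (σ i)) (hA₀.eigenvectorBasis (σ j)) : ℝ)
        = vv i ⬝ᵥ vv j from ?_] at h1
    · rw [h1]
      by_cases h : i = j
      · simp [h]
      · have hss : ¬ σ i = σ j := fun hc => h (hσinj hc)
        simp [h, hss]
    · rw [PiLp.inner_apply]
      simp [dotProduct, hvvdef]
      exact Finset.sum_congr rfl (fun x _ => mul_comm _ _)
  -- the big matrix and vectors
  set B : Matrix (Fin N) (Fin N) ℝ := Bmat A₀ t with hBdef
  have hBpm : ∀ i j, B i j = 1 ∨ B i j = -1 := by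
    intro i j
    rcases hpm (evq m₀ t i).1 (evq m₀ t j).1 with h1|h1 <;>
      rcases K4_pm (evq m₀ t i).2.1 (evq m₀ t j).2.1 with h2|h2 <;>
        simp [hBdef, Bmat, h1, h2]
  have hBsymm : ∀ i j, B j i = B i j := by
    intro i j
    show Bmat A₀ t j i = Bmat A₀ t i j
    unfold Bmat
    simp only [Matrix.of_apply]
    rw [K4_symm, show A₀ (evq m₀ t j).1 (evq m₀ t i).1 = A₀ (evq m₀ t i).1 (evq m₀ t j).1 from by
      conv_lhs => rw [← hsymm]
      rfl]
  set eps : Fin k → Bool := fun i => decide (0 ≤ hA₀.eigenvalues (σ i)) with hepsdef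
  set uu : Fin k → (Fin N → ℝ) := fun i => tens t (vv i) (w4 (eps i)) with huudef
  set un : Fin k → (Fin N → ℝ) := fun i => tens t (vv i) (w4 (!(eps i))) with hundef
  set ee : Fin N → ℝ := fun _ => 1 with heedef
  set s : ℝ := ((N:ℕ):ℝ) / Real.sqrt (2*k) with hsdef
  have hsq2 : Real.sqrt 2 * Real.sqrt 2 = 2 := Real.mul_self_sqrt (by norm_num)
  have hsq2pos : 0 < Real.sqrt 2 := Real.sqrt_pos.mpr (by norm_num)
  have hsqrt2k : Real.sqrt (2*k) = Real.sqrt 2 * Real.sqrt k := Real.sqrt_mul (by norm_num) _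
  have harith : c₀ * (2*Real.sqrt 2) * t = s := by
    rw [hsdef, hNcast, hsqrt2k, hc₀def]
    field_simp
    linear_combination 2 * hsq2
  have htpos : (0:ℝ) < t := by exact_mod_cast ht
  have hs0 : 0 ≤ s := by
    rw [← harith]; positivity
  have hsN : s ≤ ((N:ℕ):ℝ) := by
    rw [hsdef]
    apply div_le_self (by positivity)
    rw [hsqrt2k]
    nlinarith [Real.sqrt_le_sqrt (show (1:ℝ) ≤ k by exact_mod_cast hk), Real.sqrt_one,
      Real.sqrt_nonneg (k:ℝ), hsq2pos]
  -- eigen equations for B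
  have habs : ∀ i : Fin k, |hA₀.eigenvalues (σ i)| = c₀ := fun i => hKval _ (hσK i)
  have hw4e : ∀ ε : Bool, K4 *ᵥ w4 ε = ((if ε then 1 else -1) * (2 * Real.sqrt 2)) • w4 ε :=
    K4_mulVec_w4
  have hBtens : ∀ (i : Fin k) (ε : Bool),
      B *ᵥ tens t (vv i) (w4 ε) =
        (hA₀.eigenvalues (σ i) * ((if ε then 1 else -1) * (2 * Real.sqrt 2)) * t) •
          tens t (vv i) (w4 ε) := by
    intro i ε
    rw [hBdef, Bmat_mulVec]
    funext x
    rw [hAvv i, hw4e ε]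
    simp only [Pi.smul_apply, smul_eq_mul, tens]
    ring
  have hBuu : ∀ i, B *ᵥ uu i = s • uu i := by
    intro i
    rw [huudef]
    rw [hBtens i (eps i)]
    congr 1
    rw [← harith]
    have habsi := habs i
    by_cases h : 0 ≤ hA₀.eigenvalues (σ i)
    · have heps : eps i = true := by simp [hepsdef, h]
      rw [abs_of_nonneg h] at habsi
      rw [heps, if_pos rfl, habsi]
      ring
    · have heps : eps i = false := by simp [hepsdef, h]
      rw [abs_of_neg (not_le.mp h)] at habsi
      rw [heps]
      simp only [Bool.false_eq_true, if_false]
      rw [← habsi]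
      ring
  have hBun : ∀ i, B *ᵥ un i = (-s) • un i := by
    intro i
    rw [hundef]
    rw [hBtens i (!(eps i))]
    congr 1
    rw [← harith]
    have habsi := habs i
    by_cases h : 0 ≤ hA₀.eigenvalues (σ i)
    · have heps : eps i = true := by simp [hepsdef, h]
      rw [abs_of_nonneg h] at habsi
      rw [heps]
      simp only [Bool.not_true, Bool.false_eq_true, if_false]
      rw [habsi]
      ring
    · have heps : eps i = false := by simp [hepsdef, h]
      rw [abs_of_neg (not_le.mp h)] at habsi
      rw [heps]
      simp only [Bool.not_false, if_true]
      rw [← habsi]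
      ring
  have hBee : B *ᵥ ee = 0 := by
    have h1 : ee = tens t (fun _ => 1) (fun _ => 1) := by
      funext i; simp [heedef, tens]
    rw [h1, hBdef, Bmat_mulVec]
    funext i
    rw [K4_mulVec_one]
    simp
  -- dot products
  have hwpos : ∀ ε, 0 < w4 ε ⬝ᵥ w4 ε := w4_dot_self
  have huu_self : ∀ (i : Fin k) (ε : Bool), 0 < tens t (vv i) (w4 ε) ⬝ᵥ tens t (vv i) (w4 ε) := by
    intro i ε
    rw [dot_tens, hvvdot]
    have := mul_pos (hwpos ε) htpos
    simpa using this
  have htens_orth : ∀ (i j : Fin k) (ε ε' : Bool), i ≠ j →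
      tens t (vv i) (w4 ε) ⬝ᵥ tens t (vv j) (w4 ε') = 0 := by
    intro i j ε ε' hne
    rw [dot_tens, hvvdot]
    simp [hne]
  have hee_tens : ∀ (i : Fin k) (ε : Bool), ee ⬝ᵥ tens t (vv i) (w4 ε) = 0 := by
    intro i ε
    have h1 : ee ⬝ᵥ tens t (vv i) (w4 ε) = ∑ x, tens t (vv i) (w4 ε) x := by
      simp [dotProduct, heedef]
      rfl
    rw [h1, sum_tens, w4_sum]
    ring
  have hee_self : ee ⬝ᵥ ee = ((N:ℕ):ℝ) := by
    simp [dotProduct, heedef]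
  have heeN : (0:ℝ) < ((N:ℕ):ℝ) := by
    rw [hNcast]; positivity
  -- the graph
  set G : SimpleGraph (Fin N) :=
    { Adj := fun i j => i ≠ j ∧ B i j = -1
      symm := by
        constructor
        intro i j h
        exact ⟨Ne.symm h.1, by rw [hBsymm]; exact h.2⟩
      loopless := ⟨fun i h => h.1 rfl⟩ } with hGdef
  have instG : DecidableRel G.Adj := Classical.decRel _
  have instGc : DecidableRel Gᶜ.Adj := Classical.decRel _
  have hGadj : ∀ i j, G.Adj i j ↔ i ≠ j ∧ B i j = -1 := fun i j => Iff.rfl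
  have hGcadj : ∀ i j, Gᶜ.Adj i j ↔ i ≠ j ∧ (-B) i j = -1 := by
    intro i j
    rw [SimpleGraph.compl_adj]
    constructor
    · rintro ⟨hne, hnadj⟩
      refine ⟨hne, ?_⟩
      rcases hBpm i j with h|h
      · simp [Matrix.neg_apply, h]
      · exact absurd ⟨hne, h⟩ hnadj
    · rintro ⟨hne, hB1⟩
      refine ⟨hne, fun hadj => ?_⟩
      rw [Matrix.neg_apply] at hB1
      have : B i j = 1 := by linarith [neg_eq_iff_eq_neg.mp hB1]
      rw [hadj.2] at this
      norm_num at this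
  have hnBpm : ∀ i j, (-B) i j = 1 ∨ (-B) i j = -1 := by
    intro i j
    rcases hBpm i j with h|h <;> simp [Matrix.neg_apply, h]
  have hermG : ((@SimpleGraph.adjMatrix ℝ (Fin N) G instG _ _)).IsHermitian := @adj_isHermitian N G instG
  have hermGc : ((@SimpleGraph.adjMatrix ℝ (Fin N) Gᶜ instGc _ _)).IsHermitian := @adj_isHermitian N Gᶜ instGc
  -- quadratic form bounds: part 1 (k+1 dimensional)
  -- family for G : un + ee ; family for Gᶜ : uu + ee
  have hDle : ∀ (C : Matrix (Fin N) (Fin N) ℝ), (∀ i j, C i j = 1 ∨ C i j = -1) →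
      ∀ x : Fin N → ℝ, (∑ i, C i i * x i^2 ≤ x ⬝ᵥ x ∧ -(x ⬝ᵥ x) ≤ ∑ i, C i i * x i^2) := by
    intro C hCpm x
    have hxx : x ⬝ᵥ x = ∑ i, x i * x i := rfl
    constructor
    · rw [hxx]
      apply Finset.sum_le_sum
      intro i _
      rcases hCpm i i with h|h <;> rw [h] <;> nlinarith [sq_nonneg (x i)]
    · rw [hxx, ← Finset.sum_neg_distrib]
      apply Finset.sum_le_sum
      intro i _
      rcases hCpm i i with h|h <;> rw [h] <;> nlinarith [sq_nonneg (x i)]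
  have hmulVec_sum : ∀ (C : Matrix (Fin N) (Fin N) ℝ) (g : Fin k → Fin N → ℝ),
      C *ᵥ (∑ i, g i) = ∑ i, C *ᵥ (g i) := by
    intro C g
    rw [show C *ᵥ (∑ i, g i) = Matrix.mulVecLin C (∑ i, g i) from rfl, map_sum]
    exact Finset.sum_congr rfl (fun i _ => rfl)
  -- generic main lemmas
  have main1 : ∀ (C : Matrix (Fin N) (Fin N) ℝ), (∀ i j, C i j = 1 ∨ C i j = -1) →
      ∀ (H : SimpleGraph (Fin N)) (instH : DecidableRel H.Adj),
      (∀ i j, H.Adj i j ↔ i ≠ j ∧ C i j = -1) →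
      ∀ (gg : Fin k → Fin N → ℝ),
      (∀ i, C *ᵥ gg i = (-s) • gg i) →
      (C *ᵥ ee = 0) →
      (∀ i, ee ⬝ᵥ gg i = 0) →
      (∀ i, 0 < gg i ⬝ᵥ gg i) →
      (∀ i i', i ≠ i' → gg i ⬝ᵥ gg i' = 0) →
      (s-2)/2 ≤ eigval (@SimpleGraph.adjMatrix ℝ (Fin N) H instH _ _) (k+1) := by
    intro C hCpm H instH hHadj gg hCg hCee heg hgpos hgorth
    have hermH : (@SimpleGraph.adjMatrix ℝ (Fin N) H instH _ _).IsHermitian := @adj_isHermitian N H instH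
    set f1 : Fin (k+1) → (Fin N → ℝ) := Fin.snoc gg ee with hf1
    have hli : LinearIndependent ℝ f1 := by
      apply li_of_orth
      · intro i
        rcases Fin.eq_castSucc_or_eq_last i with ⟨j, rfl⟩ | rfl
        · simpa [hf1, Fin.snoc_castSucc] using hgpos j
        · simp only [hf1, Fin.snoc_last]
          rw [hee_self]
          exact heeN
      · intro i i' hne
        rcases Fin.eq_castSucc_or_eq_last i with ⟨j, rfl⟩ | rfl <;>
          rcases Fin.eq_castSucc_or_eq_last i' with ⟨j', rfl⟩ | rfl
        · simp only [hf1, Fin.snoc_castSucc]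
          exact hgorth j j' (fun h => hne (by rw [h]))
        · simp only [hf1, Fin.snoc_castSucc, Fin.snoc_last]
          rw [dotProduct_comm]
          exact heg j
        · simp only [hf1, Fin.snoc_castSucc, Fin.snoc_last]
          exact heg j'
        · exact absurd rfl hne
    have hform : ∀ a : Fin (k+1) → ℝ,
        ((s-2)/2) * ((∑ i, a i • f1 i) ⬝ᵥ (∑ i, a i • f1 i)) ≤
          (∑ i, a i • f1 i) ⬝ᵥ ((@SimpleGraph.adjMatrix ℝ (Fin N) H instH _ _) *ᵥ (∑ i, a i • f1 i)) := by
      intro a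
      set p : Fin N → ℝ := ∑ i : Fin k, a i.castSucc • gg i with hp
      set α : ℝ := a (Fin.last k) with hα
      have hxdec : ∑ i, a i • f1 i = p + α • ee := by
        rw [Fin.sum_univ_castSucc]
        simp only [hf1, Fin.snoc_castSucc, Fin.snoc_last]
        rfl
      rw [hxdec]
      have hBp : C *ᵥ p = (-s) • p := by
        rw [hp, hmulVec_sum C (fun i => a i.castSucc • gg i), Finset.smul_sum]
        apply Finset.sum_congr rfl
        intro i _
        rw [Matrix.mulVec_smul, hCg i, smul_comm]
      have hep : ee ⬝ᵥ p = 0 := by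
        rw [hp, dot_sum]
        apply Finset.sum_eq_zero
        intro i _
        rw [dotProduct_smul, heg i, smul_zero]
      have hpp : 0 ≤ p ⬝ᵥ p := Finset.sum_nonneg (fun i _ => mul_self_nonneg _)
      have hpe : p ⬝ᵥ ee = 0 := by rw [dotProduct_comm]; exact hep
      have hBx : C *ᵥ (p + α • ee) = (-s) • p := by
        rw [Matrix.mulVec_add, Matrix.mulVec_smul, hCee, smul_zero, add_zero, hBp]
      have hxBx : (p + α • ee) ⬝ᵥ (C *ᵥ (p + α • ee)) = -s * (p ⬝ᵥ p) := by
        rw [hBx, dotProduct_smul, smul_eq_mul, add_dotProduct, smul_dotProduct, hep,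
          smul_eq_mul, mul_zero, add_zero]
      have hsumx : ∑ i, (p + α • ee) i = α * ((N:ℕ):ℝ) := by
        have h1 : ∑ i, (p + α • ee) i = ee ⬝ᵥ (p + α • ee) := by simp [dotProduct, heedef]
        rw [h1, dotProduct_add, hep, dotProduct_smul, hee_self, zero_add, smul_eq_mul]
      have hxx : (p + α • ee) ⬝ᵥ (p + α • ee) = p ⬝ᵥ p + α^2 * ((N:ℕ):ℝ) := by
        rw [dotProduct_add, add_dotProduct, add_dotProduct, dotProduct_smul,
          smul_dotProduct, smul_dotProduct, hep, hpe, dotProduct_smul, hee_self]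
        simp only [smul_eq_mul, mul_zero, zero_add, add_zero]
        ring
      have hformula := adj_form C hCpm H (inst := instH) hHadj (p + α • ee)
      have hD := (hDle C hCpm (p + α • ee))
      have hkey : α^2 * ((N:ℕ):ℝ) * s ≤ α^2 * ((N:ℕ):ℝ) * ((N:ℕ):ℝ) :=
        mul_le_mul_of_nonneg_left hsN (by positivity)
      rw [hxBx, hsumx, hxx] at hformula
      rw [hxx]
      nlinarith [hformula, hD.1, hD.2, hxx, hpp, hkey, sq_nonneg α,
        mul_nonneg (sq_nonneg α) heeN.le]
    have hcount2 := core_count_ge hermH ((s-2)/2) f1 hli hform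
    exact eigval_ge_of_count hermH (by omega) hNk hcount2
  have main2 : ∀ (C : Matrix (Fin N) (Fin N) ℝ), (∀ i j, C i j = 1 ∨ C i j = -1) →
      ∀ (H : SimpleGraph (Fin N)) (instH : DecidableRel H.Adj),
      (∀ i j, H.Adj i j ↔ i ≠ j ∧ C i j = -1) →
      ∀ (gg : Fin k → Fin N → ℝ),
      (∀ i, C *ᵥ gg i = s • gg i) →
      (∀ i, ee ⬝ᵥ gg i = 0) →
      (∀ i, 0 < gg i ⬝ᵥ gg i) →
      (∀ i i', i ≠ i' → gg i ⬝ᵥ gg i' = 0) →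
      eigval (@SimpleGraph.adjMatrix ℝ (Fin N) H instH _ _) (N - k + 1) ≤ -s/2 := by
    intro C hCpm H instH hHadj gg hCg heg hgpos hgorth
    have hermH : (@SimpleGraph.adjMatrix ℝ (Fin N) H instH _ _).IsHermitian := @adj_isHermitian N H instH
    have hli : LinearIndependent ℝ gg := li_of_orth gg hgpos hgorth
    have hform : ∀ a : Fin k → ℝ,
        (∑ i, a i • gg i) ⬝ᵥ ((@SimpleGraph.adjMatrix ℝ (Fin N) H instH _ _) *ᵥ (∑ i, a i • gg i)) ≤
          (-s/2) * ((∑ i, a i • gg i) ⬝ᵥ (∑ i, a i • gg i)) := by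
      intro a
      set x : Fin N → ℝ := ∑ i : Fin k, a i • gg i with hx
      have hBx : C *ᵥ x = s • x := by
        rw [hx, hmulVec_sum C (fun i => a i • gg i), Finset.smul_sum]
        apply Finset.sum_congr rfl
        intro i _
        rw [Matrix.mulVec_smul, hCg i, smul_comm]
      have hex : ee ⬝ᵥ x = 0 := by
        rw [hx, dot_sum]
        apply Finset.sum_eq_zero
        intro i _
        rw [dotProduct_smul, heg i, smul_zero]
      have hxx0 : 0 ≤ x ⬝ᵥ x := Finset.sum_nonneg (fun i _ => mul_self_nonneg _)
      have hxBx : x ⬝ᵥ (C *ᵥ x) = s * (x ⬝ᵥ x) := by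
        rw [hBx, dotProduct_smul, smul_eq_mul]
      have hsumx : ∑ i, x i = 0 := by
        have h1 : ∑ i, x i = ee ⬝ᵥ x := by simp [dotProduct, heedef]
        rw [h1, hex]
      have hformula := adj_form C hCpm H (inst := instH) hHadj x
      have hD := (hDle C hCpm x)
      rw [hxBx, hsumx] at hformula
      nlinarith [hformula, hD.1, hD.2, hxx0]
    have hcount2 := core_count_le hermH (-s/2) gg hli hform
    exact eigval_le_of_count hermH hk (by omega) hcount2
  -- apply to our graphs
  have hnBee : (-B) *ᵥ ee = 0 := by rw [Matrix.neg_mulVec, hBee, neg_zero]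
  have hnBuu : ∀ i, (-B) *ᵥ uu i = (-s) • uu i := by
    intro i
    rw [Matrix.neg_mulVec, hBuu i, ← neg_smul]
  have hnBun : ∀ i, (-B) *ᵥ un i = s • un i := by
    intro i
    rw [Matrix.neg_mulVec, hBun i, ← neg_smul, neg_neg]
  have hun_pos : ∀ i, 0 < un i ⬝ᵥ un i := fun i => huu_self i _
  have huu_pos : ∀ i, 0 < uu i ⬝ᵥ uu i := fun i => huu_self i _
  have hun_orth : ∀ i i', i ≠ i' → un i ⬝ᵥ un i' = 0 := fun i i' h => htens_orth i i' _ _ h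
  have huu_orth : ∀ i i', i ≠ i' → uu i ⬝ᵥ uu i' = 0 := fun i i' h => htens_orth i i' _ _ h
  have hee_un : ∀ i, ee ⬝ᵥ un i = 0 := fun i => hee_tens i _
  have hee_uu : ∀ i, ee ⬝ᵥ uu i = 0 := fun i => hee_tens i _
  have g1 := main1 B hBpm G instG hGadj un hBun hBee hee_un hun_pos hun_orth
  have g2 := main1 (-B) hnBpm Gᶜ instGc hGcadj uu hnBuu hnBee hee_uu huu_pos huu_orth
  have g3 := main2 B hBpm G instG hGadj uu hBuu hee_uu huu_pos huu_orth
  have g4 := main2 (-B) hnBpm Gᶜ instGc hGcadj un hnBun hee_un hun_pos hun_orth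
  refine ⟨G, ?_, ?_⟩
  · rw [ge_iff_le, graphEig_eq G instG, graphEig_eq Gᶜ instGc]
    have hsgoal : ((4*m₀:ℕ):ℝ) * (t:ℝ) / Real.sqrt (2*(k:ℝ)) = s := by
      rw [hsdef, hNcast]
      push_cast
      ring
    rw [hsgoal]
    linarith [g1, g2]
  · rw [ge_iff_le, graphEig_eq G instG, graphEig_eq Gᶜ instGc]
    have hsgoal : ((4*m₀:ℕ):ℝ) * (t:ℝ) / Real.sqrt (2*(k:ℝ)) = s := by
      rw [hsdef, hNcast]
      push_cast
      ring
    rw [hsgoal]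
    have a3 : s/2 ≤ |eigval (@SimpleGraph.adjMatrix ℝ (Fin N) G instG _ _) (N - k + 1)| := by
      have := neg_le_abs (eigval (@SimpleGraph.adjMatrix ℝ (Fin N) G instG _ _) (N - k + 1))
      linarith [g3]
    have a4 : s/2 ≤ |eigval (@SimpleGraph.adjMatrix ℝ (Fin N) Gᶜ instGc _ _) (N - k + 1)| := by
      have := neg_le_abs (eigval (@SimpleGraph.adjMatrix ℝ (Fin N) Gᶜ instGc _ _) (N - k + 1))
      linarith [g4]
    linarith [a3, a4]
end

section
/- Let k ≥ 1 and suppose the class S_k is nonempty. Then there exists an integer n > k such that for every integer t ≥ 1 there is a finite simple graph G of order nt satisfying λ_{k+1}*(G) + λ_{k+1}*(Ḡ) ≥ nt/√k − 2, where Ḡ is the complement of G. -/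
open Matrix BigOperators

namespace S16


lemma singAsc_eq {N : ℕ} {A : Matrix (Fin N) (Fin N) ℝ} (hA : A.IsHermitian) :
    singAsc A = (Finset.univ.val.map (fun i => |hA.eigenvalues i|)).sort (· ≤ ·) := by
  unfold singAsc
  rw [dif_pos hA]

lemma singAsc_length {N : ℕ} {A : Matrix (Fin N) (Fin N) ℝ} (hA : A.IsHermitian) :
    (singAsc A).length = N := by
  rw [singAsc_eq hA, Multiset.length_sort, Multiset.card_map]
  simp

lemma singAsc_sorted {N : ℕ} {A : Matrix (Fin N) (Fin N) ℝ} (hA : A.IsHermitian) :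
    (singAsc A).Pairwise (· ≤ ·) := by
  rw [singAsc_eq hA]
  exact Multiset.pairwise_sort _ _

lemma singAsc_filter_length {N : ℕ} {A : Matrix (Fin N) (Fin N) ℝ} (hA : A.IsHermitian) (c : ℝ) :
    ((singAsc A).filter (fun a => decide (c ≤ a))).length
      = (Finset.univ.filter (fun i => c ≤ |hA.eigenvalues i|)).card := by
  classical
  rw [singAsc_eq hA]
  have h1 : (((Finset.univ.val.map (fun i => |hA.eigenvalues i|)).sort (· ≤ ·)).filter
      (fun a => decide (c ≤ a))).length
      = Multiset.card ((Finset.univ.val.map (fun i => |hA.eigenvalues i|)).filter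
        (fun a => c ≤ a)) := by
    rw [← Multiset.coe_card, ← Multiset.filter_coe, Multiset.sort_eq]
  rw [h1, Multiset.filter_map, Multiset.card_map, Finset.card_def, Finset.filter_val]
  exact congrArg _ (Multiset.filter_congr (fun x _ => Iff.rfl))

lemma sorted_getD_ge {l : List ℝ} (hl : l.Pairwise (· ≤ ·)) {c : ℝ} {r : ℕ}
    (hr : 1 ≤ r) (hcount : r ≤ (l.filter (fun a => decide (c ≤ a))).length) :
    c ≤ l.getD (l.length - r) 0 := by
  by_contra hcon
  push_neg at hcon
  have hrlen : r ≤ l.length := le_trans hcount (List.length_filter_le _ _)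
  set i := l.length - r with hi
  have hilt : i < l.length := by omega
  have hgd : l.getD i 0 = l.get ⟨i, hilt⟩ := by
    rw [List.getD_eq_getElem l 0 hilt]; rfl
  rw [hgd] at hcon
  -- all elements of take (i+1) are < c
  have htake : ∀ x ∈ l.take (i+1), ¬ (c ≤ x) := by
    intro x hx
    obtain ⟨j, hj, hget⟩ := List.mem_iff_getElem.1 hx
    have hj' : j < i + 1 := lt_of_lt_of_le hj (by simp [List.length_take])
    have hjl : j < l.length := by omega
    have : l[j] ≤ l.get ⟨i, hilt⟩ := by
      have := hl.rel_get_of_le (a := ⟨j, hjl⟩) (b := ⟨i, hilt⟩) (by simp; omega)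
      simpa using this
    have hxle : x ≤ l.get ⟨i, hilt⟩ := by
      rw [← hget]; simpa [List.getElem_take] using this
    exact fun hc => absurd (le_trans hc hxle) (not_le.2 hcon)
  have hsplit : l = l.take (i+1) ++ l.drop (i+1) := (List.take_append_drop _ _).symm
  have hflen : (l.filter (fun a => decide (c ≤ a))).length
      ≤ (l.drop (i+1)).length := by
    conv_lhs => rw [hsplit]
    rw [List.filter_append, List.length_append]
    have h0 : (l.take (i+1)).filter (fun a => decide (c ≤ a)) = [] := by
      rw [List.filter_eq_nil_iff]
      intro a ha
      simpa using htake a ha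
    rw [h0]
    have h2 := List.length_filter_le (fun a => decide (c ≤ a)) (l.drop (i+1))
    rw [List.length_drop] at h2
    simpa using h2
  rw [List.length_drop] at hflen
  omega

lemma sorted_count_ge {l : List ℝ} (hl : l.Pairwise (· ≤ ·)) {c : ℝ} {r : ℕ}
    (hr : 1 ≤ r) (hrl : r ≤ l.length) (hc : c ≤ l.getD (l.length - r) 0) :
    r ≤ (l.filter (fun a => decide (c ≤ a))).length := by
  set i := l.length - r with hi
  have hilt : i < l.length := by omega
  have hgd : l.getD i 0 = l.get ⟨i, hilt⟩ := by
    rw [List.getD_eq_getElem l 0 hilt]; rfl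
  rw [hgd] at hc
  have hdrop : ∀ x ∈ l.drop i, c ≤ x := by
    intro x hx
    obtain ⟨j, hj, hget⟩ := List.mem_iff_getElem.1 hx
    rw [List.length_drop] at hj
    have hjl : i + j < l.length := by omega
    have h1 : l.get ⟨i, hilt⟩ ≤ l[i+j] := by
      have := hl.rel_get_of_le (a := ⟨i, hilt⟩) (b := ⟨i+j, hjl⟩) (by simp)
      simpa using this
    have : x = l[i+j] := by rw [← hget]; simp [List.getElem_drop]
    rw [this]
    exact le_trans hc h1
  have hsplit : l = l.take i ++ l.drop i := (List.take_append_drop _ _).symm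
  have : (l.filter (fun a => decide (c ≤ a))).length
      ≥ ((l.drop i).filter (fun a => decide (c ≤ a))).length := by
    conv_lhs => rw [hsplit]
    rw [List.filter_append, List.length_append]
    omega
  have hall : (l.drop i).filter (fun a => decide (c ≤ a)) = l.drop i := by
    rw [List.filter_eq_self]
    intro a ha
    simpa using hdrop a ha
  rw [hall, List.length_drop] at this
  omega

lemma singval_ge {N : ℕ} {A : Matrix (Fin N) (Fin N) ℝ} (hA : A.IsHermitian)
    {c : ℝ} {r : ℕ} (hr : 1 ≤ r)
    (hcard : r ≤ (Finset.univ.filter (fun i => c ≤ |hA.eigenvalues i|)).card) :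
    c ≤ singval A r := by
  classical
  have := sorted_getD_ge (singAsc_sorted hA) hr
    (by rw [singAsc_filter_length hA]; exact hcard)
  rwa [singAsc_length hA] at this

lemma le_card_of_singval {N : ℕ} {A : Matrix (Fin N) (Fin N) ℝ} (hA : A.IsHermitian)
    {c : ℝ} {r : ℕ} (hr : 1 ≤ r) (hrN : r ≤ N) (hv : c ≤ singval A r) :
    r ≤ (Finset.univ.filter (fun i => c ≤ |hA.eigenvalues i|)).card := by
  classical
  rw [← singAsc_filter_length hA]
  refine sorted_count_ge (singAsc_sorted hA) hr (by rw [singAsc_length hA]; exact hrN) ?_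
  rwa [singAsc_length hA]

lemma singval_nonneg {N : ℕ} (A : Matrix (Fin N) (Fin N) ℝ) (r : ℕ) :
    0 ≤ singval A r := by
  classical
  unfold singval
  by_cases hA : A.IsHermitian
  · by_cases hlen : N - r < (singAsc A).length
    · rw [List.getD_eq_getElem _ 0 hlen]
      have hall : ∀ x ∈ singAsc A, (0:ℝ) ≤ x := by
        intro x hx
        rw [singAsc_eq hA, ← Multiset.mem_coe, Multiset.sort_eq] at hx
        obtain ⟨i, _, hieq⟩ := Multiset.mem_map.1 hx
        rw [← hieq]
        positivity
      exact hall _ (List.getElem_mem _)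
    · rw [List.getD_eq_default _ 0 (not_lt.1 hlen)]
  · unfold singAsc
    rw [dif_neg hA]
    simp [List.getD]



variable {N : ℕ}

lemma dot_mv (M : Matrix (Fin N) (Fin N) ℝ) (x z : Fin N → ℝ) :
    (M *ᵥ x) ⬝ᵥ z = x ⬝ᵥ (Mᵀ *ᵥ z) := by
  simp only [dotProduct, mulVec, dotProduct, transpose_apply, Finset.sum_mul, Finset.mul_sum]
  rw [Finset.sum_comm]
  apply Finset.sum_congr rfl
  intro i _
  apply Finset.sum_congr rfl
  intro j _
  ring

lemma sum_dot (r : ℕ) (a : Fin r → ℝ) (w : Fin r → (Fin N → ℝ)) (z : Fin N → ℝ) :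
    (∑ i, a i • w i) ⬝ᵥ z = ∑ i, a i * (w i ⬝ᵥ z) := by
  simp only [dotProduct, Finset.sum_apply, Pi.smul_apply, smul_eq_mul, Finset.sum_mul,
    Finset.mul_sum]
  rw [Finset.sum_comm]
  apply Finset.sum_congr rfl
  intro i _
  apply Finset.sum_congr rfl
  intro j _
  ring

section Spectral

variable {A : Matrix (Fin N) (Fin N) ℝ} (hA : A.IsHermitian)

lemma UtU : ((hA.eigenvectorUnitary : Matrix (Fin N) (Fin N) ℝ))ᵀ
    * (hA.eigenvectorUnitary : Matrix (Fin N) (Fin N) ℝ) = 1 := by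
  have := Matrix.mem_unitaryGroup_iff'.mp (hA.eigenvectorUnitary).2
  rwa [Matrix.star_eq_conjTranspose, Matrix.conjTranspose_eq_transpose_of_trivial] at this

lemma UUt : (hA.eigenvectorUnitary : Matrix (Fin N) (Fin N) ℝ)
    * ((hA.eigenvectorUnitary : Matrix (Fin N) (Fin N) ℝ))ᵀ = 1 := by
  have := Matrix.mem_unitaryGroup_iff.mp (hA.eigenvectorUnitary).2
  rwa [Matrix.star_eq_conjTranspose, Matrix.conjTranspose_eq_transpose_of_trivial] at this

lemma specthm : A = (hA.eigenvectorUnitary : Matrix (Fin N) (Fin N) ℝ)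
    * diagonal hA.eigenvalues * ((hA.eigenvectorUnitary : Matrix (Fin N) (Fin N) ℝ))ᵀ := by
  have := hA.spectral_theorem
  rwa [Unitary.conjStarAlgAut_apply, Matrix.star_eq_conjTranspose, Matrix.conjTranspose_eq_transpose_of_trivial,
    show (RCLike.ofReal ∘ hA.eigenvalues : Fin N → ℝ) = hA.eigenvalues by ext i; simp] at this

/-- Parseval-type identity. -/
lemma dot_self_eq (x : Fin N → ℝ) :
    x ⬝ᵥ x = ∑ i, ((((hA.eigenvectorUnitary : Matrix (Fin N) (Fin N) ℝ))ᵀ *ᵥ x) i)^2 := by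
  set U := (hA.eigenvectorUnitary : Matrix (Fin N) (Fin N) ℝ)
  have h1 : (Uᵀ *ᵥ x) ⬝ᵥ (Uᵀ *ᵥ x) = x ⬝ᵥ x := by
    rw [dot_mv, transpose_transpose, mulVec_mulVec, UUt hA, one_mulVec]
  rw [← h1]
  simp [dotProduct, sq]

lemma dot_Amul_self_eq (x : Fin N → ℝ) :
    (A *ᵥ x) ⬝ᵥ (A *ᵥ x) = ∑ i, (hA.eigenvalues i)^2
      * ((((hA.eigenvectorUnitary : Matrix (Fin N) (Fin N) ℝ))ᵀ *ᵥ x) i)^2 := by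
  set U := (hA.eigenvectorUnitary : Matrix (Fin N) (Fin N) ℝ) with hU
  set y := Uᵀ *ᵥ x with hy
  have hAx : A *ᵥ x = U *ᵥ (diagonal hA.eigenvalues *ᵥ y) := by
    rw [hy, mulVec_mulVec, mulVec_mulVec, ← specthm hA]
  have key : ∀ z : Fin N → ℝ, (U *ᵥ z) ⬝ᵥ (U *ᵥ z) = z ⬝ᵥ z := by
    intro z
    rw [dot_mv, mulVec_mulVec, UtU hA, one_mulVec]
  rw [hAx, key]
  simp only [dotProduct, mulVec_diagonal]
  apply Finset.sum_congr rfl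
  intro i _
  ring

/-- The key lower-bound criterion: an `r`-dimensional subspace on which the quadratic
form of `A²` is at least `c²` forces at least `r` eigenvalues of absolute value `≥ c`. -/
lemma main {r : ℕ} (w : Fin r → (Fin N → ℝ))
    (hdot : ∀ i j, i ≠ j → w i ⬝ᵥ w j = 0)
    (hw0 : ∀ i, w i ⬝ᵥ w i ≠ 0) {c : ℝ}
    (hQ : ∀ a : Fin r → ℝ, c^2 * ((∑ i, a i • w i) ⬝ᵥ (∑ i, a i • w i))
        ≤ (A *ᵥ (∑ i, a i • w i)) ⬝ᵥ (A *ᵥ (∑ i, a i • w i))) :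
    r ≤ (Finset.univ.filter (fun i => c ≤ |hA.eigenvalues i|)).card := by
  classical
  set U := (hA.eigenvectorUnitary : Matrix (Fin N) (Fin N) ℝ) with hU
  set S := Finset.univ.filter (fun i => c ≤ |hA.eigenvalues i|) with hS
  by_contra hcon
  push_neg at hcon
  -- the linear maps
  let ψ : (Fin r → ℝ) →ₗ[ℝ] (Fin N → ℝ) :=
    { toFun := fun a => ∑ i, a i • w i
      map_add' := by
        intro a b
        simp [add_smul, Finset.sum_add_distrib]
      map_smul' := by
        intro t a
        simp [smul_smul, Finset.smul_sum] }
  let φ : (Fin r → ℝ) →ₗ[ℝ] ({i // i ∈ S} → ℝ) :=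
    LinearMap.pi (fun s => (LinearMap.proj (s : Fin N)) ∘ₗ (Matrix.mulVecLin Uᵀ) ∘ₗ ψ)
  have hninj : ¬ Function.Injective φ := by
    intro hinj
    have h1 := LinearMap.finrank_le_finrank_of_injective hinj
    rw [Module.finrank_fintype_fun_eq_card, Module.finrank_fintype_fun_eq_card,
      Fintype.card_coe, Fintype.card_fin] at h1
    omega
  rw [← LinearMap.ker_eq_bot] at hninj
  obtain ⟨a, haker, ha0⟩ := (Submodule.ne_bot_iff _).1 hninj
  set v : Fin N → ℝ := ∑ i, a i • w i with hv
  have hvne : v ≠ 0 := by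
    intro hv0
    apply ha0
    funext j
    have : v ⬝ᵥ w j = 0 := by rw [hv0]; simp
    rw [hv, sum_dot] at this
    rw [Finset.sum_eq_single j] at this
    · rcases mul_eq_zero.1 this with h | h
      · exact h
      · exact absurd h (hw0 j)
    · intro i _ hne
      rw [hdot i j hne, mul_zero]
    · intro h
      exact absurd (Finset.mem_univ j) h
  set y : Fin N → ℝ := Uᵀ *ᵥ v with hy
  have hyS : ∀ s ∈ S, y s = 0 := by
    intro s hs
    have h := congrFun (LinearMap.mem_ker.1 haker) ⟨s, hs⟩
    exact h
  have hEv : v ⬝ᵥ v = ∑ i, (y i)^2 := dot_self_eq hA v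
  have hEvpos : 0 < v ⬝ᵥ v := by
    have hnn : 0 ≤ v ⬝ᵥ v := Finset.sum_nonneg (fun i _ => mul_self_nonneg _)
    rcases lt_or_eq_of_le hnn with h | h
    · exact h
    · exact absurd (dotProduct_self_eq_zero.1 h.symm) hvne
  have hEAv : (A *ᵥ v) ⬝ᵥ (A *ᵥ v) = ∑ i, (hA.eigenvalues i)^2 * (y i)^2 :=
    dot_Amul_self_eq hA v
  -- split sums over S and Sᶜ
  have hsplit1 : ∑ i, (y i)^2 = ∑ i ∈ Finset.univ.filter (fun i => ¬ (i ∈ S)), (y i)^2 := by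
    rw [← Finset.sum_filter_add_sum_filter_not Finset.univ (fun i => i ∈ S) (fun i => (y i)^2)]
    have h0 : ∑ i ∈ Finset.univ.filter (fun i => i ∈ S), (y i)^2 = 0 :=
      Finset.sum_eq_zero (fun i hi => by rw [hyS i (Finset.mem_filter.1 hi).2]; ring)
    rw [h0, zero_add]
  have hsplit2 : ∑ i, (hA.eigenvalues i)^2 * (y i)^2
      = ∑ i ∈ Finset.univ.filter (fun i => ¬ (i ∈ S)), (hA.eigenvalues i)^2 * (y i)^2 := by
    rw [← Finset.sum_filter_add_sum_filter_not Finset.univ (fun i => i ∈ S)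
      (fun i => (hA.eigenvalues i)^2 * (y i)^2)]
    have h0 : ∑ i ∈ Finset.univ.filter (fun i => i ∈ S),
        (hA.eigenvalues i)^2 * (y i)^2 = 0 :=
      Finset.sum_eq_zero (fun i hi => by rw [hyS i (Finset.mem_filter.1 hi).2]; ring)
    rw [h0, zero_add]
  -- existence of a nonzero coordinate outside S
  have hex : ∃ i ∈ Finset.univ.filter (fun i => ¬ (i ∈ S)), y i ≠ 0 := by
    by_contra hall
    push_neg at hall
    have : ∑ i ∈ Finset.univ.filter (fun i => ¬ (i ∈ S)), (y i)^2 = 0 := by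
      apply Finset.sum_eq_zero
      intro i hi
      rw [hall i hi]; ring
    rw [hEv, hsplit1, this] at hEvpos
    exact lt_irrefl _ hEvpos
  obtain ⟨i0, hi0mem, hi0⟩ := hex
  -- strict inequality
  have hstrict : ∑ i ∈ Finset.univ.filter (fun i => ¬ (i ∈ S)), (hA.eigenvalues i)^2 * (y i)^2
      < ∑ i ∈ Finset.univ.filter (fun i => ¬ (i ∈ S)), c^2 * (y i)^2 := by
    apply Finset.sum_lt_sum
    · intro i hi
      have hiS : ¬ (c ≤ |hA.eigenvalues i|) := by
        have := (Finset.mem_filter.1 hi).2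
        rw [hS] at this
        simpa using this
      push_neg at hiS
      have h2 : (hA.eigenvalues i)^2 ≤ c^2 := by
        rw [← sq_abs]
        exact pow_le_pow_left₀ (abs_nonneg _) (le_of_lt hiS) 2
      exact mul_le_mul_of_nonneg_right h2 (sq_nonneg _)
    · refine ⟨i0, hi0mem, ?_⟩
      have hiS : ¬ (c ≤ |hA.eigenvalues i0|) := by
        have := (Finset.mem_filter.1 hi0mem).2
        rw [hS] at this
        simpa using this
      push_neg at hiS
      have h2 : (hA.eigenvalues i0)^2 < c^2 := by
        rw [← sq_abs]
        exact pow_lt_pow_left₀ hiS (abs_nonneg _) (by norm_num)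
      have hy2 : 0 < (y i0)^2 := by positivity
      exact mul_lt_mul_of_pos_right h2 hy2
  have hfin : (A *ᵥ v) ⬝ᵥ (A *ᵥ v) < c^2 * (v ⬝ᵥ v) := by
    rw [hEAv, hsplit2, hEv, hsplit1, Finset.mul_sum]
    exact hstrict
  exact absurd (hQ a) (not_le.2 hfin)

end Spectral





lemma sum_dot_sum (r : ℕ) (a b : Fin r → ℝ) (w : Fin r → (Fin N → ℝ))
    (h : ∀ i j, i ≠ j → w i ⬝ᵥ w j = 0) :
    (∑ i, a i • w i) ⬝ᵥ (∑ j, b j • w j) = ∑ i, a i * b i * (w i ⬝ᵥ w i) := by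
  rw [sum_dot]
  apply Finset.sum_congr rfl
  intro i _
  rw [dotProduct_comm, sum_dot]
  rw [Finset.sum_eq_single i]
  · rw [dotProduct_comm]; ring
  · intro j _ hne
    rw [dotProduct_comm, h i j (fun hh => hne (hh ▸ rfl)), mul_zero]
  · intro h'; exact absurd (Finset.mem_univ i) h'

lemma combine_real {Ez Ed Ev ip c : ℝ} (hEznn : 0 ≤ Ez) (hEdnn : 0 ≤ Ed) (hEvnn : 0 ≤ Ev)
    (hip : ip^2 ≤ Ez * Ed) (h1 : c^2 * Ev ≤ Ez) (h2 : Ed ≤ Ev) (hc : 1 ≤ c) :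
    (c-1)^2 * Ev ≤ Ez - 2*ip + Ed := by
  have hiple : ip ≤ Real.sqrt Ez * Real.sqrt Ed := by
    have h3 : ip ≤ |ip| := le_abs_self ip
    have h4 : |ip| = Real.sqrt (ip^2) := (Real.sqrt_sq_eq_abs ip).symm
    have h5 : Real.sqrt (ip^2) ≤ Real.sqrt (Ez * Ed) := Real.sqrt_le_sqrt hip
    rw [Real.sqrt_mul hEznn] at h5
    linarith
  have hsz : c * Real.sqrt Ev ≤ Real.sqrt Ez := by
    have := Real.sqrt_le_sqrt h1
    rwa [Real.sqrt_mul (sq_nonneg c), Real.sqrt_sq (by linarith : (0:ℝ) ≤ c)] at this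
  have hsd : Real.sqrt Ed ≤ Real.sqrt Ev := Real.sqrt_le_sqrt h2
  have hEz' : Real.sqrt Ez ^ 2 = Ez := Real.sq_sqrt hEznn
  have hEd' : Real.sqrt Ed ^ 2 = Ed := Real.sq_sqrt hEdnn
  have hEv' : Real.sqrt Ev ^ 2 = Ev := Real.sq_sqrt hEvnn
  have hkey : (c-1) * Real.sqrt Ev ≤ Real.sqrt Ez - Real.sqrt Ed := by nlinarith
  have hnn : 0 ≤ (c-1) * Real.sqrt Ev :=
    mul_nonneg (by linarith) (Real.sqrt_nonneg _)
  nlinarith [sq_nonneg (Real.sqrt Ez - Real.sqrt Ed)]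

/-- The core quadratic estimate for one of the two adjacency matrices. -/
lemma core {N' : ℕ} {A' C : Matrix (Fin N') (Fin N') ℝ}
    {r : ℕ} (w : Fin (r+1) → Fin N' → ℝ) (μ : Fin (r+1) → ℝ) (D : Fin N' → ℝ) {c : ℝ}
    (hform : A' = Matrix.of (fun i j => (1 + C i j)/2) - Matrix.diagonal D)
    (hD : ∀ i, D i = 0 ∨ D i = 1)
    (hw0c : w 0 = fun _ => 1)
    (hμ0 : μ 0 = 0)
    (hCw : ∀ i, C *ᵥ w i = μ i • w i)
    (hdot : ∀ i j, i ≠ j → w i ⬝ᵥ w j = 0)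
    (hc : 1 ≤ c)
    (h0 : 2*c ≤ w 0 ⬝ᵥ w 0)
    (h1 : ∀ i, i ≠ 0 → 2*c ≤ |μ i|) :
    ∀ a : Fin (r+1) → ℝ,
      (c-1)^2 * ((∑ i, a i • w i) ⬝ᵥ (∑ i, a i • w i))
        ≤ (A' *ᵥ (∑ i, a i • w i)) ⬝ᵥ (A' *ᵥ (∑ i, a i • w i)) := by
  intro a
  set v : Fin N' → ℝ := ∑ i, a i • w i with hv
  set g : Fin (r+1) → ℝ := fun i => w i ⬝ᵥ w i with hg
  -- row-sum identity for the matrix of (1 + C i j)/2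
  have hCv : C *ᵥ v = ∑ i, (a i * μ i) • w i := by
    have h1 : C *ᵥ v = ∑ i, a i • (C *ᵥ w i) := by
      rw [hv]
      rw [show (C *ᵥ ∑ i, a i • w i) = C.mulVecLin (∑ i, a i • w i) from rfl, map_sum]
      exact Finset.sum_congr rfl (fun i _ => by rw [_root_.map_smul]; rfl)
    rw [h1]
    apply Finset.sum_congr rfl
    intro i _
    rw [hCw i, smul_smul, mul_comm]
  have honesv : w 0 ⬝ᵥ v = a 0 * g 0 := by
    rw [dotProduct_comm, hv, sum_dot]
    rw [Finset.sum_eq_single 0 (fun i _ hne => by rw [hdot i 0 hne, mul_zero])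
      (fun h' => absurd (Finset.mem_univ 0) h')]
  set b : Fin (r+1) → ℝ :=
    Fin.cons (a 0 * g 0 / 2) (fun α => a α.succ * μ α.succ / 2) with hb
  set z : Fin N' → ℝ := ∑ i, b i • w i with hz
  have hPv : (Matrix.of (fun i j => (1 + C i j)/2) : Matrix (Fin N') (Fin N') ℝ) *ᵥ v = z := by
    funext ii
    have hlhs : ((Matrix.of (fun i j => (1 + C i j)/2) : Matrix (Fin N') (Fin N') ℝ) *ᵥ v) ii
        = ((w 0 ⬝ᵥ v) + (C *ᵥ v) ii)/2 := by
      simp only [mulVec, dotProduct, Matrix.of_apply, hw0c]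
      rw [← Finset.sum_add_distrib, Finset.sum_div]
      apply Finset.sum_congr rfl
      intro j _
      ring
    rw [hlhs, honesv, hCv]
    have hCvii : (∑ i, (a i * μ i) • w i) ii = ∑ i, a i * μ i * w i ii := by
      simp [Finset.sum_apply]
    have hzii : z ii = ∑ i, b i * w i ii := by
      simp [hz, Finset.sum_apply]
    rw [hCvii, hzii]
    rw [Fin.sum_univ_succ, Fin.sum_univ_succ]
    rw [hμ0]
    simp only [hb, Fin.cons_zero, Fin.cons_succ, hw0c]
    have hhalf : ∑ α : Fin r, a α.succ * μ α.succ / 2 * w α.succ ii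
        = (∑ α : Fin r, a α.succ * μ α.succ * w α.succ ii) / 2 := by
      rw [Finset.sum_div]
      exact Finset.sum_congr rfl (fun α _ => by ring)
    rw [hhalf]
    ring
  have hAv : A' *ᵥ v = z - (fun ii => D ii * v ii) := by
    rw [hform, sub_mulVec, hPv]
    congr 1
    funext ii
    rw [mulVec_diagonal]
  set dv : Fin N' → ℝ := fun ii => D ii * v ii with hdv
  have hEv : v ⬝ᵥ v = ∑ i, (a i)^2 * g i := by
    rw [hv, sum_dot_sum _ _ _ _ hdot]
    apply Finset.sum_congr rfl; intro i _; rw [hg]; ring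
  have hEz : z ⬝ᵥ z = ∑ i, (b i)^2 * g i := by
    rw [hz, sum_dot_sum _ _ _ _ hdot]
    apply Finset.sum_congr rfl; intro i _; rw [hg]; ring
  have hgnn : ∀ i, 0 ≤ g i := fun i => Finset.sum_nonneg (fun j _ => mul_self_nonneg _)
  have hcnn : (0:ℝ) ≤ c := by linarith
  have hEzc : c^2 * (v ⬝ᵥ v) ≤ z ⬝ᵥ z := by
    rw [hEv, hEz, Finset.mul_sum]
    apply Finset.sum_le_sum
    intro i _
    rcases eq_or_ne i 0 with h | h
    · subst h
      have hb0 : b 0 = a 0 * g 0 / 2 := by simp [hb]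
      rw [hb0]
      have h2c : 2*c ≤ g 0 := h0
      have key : c^2 ≤ (g 0 / 2)^2 := pow_le_pow_left₀ hcnn (by linarith) 2
      nlinarith [mul_le_mul_of_nonneg_right key
        (mul_nonneg (sq_nonneg (a 0)) (hgnn 0))]
    · have h2c : 2*c ≤ |μ i| := h1 i h
      obtain ⟨α, rfl⟩ := Fin.eq_succ_of_ne_zero h
      have hbs : b α.succ = a α.succ * μ α.succ / 2 := by simp [hb]
      rw [hbs]
      have key : c^2 ≤ (μ α.succ / 2)^2 := by
        have habs : c^2 ≤ (|μ α.succ| / 2)^2 :=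
          pow_le_pow_left₀ hcnn (by linarith) 2
        rwa [div_pow, sq_abs, ← div_pow] at habs
      nlinarith [mul_le_mul_of_nonneg_right key
        (mul_nonneg (sq_nonneg (a α.succ)) (hgnn α.succ))]
  have hEd : dv ⬝ᵥ dv ≤ v ⬝ᵥ v := by
    apply Finset.sum_le_sum
    intro ii _
    show dv ii * dv ii ≤ v ii * v ii
    have hdvii : dv ii = D ii * v ii := rfl
    rcases hD ii with h | h <;> rw [hdvii, h] <;> nlinarith [mul_self_nonneg (v ii)]
  have hip : (z ⬝ᵥ dv)^2 ≤ (z ⬝ᵥ z) * (dv ⬝ᵥ dv) := by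
    have := Finset.sum_mul_sq_le_sq_mul_sq Finset.univ z dv
    simpa [dotProduct, sq] using this
  have hexp : (A' *ᵥ v) ⬝ᵥ (A' *ᵥ v) = z ⬝ᵥ z - 2*(z ⬝ᵥ dv) + dv ⬝ᵥ dv := by
    rw [hAv]
    rw [sub_dotProduct, dotProduct_sub, dotProduct_sub]
    rw [dotProduct_comm dv z]
    ring
  rw [hexp]
  exact combine_real
    (Finset.sum_nonneg (fun j _ => mul_self_nonneg _))
    (Finset.sum_nonneg (fun j _ => mul_self_nonneg _))
    (Finset.sum_nonneg (fun j _ => mul_self_nonneg _))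
    hip hEzc hEd hc


lemma graphSing_eq {n : ℕ} (G : SimpleGraph (Fin n)) (r : ℕ) (inst : DecidableRel G.Adj) :
    graphSing G r = singval (@SimpleGraph.adjMatrix ℝ _ G inst _ _) r := by
  have h : ∀ (i1 i2 : DecidableRel G.Adj),
      @SimpleGraph.adjMatrix ℝ _ G i1 _ _ = @SimpleGraph.adjMatrix ℝ _ G i2 _ _ := by
    intro i1 i2
    have he : i1 = i2 := Subsingleton.elim i1 i2
    rw [he]
  exact congrArg (fun M => singval M r) (h _ inst)

end S16

theorem stmt16 (k : ℕ) (hk : 1 ≤ k)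
    (hS : ∃ m : ℕ, ∃ A : Matrix (Fin m) (Fin m) ℝ, memS k A) :
    ∃ n : ℕ, k < n ∧ ∀ t : ℕ, 1 ≤ t →
      ∃ G : SimpleGraph (Fin (n * t)),
        graphSing G (k + 1) + graphSing Gᶜ (k + 1) ≥
          (n : ℝ) * t / Real.sqrt k - 2 := by
  classical
  obtain ⟨m, B, hkm, hsym, hpm, hsv⟩ := hS
  have hm1 : 1 ≤ m := le_trans hk hkm
  have hB : B.IsHermitian := by
    rw [Matrix.IsHermitian, Matrix.conjTranspose_eq_transpose_of_trivial]
    exact hsym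
  have hsk : 1 ≤ Real.sqrt k := by
    rw [show (1:ℝ) = Real.sqrt 1 by simp]
    exact Real.sqrt_le_sqrt (by exact_mod_cast hk)
  have hskpos : 0 < Real.sqrt k := by linarith
  have hcard : k ≤ (Finset.univ.filter
      (fun i => (m:ℝ)/Real.sqrt k ≤ |hB.eigenvalues i|)).card := by
    apply S16.le_card_of_singval hB hk hkm
    rw [hsv]
  obtain ⟨T, hTsub, hTcard⟩ := Finset.exists_subset_card_eq hcard
  let ι : Fin k → Fin m := fun α => ((T.equivFin.symm (Fin.cast hTcard.symm α)) : Fin m)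
  have hιinj : Function.Injective ι := by
    intro x y hxy
    have h1 : T.equivFin.symm (Fin.cast hTcard.symm x)
        = T.equivFin.symm (Fin.cast hTcard.symm y) := Subtype.ext hxy
    have h2 := T.equivFin.symm.injective h1
    have h3 := congrArg Fin.val h2
    simp only [Fin.coe_cast] at h3
    exact Fin.ext h3
  have hιmem : ∀ α, (m:ℝ)/Real.sqrt k ≤ |hB.eigenvalues (ι α)| := by
    intro α
    have h1 : (ι α) ∈ T := (T.equivFin.symm (Fin.cast hTcard.symm α)).2
    exact (Finset.mem_filter.1 (hTsub h1)).2
  let U : Matrix (Fin m) (Fin m) ℝ := (hB.eigenvectorUnitary : Matrix (Fin m) (Fin m) ℝ)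
  let u : Fin k → (Fin m → ℝ) := fun α => fun i => U i (ι α)
  have hBu : ∀ α, B *ᵥ u α = (hB.eigenvalues (ι α)) • u α := by
    intro α
    have h := hB.mulVec_eigenvectorBasis (ι α)
    have he : u α = (WithLp.equiv 2 ((i : Fin m) → ℝ)) (hB.eigenvectorBasis (ι α)) := by
      funext i
      rfl
    rw [he]
    exact h
  have hcol : ∀ a b : Fin m, ∑ i, U i a * U i b = if a = b then (1:ℝ) else 0 := by
    intro a b
    have h := congrFun (congrFun (S16.UtU hB) a) b
    rw [Matrix.mul_apply, Matrix.one_apply] at h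
    simpa [Matrix.transpose_apply, U] using h
  refine ⟨2*m, by omega, ?_⟩
  intro t ht
  have htR : (1:ℝ) ≤ t := by exact_mod_cast ht
  have htpos : (0:ℝ) < t := by linarith
  set c : ℝ := (m:ℝ) * t / Real.sqrt k with hc_def
  have hmtk : (k:ℝ) ≤ (m:ℝ) * t := by
    have h1 : (k:ℝ) ≤ m := by exact_mod_cast hkm
    nlinarith
  have hc1 : 1 ≤ c := by
    rw [hc_def, le_div_iff₀ hskpos, one_mul]
    have hkR : (1:ℝ) ≤ k := by exact_mod_cast hk
    have h1 : Real.sqrt k ≤ (k:ℝ) := by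
      nlinarith [Real.sq_sqrt (by positivity : (0:ℝ) ≤ (k:ℝ)), hsk]
    linarith
  have hcmt : c ≤ (m:ℝ)*t := by
    rw [hc_def]
    apply div_le_self (by positivity) hsk
  -- index decomposition of Fin (2*m*t)
  let Epq : (Fin 2 × Fin m) × Fin t ≃ Fin (2*m*t) :=
    (finProdFinEquiv.prodCongr (Equiv.refl (Fin t))).trans finProdFinEquiv
  let ec : Fin (2*m*t) → Fin 2 := fun i => (Epq.symm i).1.1
  let bc : Fin (2*m*t) → Fin m := fun i => (Epq.symm i).1.2
  have hecE : ∀ (e : Fin 2) (b : Fin m) (s : Fin t), ec (Epq ((e,b),s)) = e := by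
    intro e b s
    show (Epq.symm (Epq ((e,b),s))).1.1 = e
    rw [Equiv.symm_apply_apply]
  have hbcE : ∀ (e : Fin 2) (b : Fin m) (s : Fin t), bc (Epq ((e,b),s)) = b := by
    intro e b s
    show (Epq.symm (Epq ((e,b),s))).1.2 = b
    rw [Equiv.symm_apply_apply]
  have hre : ∀ f : Fin (2*m*t) → ℝ,
      ∑ i, f i = ∑ e : Fin 2, ∑ b : Fin m, ∑ s : Fin t, f (Epq ((e,b),s)) := by
    intro f
    rw [← Equiv.sum_comp Epq f, Fintype.sum_prod_type, Fintype.sum_prod_type]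
  let sg : Fin 2 → ℝ := fun e => if e = 0 then 1 else -1
  have hsgpm : ∀ e, sg e = 1 ∨ sg e = -1 := by
    intro e
    by_cases h : e = 0
    · left; simp [sg, h]
    · right; simp [sg, h]
  have hsgsum : ∑ e : Fin 2, sg e = 0 := by
    rw [Fin.sum_univ_two]
    norm_num [sg]
  have hsgsq : ∑ e : Fin 2, sg e * sg e = 2 := by
    rw [Fin.sum_univ_two]
    norm_num [sg]
  let Bt : Matrix (Fin (2*m*t)) (Fin (2*m*t)) ℝ :=
    Matrix.of (fun i j => sg (ec i) * sg (ec j) * B (bc i) (bc j))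
  have key : ∀ (f : Fin 2 → ℝ) (gx : Fin m → ℝ),
      ∑ j, f (ec j) * gx (bc j) = (∑ e, f e) * ((t:ℝ) * ∑ b, gx b) := by
    intro f gx
    rw [hre (fun j => f (ec j) * gx (bc j))]
    have h1 : ∀ (e : Fin 2) (b : Fin m),
        ∑ s : Fin t, f (ec (Epq ((e,b),s))) * gx (bc (Epq ((e,b),s)))
        = (t:ℝ) * (f e * gx b) := by
      intro e b
      rw [Finset.sum_congr rfl (fun s _ => by rw [hecE, hbcE])]
      rw [Finset.sum_const, Finset.card_univ, Fintype.card_fin, nsmul_eq_mul]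
    rw [Finset.sum_congr rfl (fun e _ => Finset.sum_congr rfl (fun b _ => h1 e b))]
    rw [Finset.sum_mul]
    apply Finset.sum_congr rfl
    intro e _
    rw [Finset.mul_sum, Finset.mul_sum]
    apply Finset.sum_congr rfl
    intro b _
    ring
  have hBs : ∀ a b, B a b = B b a := by
    intro a b
    have := congrFun (congrFun hsym b) a
    simpa [Matrix.transpose_apply] using this
  have hBtsymm : ∀ i j, Bt i j = Bt j i := by
    intro i j
    show sg (ec i) * sg (ec j) * B (bc i) (bc j) = sg (ec j) * sg (ec i) * B (bc j) (bc i)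
    rw [hBs (bc i) (bc j)]
    ring
  have hBtpm : ∀ i j, Bt i j = 1 ∨ Bt i j = -1 := by
    intro i j
    rcases hsgpm (ec i) with h1 | h1 <;> rcases hsgpm (ec j) with h2 | h2 <;>
      rcases hpm (bc i) (bc j) with h3 | h3 <;>
        rw [show Bt i j = sg (ec i) * sg (ec j) * B (bc i) (bc j) from rfl, h1, h2, h3] <;>
          norm_num
  -- the test vectors
  let ones : Fin (2*m*t) → ℝ := fun _ => 1
  let wv : Fin k → (Fin (2*m*t) → ℝ) := fun α => fun i => sg (ec i) * u α (bc i)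
  have hdones : ones ⬝ᵥ ones = 2*((t:ℝ) * m) := by
    have h : ones ⬝ᵥ ones = (∑ _e : Fin 2, (1:ℝ)) * ((t:ℝ) * ∑ _b : Fin m, (1:ℝ)) :=
      key (fun _ => 1) (fun _ => 1)
    rw [h]
    rw [Finset.sum_const, Finset.sum_const, Finset.card_univ, Finset.card_univ,
      Fintype.card_fin, Fintype.card_fin, nsmul_eq_mul, nsmul_eq_mul, mul_one, mul_one]
    norm_num
  have hdow : ∀ β, ones ⬝ᵥ wv β = 0 := by
    intro β
    have h2 : ∑ j, sg (ec j) * u β (bc j) = (∑ e, sg e) * ((t:ℝ) * ∑ b, u β b) :=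
      key sg (u β)
    have h : ones ⬝ᵥ wv β = ∑ j, sg (ec j) * (u β) (bc j) := by
      show ∑ j, ones j * wv β j = _
      apply Finset.sum_congr rfl
      intro j _
      show 1 * (sg (ec j) * u β (bc j)) = _
      ring
    rw [h, h2, hsgsum, zero_mul]
  have hdww : ∀ α β, wv α ⬝ᵥ wv β = 2*((t:ℝ) * (if ι α = ι β then 1 else 0)) := by
    intro α β
    have h2 : ∑ j, (sg (ec j) * sg (ec j)) * (u α (bc j) * u β (bc j))
        = (∑ e, sg e * sg e) * ((t:ℝ) * ∑ b, u α b * u β b) :=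
      key (fun e => sg e * sg e) (fun b => u α b * u β b)
    have h : wv α ⬝ᵥ wv β
        = ∑ j, (sg (ec j) * sg (ec j)) * (u α (bc j) * u β (bc j)) := by
      show ∑ j, wv α j * wv β j = _
      apply Finset.sum_congr rfl
      intro j _
      show (sg (ec j) * u α (bc j)) * (sg (ec j) * u β (bc j)) = _
      ring
    rw [h, h2, hsgsq]
    rw [show ∑ b : Fin m, u α b * u β b = (if ι α = ι β then (1:ℝ) else 0)
      from hcol (ι α) (ι β)]
  -- eigen-equations
  have hBtones : Bt *ᵥ ones = (0:ℝ) • ones := by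
    funext i
    show ∑ j, Bt i j * ones j = ((0:ℝ) • ones) i
    have h2 : ∑ j, sg (ec j) * B (bc i) (bc j)
        = (∑ e, sg e) * ((t:ℝ) * ∑ b, B (bc i) b) :=
      key sg (fun b => B (bc i) b)
    have h1 : ∑ j, Bt i j * ones j
        = sg (ec i) * ∑ j, sg (ec j) * B (bc i) (bc j) := by
      rw [Finset.mul_sum]
      apply Finset.sum_congr rfl
      intro j _
      show sg (ec i) * sg (ec j) * B (bc i) (bc j) * 1
        = sg (ec i) * (sg (ec j) * B (bc i) (bc j))
      ring
    rw [h1, h2, hsgsum, zero_mul, mul_zero]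
    simp
  have hBtwv : ∀ α, Bt *ᵥ wv α = (2*(t:ℝ)*(hB.eigenvalues (ι α))) • wv α := by
    intro α
    funext i
    show ∑ j, Bt i j * wv α j = _
    have h2 : ∑ j, (sg (ec j) * sg (ec j)) * (B (bc i) (bc j) * u α (bc j))
        = (∑ e, sg e * sg e) * ((t:ℝ) * ∑ b, B (bc i) b * u α b) :=
      key (fun e => sg e * sg e) (fun b => B (bc i) b * u α b)
    have h1 : ∑ j, Bt i j * wv α j
        = sg (ec i) * ∑ j, (sg (ec j) * sg (ec j)) * (B (bc i) (bc j) * u α (bc j)) := by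
      rw [Finset.mul_sum]
      apply Finset.sum_congr rfl
      intro j _
      show sg (ec i) * sg (ec j) * B (bc i) (bc j) * (sg (ec j) * u α (bc j))
        = sg (ec i) * ((sg (ec j) * sg (ec j)) * (B (bc i) (bc j) * u α (bc j)))
      ring
    rw [h1, h2, hsgsq]
    have h3 : ∑ b, B (bc i) b * u α b = hB.eigenvalues (ι α) * u α (bc i) := by
      have h4 := congrFun (hBu α) (bc i)
      simpa [Matrix.mulVec, dotProduct] using h4
    rw [h3, Pi.smul_apply, smul_eq_mul]
    show sg (ec i) * (2 * ((t:ℝ) * (hB.eigenvalues (ι α) * u α (bc i))))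
      = 2*(t:ℝ)*(hB.eigenvalues (ι α)) * (sg (ec i) * u α (bc i))
    ring
  have hμw : ∀ i : Fin (k+1), Bt *ᵥ ((Fin.cons ones wv : Fin (k+1) → Fin (2*m*t) → ℝ) i)
      = ((Fin.cons (0:ℝ) (fun α => 2*(t:ℝ)*(hB.eigenvalues (ι α))) : Fin (k+1) → ℝ) i) • (Fin.cons ones wv : Fin (k+1) → Fin (2*m*t) → ℝ) i := by
    intro i
    refine Fin.cases ?_ ?_ i
    · rw [Fin.cons_zero, Fin.cons_zero]
      exact hBtones
    · intro α
      rw [Fin.cons_succ, Fin.cons_succ]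
      exact hBtwv α
  have hwdot : ∀ i j : Fin (k+1), i ≠ j →
      (Fin.cons ones wv : Fin (k+1) → Fin (2*m*t) → ℝ) i ⬝ᵥ (Fin.cons ones wv : Fin (k+1) → Fin (2*m*t) → ℝ) j = 0 := by
    intro i j hij
    rcases Fin.eq_zero_or_eq_succ i with hi | ⟨α, hi⟩ <;>
      rcases Fin.eq_zero_or_eq_succ j with hj | ⟨β, hj⟩ <;> subst hi <;> subst hj
    · exact absurd rfl hij
    · rw [Fin.cons_zero, Fin.cons_succ]
      exact hdow β
    · rw [Fin.cons_succ, Fin.cons_zero, dotProduct_comm]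
      exact hdow α
    · rw [Fin.cons_succ, Fin.cons_succ, hdww α β]
      have hab : α ≠ β := fun hab => hij (by rw [hab])
      have : ι α ≠ ι β := fun h => hab (hιinj h)
      rw [if_neg this]
      ring
  have hw0ne : ∀ i : Fin (k+1), (Fin.cons ones wv : Fin (k+1) → Fin (2*m*t) → ℝ) i ⬝ᵥ (Fin.cons ones wv : Fin (k+1) → Fin (2*m*t) → ℝ) i ≠ 0 := by
    intro i
    refine Fin.cases ?_ ?_ i
    · rw [Fin.cons_zero, hdones]
      have hmR : (1:ℝ) ≤ m := by exact_mod_cast hm1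
      positivity
    · intro α
      rw [Fin.cons_succ, hdww α α, if_pos rfl]
      positivity
  have hw0c : (Fin.cons ones wv : Fin (k+1) → Fin (2*m*t) → ℝ) 0 = fun _ : Fin (2*m*t) => (1:ℝ) := by
    rw [Fin.cons_zero]
  have h0' : 2*c ≤ (Fin.cons ones wv : Fin (k+1) → Fin (2*m*t) → ℝ) 0 ⬝ᵥ (Fin.cons ones wv : Fin (k+1) → Fin (2*m*t) → ℝ) 0 := by
    rw [Fin.cons_zero, hdones]
    nlinarith
  have h1' : ∀ i : Fin (k+1), i ≠ 0 →
      2*c ≤ |(Fin.cons (0:ℝ) (fun α => 2*(t:ℝ)*(hB.eigenvalues (ι α))) : Fin (k+1) → ℝ) i| := by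
    intro i hi
    obtain ⟨α, rfl⟩ := Fin.eq_succ_of_ne_zero hi
    rw [Fin.cons_succ]
    have h1 : |2*(t:ℝ)*(hB.eigenvalues (ι α))| = 2*(t:ℝ)*|hB.eigenvalues (ι α)| := by
      rw [abs_mul, abs_of_nonneg (by positivity : (0:ℝ) ≤ 2*(t:ℝ))]
    rw [h1]
    have h2 := hιmem α
    have h3 : c = (t:ℝ) * ((m:ℝ)/Real.sqrt k) := by
      rw [hc_def]
      ring
    nlinarith
  -- the graph
  have hGsymm : Symmetric (fun i j : Fin (2*m*t) => i ≠ j ∧ Bt i j = -1) := by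
    intro i j h
    exact ⟨h.1.symm, by rw [hBtsymm j i]; exact h.2⟩
  have hGloop : Irreflexive (fun i j : Fin (2*m*t) => i ≠ j ∧ Bt i j = -1) :=
    fun i h => h.1 rfl
  let G : SimpleGraph (Fin (2*m*t)) :=
    { Adj := fun i j => i ≠ j ∧ Bt i j = -1
      symm := ⟨fun a b h => hGsymm h⟩
      loopless := ⟨hGloop⟩ }
  refine ⟨G, ?_⟩
  let instG : DecidableRel G.Adj := Classical.decRel _
  let instH : DecidableRel Gᶜ.Adj := Classical.decRel _
  let AG : Matrix (Fin (2*m*t)) (Fin (2*m*t)) ℝ := @SimpleGraph.adjMatrix ℝ _ G instG _ _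
  let AH : Matrix (Fin (2*m*t)) (Fin (2*m*t)) ℝ := @SimpleGraph.adjMatrix ℝ _ Gᶜ instH _ _
  have hAGform : AG = Matrix.of (fun i j => (1 + (-Bt) i j)/2)
      - Matrix.diagonal (fun i => (1 - Bt i i)/2) := by
    ext i j
    rw [show AG i j = (if G.Adj i j then (1:ℝ) else 0) from SimpleGraph.adjMatrix_apply G i j]
    rw [Matrix.sub_apply, Matrix.of_apply, Matrix.neg_apply]
    by_cases hij : i = j
    · subst hij
      rw [if_neg (hGloop i), Matrix.diagonal_apply_eq]
      ring
    · rw [Matrix.diagonal_apply_ne _ hij]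
      rcases hBtpm i j with h | h
      · have hnadj : ¬ G.Adj i j := by
          intro hA
          have h2 := hA.2
          rw [h] at h2
          norm_num at h2
        rw [if_neg hnadj, h]
        norm_num
      · have hadj : G.Adj i j := ⟨hij, h⟩
        rw [if_pos hadj, h]
        norm_num
  have hAHform : AH = Matrix.of (fun i j => (1 + Bt i j)/2)
      - Matrix.diagonal (fun i => (1 + Bt i i)/2) := by
    ext i j
    rw [show AH i j = (if Gᶜ.Adj i j then (1:ℝ) else 0) from SimpleGraph.adjMatrix_apply Gᶜ i j]
    rw [Matrix.sub_apply, Matrix.of_apply]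
    by_cases hij : i = j
    · subst hij
      rw [if_neg (Gᶜ.loopless.irrefl i), Matrix.diagonal_apply_eq]
      ring
    · rw [Matrix.diagonal_apply_ne _ hij]
      rcases hBtpm i j with h | h
      · have hadj : Gᶜ.Adj i j := by
          rw [SimpleGraph.compl_adj]
          refine ⟨hij, fun hA => ?_⟩
          have h2 := hA.2
          rw [h] at h2
          norm_num at h2
        rw [if_pos hadj, h]
        norm_num
      · have hnadj : ¬ Gᶜ.Adj i j := by
          rw [SimpleGraph.compl_adj]
          rintro ⟨-, hA⟩
          exact hA ⟨hij, h⟩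
        rw [if_neg hnadj, h]
        norm_num
  have hDG : ∀ i, (fun i => (1 - Bt i i)/2) i = 0 ∨ (fun i => (1 - Bt i i)/2) i = 1 := by
    intro i
    rcases hBtpm i i with h | h
    · left; simp only; rw [h]; norm_num
    · right; simp only; rw [h]; norm_num
  have hDH : ∀ i, (fun i => (1 + Bt i i)/2) i = 0 ∨ (fun i => (1 + Bt i i)/2) i = 1 := by
    intro i
    rcases hBtpm i i with h | h
    · right; simp only; rw [h]; norm_num
    · left; simp only; rw [h]; norm_num
  -- μ functions
  have hCwH : ∀ i : Fin (k+1), Bt *ᵥ ((Fin.cons ones wv : Fin (k+1) → Fin (2*m*t) → ℝ) i)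
      = ((Fin.cons (0:ℝ) (fun α => 2*(t:ℝ)*(hB.eigenvalues (ι α))) : Fin (k+1) → ℝ) i) • (Fin.cons ones wv : Fin (k+1) → Fin (2*m*t) → ℝ) i :=
    hμw
  have hCwG : ∀ i : Fin (k+1), (-Bt) *ᵥ ((Fin.cons ones wv : Fin (k+1) → Fin (2*m*t) → ℝ) i)
      = ((fun i => -((Fin.cons (0:ℝ) (fun α => 2*(t:ℝ)*(hB.eigenvalues (ι α))) : Fin (k+1) → ℝ) i)) i)
        • (Fin.cons ones wv : Fin (k+1) → Fin (2*m*t) → ℝ) i := by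
    intro i
    rw [Matrix.neg_mulVec, hμw i]
    simp only
    rw [← neg_smul]
  have hμG0 : (fun i => -((Fin.cons (0:ℝ) (fun α => 2*(t:ℝ)*(hB.eigenvalues (ι α))) : Fin (k+1) → ℝ) i))
      (0 : Fin (k+1)) = 0 := by
    simp
  have hμH0 : ((Fin.cons (0:ℝ) (fun α => 2*(t:ℝ)*(hB.eigenvalues (ι α))) : Fin (k+1) → ℝ)) (0 : Fin (k+1)) = 0 := by
    simp
  have h1G : ∀ i : Fin (k+1), i ≠ 0 →
      2*c ≤ |(fun i => -((Fin.cons (0:ℝ) (fun α => 2*(t:ℝ)*(hB.eigenvalues (ι α))) : Fin (k+1) → ℝ) i)) i| := by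
    intro i hi
    simp only [abs_neg]
    exact h1' i hi
  -- apply the core estimate
  have hQG := S16.core (A' := AG) (C := -Bt) ((Fin.cons ones wv : Fin (k+1) → Fin (2*m*t) → ℝ))
    (fun i => -((Fin.cons (0:ℝ) (fun α => 2*(t:ℝ)*(hB.eigenvalues (ι α))) : Fin (k+1) → ℝ) i))
    (fun i => (1 - Bt i i)/2) hAGform hDG hw0c hμG0 hCwG hwdot hc1 h0' h1G
  have hQH := S16.core (A' := AH) (C := Bt) ((Fin.cons ones wv : Fin (k+1) → Fin (2*m*t) → ℝ))
    ((Fin.cons (0:ℝ) (fun α => 2*(t:ℝ)*(hB.eigenvalues (ι α))) : Fin (k+1) → ℝ))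
    (fun i => (1 + Bt i i)/2) hAHform hDH hw0c hμH0 hCwH hwdot hc1 h0' h1'
  have hAGherm : AG.IsHermitian := by
    rw [Matrix.IsHermitian, Matrix.conjTranspose_eq_transpose_of_trivial]
    exact SimpleGraph.isSymm_adjMatrix G
  have hAHherm : AH.IsHermitian := by
    rw [Matrix.IsHermitian, Matrix.conjTranspose_eq_transpose_of_trivial]
    exact SimpleGraph.isSymm_adjMatrix Gᶜ
  have hcntG := S16.main hAGherm ((Fin.cons ones wv : Fin (k+1) → Fin (2*m*t) → ℝ)) hwdot hw0ne (c := c - 1) hQG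
  have hcntH := S16.main hAHherm ((Fin.cons ones wv : Fin (k+1) → Fin (2*m*t) → ℝ)) hwdot hw0ne (c := c - 1) hQH
  have hsvG : c - 1 ≤ singval AG (k+1) := S16.singval_ge hAGherm (by omega) hcntG
  have hsvH : c - 1 ≤ singval AH (k+1) := S16.singval_ge hAHherm (by omega) hcntH
  have hgsG : graphSing G (k+1) = singval AG (k+1) := S16.graphSing_eq G (k+1) instG
  have hgsH : graphSing Gᶜ (k+1) = singval AH (k+1) := S16.graphSing_eq Gᶜ (k+1) instH
  rw [ge_iff_le, hgsG, hgsH]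
  have hcast : ((2*m : ℕ) : ℝ) * (t:ℝ) / Real.sqrt k = 2*c := by
    rw [hc_def]
    push_cast
    ring
  rw [hcast]
  linarith
end
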